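/- arXiv:1804.04108 — 11 statements merged into one kernel-verified Lean document; each statement's English description precedes it below -/
import Mathlib

section
/- Let α > 0 and let a : ℝ → ℝ be differentiable with -α⁻¹ ≤ a'(x) ≤ -α for all x ∈ ℝ. Let σ ∈ ℝ and b : [0,∞) → ℝ be continuous. Suppose x, y : [0,∞) → ℝ are continuous and satisfy x(t) = x(0) + ∫₀ᵗ a(x(r)) dr + σ·(b(t) − b(0)) and y(t) = y(0) + ∫₀ᵗ a(y(r)) dr + σ·(b(t) − b(0)) for all t ≥ 0 (the same forcing path b). Then |x(t) − y(t)| ≤ |x(0) − y(0)|·e^{−αt} for all t ≥ 0. -/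
/-!
The difference `u = x - y` has derivative `a(x) - a(y)`, since the forcing cancels, and
`a' ≤ -α` makes `a + α·id` antitone, i.e. `u · (a(x) - a(y)) ≤ -α u²`. Hence `(u(t) e^{αt})²` is nonincreasing, which is
the claimed contraction after taking square roots.
-/

open Set

theorem mul_sub_le_neg_mul_sq_of_deriv_le {a : ℝ → ℝ} {α : ℝ} (ha : Differentiable ℝ a)
    (hderiv : ∀ z, deriv a z ≤ -α) (p q : ℝ) :
    (p - q) * (a p - a q) ≤ -α * (p - q) ^ 2 := by
  have hanti : Antitone fun z => a z + α * z := by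
    refine antitone_of_deriv_nonpos (ha.add (differentiable_id.const_mul α)) fun z => ?_
    have hz : HasDerivAt (fun z => a z + α * z) (deriv a z + α) z := by
      simpa using (ha z).hasDerivAt.fun_add ((hasDerivAt_id' z).const_mul α)
    linarith [hz.deriv, hderiv z]
  rcases le_total p q with hpq | hpq
  · nlinarith [hanti hpq]
  · nlinarith [hanti hpq]

theorem hasDerivAt_of_eq_add_integral {u f : ℝ → ℝ} {c t : ℝ} (hf : ContinuousOn f (Ici c))
    (hu : ∀ s, c ≤ s → u s = u c + ∫ r in c..s, f r) (ht : c < t) :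
    HasDerivAt u (f t) t := by
  have hnhds : Ici c ∈ nhds t := Ici_mem_nhds ht
  have hF : HasDerivAt (fun s => ∫ r in c..s, f r) (f t) t := by
    refine intervalIntegral.integral_hasDerivAt_right ?_ ?_ (hf.continuousAt hnhds)
    · exact (hf.mono (by simp [uIcc_of_le ht.le, Icc_subset_Ici_self])).intervalIntegrable
    · exact (hf.mono Ioi_subset_Ici_self).stronglyMeasurableAtFilter isOpen_Ioi t ht
  exact (hF.const_add (u c)).congr_of_eventuallyEq
    (Filter.mem_of_superset hnhds hu)

theorem antitoneOn_sq_mul_exp_of_mul_deriv_le {u u' : ℝ → ℝ} {α : ℝ}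
    (hu : ContinuousOn u (Ici 0)) (hderiv : ∀ t, 0 < t → HasDerivAt u (u' t) t)
    (hdiss : ∀ t, 0 < t → u t * u' t ≤ -α * u t ^ 2) :
    AntitoneOn (fun t => (u t * Real.exp (α * t)) ^ 2) (Ici 0) := by
  have hexp : ∀ t, HasDerivAt (fun s => Real.exp (α * s)) (Real.exp (α * t) * α) t := fun t =>
    by simpa using ((hasDerivAt_id' t).const_mul α).exp
  have hg : ∀ t, 0 < t → HasDerivAt (fun t => (u t * Real.exp (α * t)) ^ 2)
      (2 * Real.exp (α * t) ^ 2 * (u t * u' t + α * u t ^ 2)) t := fun t ht => by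
    refine (((hderiv t ht).fun_mul (hexp t)).fun_pow 2).congr_deriv ?_
    push_cast
    ring
  refine antitoneOn_of_deriv_nonpos (convex_Ici 0)
    ((hu.mul (by fun_prop)).pow 2) (fun t ht => ?_) (fun t ht => ?_)
  · rw [interior_Ici] at ht
    exact (hg t ht).differentiableAt.differentiableWithinAt
  · rw [interior_Ici] at ht
    rw [(hg t ht).deriv]
    exact mul_nonpos_of_nonneg_of_nonpos (by positivity) (by linarith [hdiss t ht])

theorem abs_le_abs_mul_exp_of_mul_deriv_le {u u' : ℝ → ℝ} {α : ℝ}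
    (hu : ContinuousOn u (Ici 0)) (hderiv : ∀ t, 0 < t → HasDerivAt u (u' t) t)
    (hdiss : ∀ t, 0 < t → u t * u' t ≤ -α * u t ^ 2) {t : ℝ} (ht : 0 ≤ t) :
    |u t| ≤ |u 0| * Real.exp (-α * t) := by
  have hmono := antitoneOn_sq_mul_exp_of_mul_deriv_le hu hderiv hdiss self_mem_Ici ht ht
  have hscaled : |u t| * Real.exp (α * t) ≤ |u 0| := by
    simpa [abs_mul, Real.abs_exp] using sq_le_sq.mp hmono
  rw [neg_mul, Real.exp_neg, ← div_eq_mul_inv, le_div_iff₀ (Real.exp_pos _)]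
  exact hscaled

theorem stmt1_general (α : ℝ) (a : ℝ → ℝ) (ha : Differentiable ℝ a)
    (hderiv : ∀ z : ℝ, deriv a z ∈ Set.Icc (-α⁻¹) (-α))
    (σ : ℝ) (b : ℝ → ℝ)
    (x y : ℝ → ℝ) (hx : ContinuousOn x (Set.Ici 0)) (hy : ContinuousOn y (Set.Ici 0))
    (hxeq : ∀ t, 0 ≤ t → x t = x 0 + (∫ r in (0:ℝ)..t, a (x r)) + σ * (b t - b 0))
    (hyeq : ∀ t, 0 ≤ t → y t = y 0 + (∫ r in (0:ℝ)..t, a (y r)) + σ * (b t - b 0)) :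
    ∀ t, 0 ≤ t → |x t - y t| ≤ |x 0 - y 0| * Real.exp (-α * t) := by
  have hax : ContinuousOn (fun r => a (x r)) (Ici 0) := ha.continuous.comp_continuousOn hx
  have hay : ContinuousOn (fun r => a (y r)) (Ici 0) := ha.continuous.comp_continuousOn hy
  have hdiff : ∀ t, 0 ≤ t → x t - y t = (x 0 - y 0) + ∫ r in (0:ℝ)..t, (a (x r) - a (y r)) := by
    intro t ht
    have hsub : uIcc 0 t ⊆ Ici (0 : ℝ) := by simp [uIcc_of_le ht, Icc_subset_Ici_self]
    rw [intervalIntegral.integral_sub ((hax.mono hsub).intervalIntegrable)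
      ((hay.mono hsub).intervalIntegrable), hxeq t ht, hyeq t ht]
    ring
  exact fun t ht => abs_le_abs_mul_exp_of_mul_deriv_le (hx.sub hy)
    (fun s hs => hasDerivAt_of_eq_add_integral (hax.sub hay) hdiff hs)
    (fun s _ => mul_sub_le_neg_mul_sq_of_deriv_le ha (fun z => (hderiv z).2) (x s) (y s)) ht

theorem stmt1 (α : ℝ) (hα : 0 < α) (a : ℝ → ℝ) (ha : Differentiable ℝ a)
    (hderiv : ∀ z : ℝ, deriv a z ∈ Set.Icc (-α⁻¹) (-α))
    (σ : ℝ) (b : ℝ → ℝ) (hb : ContinuousOn b (Set.Ici 0))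
    (x y : ℝ → ℝ) (hx : ContinuousOn x (Set.Ici 0)) (hy : ContinuousOn y (Set.Ici 0))
    (hxeq : ∀ t, 0 ≤ t → x t = x 0 + (∫ r in (0:ℝ)..t, a (x r)) + σ * (b t - b 0))
    (hyeq : ∀ t, 0 ≤ t → y t = y 0 + (∫ r in (0:ℝ)..t, a (y r)) + σ * (b t - b 0)) :
    ∀ t, 0 ≤ t → |x t - y t| ≤ |x 0 - y 0| * Real.exp (-α * t) :=
  stmt1_general α a ha hderiv σ b x y hx hy hxeq hyeq
end

section
/- Let α > 0 and let a : ℝ → ℝ be differentiable with -α⁻¹ ≤ a'(x) ≤ -α for all x ∈ ℝ. Let σ ∈ ℝ, K > 0, and let b : ℝ → ℝ be continuous with |b(t)| ≤ K(1 + t²) for all t ∈ ℝ. Then there exists a continuous function x̄ : ℝ → ℝ such that x̄(t) − x̄(s) = ∫ₛᵗ a(x̄(r)) dr + σ·(b(t) − b(s)) for all s ≤ t, and moreover e^{αs}·x̄(s) → 0 as s → −∞; x̄ is the unique continuous full-line solution with this backward-decay property. -/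
/-!
Substituting `y = x - σ b` turns the equation into the ODE `y' = a (y + σ b)`. With
`β = (α⁻¹ + α) / 2` and `L = (α⁻¹ - α) / 2` the map `z ↦ a z + β z` is `L`-Lipschitz, so the ODE
reads `y' + β y = F (t, y)` with `F` `L`-Lipschitz in `y`, and its solutions of moderate growth at
`-∞` are the fixed points of `y ↦ ∫_{-∞}^t e^{-β (t - r)} F (r, y r) dr`. On functions bounded by a
multiple of `cosh (ε t)`, `ε = α / 2`, this map is a contraction with constant `L / (β - ε) < 1`,
and the quadratic growth of `b` fits into that space; this gives existence. The difference `d` of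
two solutions satisfies `(e^{2αt} d²)' ≤ 0` because `a' ≤ -α`, while `e^{2αt} d² → 0` at `-∞`;
hence `d = 0`.
-/

open MeasureTheory Real Set Filter Topology
open scoped BoundedContinuousFunction

lemma cosh_le_cosh_mul_exp_abs_sub (x y : ℝ) : cosh x ≤ cosh y * exp |x - y| := by
  have h₁ : exp x ≤ exp y * exp |x - y| := by
    rw [← exp_add]; exact exp_le_exp.2 (by linarith [le_abs_self (x - y)])
  have h₂ : exp (-x) ≤ exp (-y) * exp |x - y| := by
    rw [← exp_add]; exact exp_le_exp.2 (by linarith [neg_abs_le (x - y)])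
  rw [cosh_eq, cosh_eq]
  linarith

lemma one_add_sq_le_mul_cosh {ε : ℝ} (hε : 0 < ε) (t : ℝ) :
    1 + t ^ 2 ≤ (1 + 4 / ε ^ 2) * cosh (ε * t) := by
  have h₁ := one_le_cosh (ε * t)
  have h₂ : (ε * t) ^ 2 / 4 ≤ cosh (ε * t) := by
    have := quadratic_le_exp_of_nonneg (abs_nonneg (ε * t))
    rw [← cosh_abs, cosh_eq, ← sq_abs]
    nlinarith [exp_pos (-|ε * t|), abs_nonneg (ε * t)]
  have : t ^ 2 = 4 / ε ^ 2 * ((ε * t) ^ 2 / 4) := by field_simp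
  nlinarith [show 0 ≤ 4 / ε ^ 2 by positivity]

lemma tendsto_exp_mul_mul_cosh_atBot {α ε : ℝ} (hε : |ε| < α) :
    Tendsto (fun s => exp (α * s) * cosh (ε * s)) atBot (𝓝 0) := by
  have h : ∀ c : ℝ, 0 < c → Tendsto (fun s => exp (c * s)) atBot (𝓝 0) := fun c hc =>
    tendsto_exp_atBot.comp (tendsto_id.const_mul_atBot hc)
  have := ((h (α + ε) (by linarith [neg_abs_le ε])).add
    (h (α - ε) (by linarith [le_abs_self ε]))).div_const 2
  refine (this.congr fun s => ?_).trans (by simp)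
  rw [cosh_eq, add_mul, sub_mul, exp_add, exp_sub, exp_neg]
  field_simp

lemma tendsto_exp_mul_mul_atBot_of_abs_le_mul_cosh {α ε C : ℝ} (hε : |ε| < α) {x : ℝ → ℝ}
    (hx : ∀ t, |x t| ≤ C * cosh (ε * t)) :
    Tendsto (fun s => exp (α * s) * x s) atBot (𝓝 0) := by
  refine squeeze_zero_norm (fun s => ?_)
    (by simpa using (tendsto_exp_mul_mul_cosh_atBot hε).const_mul C)
  rw [norm_mul, norm_of_nonneg (exp_pos _).le, norm_eq_abs, mul_left_comm]
  exact mul_le_mul_of_nonneg_left (hx s) (exp_pos _).le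

lemma exists_sub_eq_deriv_mul_sub {f : ℝ → ℝ} (hf : Differentiable ℝ f) (u v : ℝ) :
    ∃ ξ, f u - f v = deriv f ξ * (u - v) := by
  rcases lt_trichotomy u v with h | rfl | h
  · obtain ⟨ξ, -, hξ⟩ := exists_deriv_eq_slope f h hf.continuous.continuousOn hf.differentiableOn
    exact ⟨ξ, by rw [hξ]; field_simp [sub_ne_zero.2 h.ne']; ring⟩
  · exact ⟨0, by simp⟩
  · obtain ⟨ξ, -, hξ⟩ := exists_deriv_eq_slope f h hf.continuous.continuousOn hf.differentiableOn
    exact ⟨ξ, by rw [hξ]; field_simp [sub_ne_zero.2 h.ne']⟩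

lemma sub_mul_sub_le_of_deriv_le {a : ℝ → ℝ} {α : ℝ} (ha : Differentiable ℝ a)
    (hderiv : ∀ z, deriv a z ≤ -α) (p q : ℝ) : (a p - a q) * (p - q) ≤ -α * (p - q) ^ 2 := by
  obtain ⟨ξ, hξ⟩ := exists_sub_eq_deriv_mul_sub ha p q
  rw [hξ, mul_assoc, ← sq]
  exact mul_le_mul_of_nonneg_right (hderiv ξ) (sq_nonneg _)

lemma abs_add_mul_sub_le {a : ℝ → ℝ} {β L : ℝ} (ha : Differentiable ℝ a)
    (hderiv : ∀ z, |deriv a z + β| ≤ L) (p q : ℝ) :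
    |(a p + β * p) - (a q + β * q)| ≤ L * |p - q| := by
  obtain ⟨ξ, hξ⟩ := exists_sub_eq_deriv_mul_sub ha p q
  rw [show a p + β * p - (a q + β * q) = (deriv a ξ + β) * (p - q) by rw [add_mul, ← hξ]; ring,
    abs_mul]
  exact mul_le_mul_of_nonneg_right (hderiv ξ) (abs_nonneg _)

lemma abs_le_abs_add_mul_abs {a : ℝ → ℝ} {M : ℝ} (ha : Differentiable ℝ a)
    (hderiv : ∀ z, |deriv a z| ≤ M) (z : ℝ) : |a z| ≤ |a 0| + M * |z| := by
  obtain ⟨ξ, hξ⟩ := exists_sub_eq_deriv_mul_sub ha z 0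
  have : |a z - a 0| ≤ M * |z| := by
    rw [hξ, sub_zero, abs_mul]; exact mul_le_mul_of_nonneg_right (hderiv ξ) (abs_nonneg z)
  linarith [abs_sub_abs_le_abs_sub (a z) (a 0)]

lemma hasDerivAt_of_sub_eq_integral {f φ : ℝ → ℝ} (hφ : Continuous φ)
    (hf : ∀ s t, s ≤ t → f t - f s = ∫ r in s..t, φ r) (t : ℝ) : HasDerivAt f (φ t) t := by
  have hf₀ : f = fun t => f 0 + ∫ r in (0 : ℝ)..t, φ r := by
    funext t
    rcases le_total 0 t with h | h
    · linarith [hf 0 t h]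
    · linarith [hf t 0 h, intervalIntegral.integral_symm (μ := volume) (f := φ) 0 t]
  rw [hf₀]
  exact (hφ.integral_hasStrictDerivAt 0 t).hasDerivAt.const_add _

noncomputable def dampedIntegral (β : ℝ) (g : ℝ → ℝ) (t : ℝ) : ℝ :=
  exp (-(β * t)) * ∫ r in Iic t, exp (β * r) * g r

section DampedIntegral

variable {β ε C : ℝ} {g h : ℝ → ℝ}

lemma exp_mul_mul_abs_le_of_le (hε : 0 ≤ ε) (hg : ∀ r, |g r| ≤ C * cosh (ε * r)) {r t : ℝ}
    (hrt : r ≤ t) :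
    exp (β * r) * |g r| ≤ C * cosh (ε * t) * exp (ε * t) * exp ((β - ε) * r) := by
  have hC : 0 ≤ C := by simpa using (abs_nonneg _).trans (hg 0)
  have hcosh : cosh (ε * r) ≤ cosh (ε * t) * exp (ε * t - ε * r) := by
    have := cosh_le_cosh_mul_exp_abs_sub (ε * r) (ε * t)
    rwa [abs_sub_comm, abs_of_nonneg (sub_nonneg.2 (by gcongr))] at this
  calc exp (β * r) * |g r| ≤ exp (β * r) * (C * (cosh (ε * t) * exp (ε * t - ε * r))) := by
        gcongr; exact (hg r).trans (by gcongr)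
    _ = C * cosh (ε * t) * exp (ε * t) * exp ((β - ε) * r) := by
        rw [exp_sub, sub_mul, exp_sub]; field_simp

lemma integrableOn_exp_mul_mul_Iic (hε : 0 ≤ ε) (hεβ : ε < β) (hg : Continuous g)
    (hgC : ∀ r, |g r| ≤ C * cosh (ε * r)) (t : ℝ) :
    IntegrableOn (fun r => exp (β * r) * g r) (Iic t) := by
  refine Integrable.mono' ((integrableOn_exp_mul_Iic (sub_pos.2 hεβ) t).const_mul
    (C * cosh (ε * t) * exp (ε * t))) (by fun_prop) ?_
  filter_upwards [ae_restrict_mem measurableSet_Iic] with r hr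
  rw [norm_mul, norm_of_nonneg (exp_pos _).le, norm_eq_abs]
  exact exp_mul_mul_abs_le_of_le hε hgC hr

lemma abs_dampedIntegral_le (hε : 0 ≤ ε) (hεβ : ε < β)
    (hgC : ∀ r, |g r| ≤ C * cosh (ε * r)) (t : ℝ) :
    |dampedIntegral β g t| ≤ C / (β - ε) * cosh (ε * t) := by
  have hβε : 0 < β - ε := sub_pos.2 hεβ
  have hint : ‖∫ r in Iic t, exp (β * r) * g r‖ ≤
      ∫ r in Iic t, C * cosh (ε * t) * exp (ε * t) * exp ((β - ε) * r) := by
    refine norm_integral_le_of_norm_le ((integrableOn_exp_mul_Iic hβε t).const_mul _) ?_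
    filter_upwards [ae_restrict_mem measurableSet_Iic] with r hr
    rw [norm_mul, norm_of_nonneg (exp_pos _).le, norm_eq_abs]
    exact exp_mul_mul_abs_le_of_le hε hgC hr
  rw [integral_const_mul, integral_exp_mul_Iic hβε, norm_eq_abs] at hint
  rw [dampedIntegral, abs_mul, abs_of_pos (exp_pos _)]
  calc exp (-(β * t)) * |∫ r in Iic t, exp (β * r) * g r|
      ≤ exp (-(β * t)) * (C * cosh (ε * t) * exp (ε * t) * (exp ((β - ε) * t) / (β - ε))) := by
        gcongr
    _ = C / (β - ε) * cosh (ε * t) := by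
        rw [sub_mul, exp_sub, exp_neg]; field_simp

lemma hasDerivAt_dampedIntegral (hg : Continuous g)
    (hint : ∀ t, IntegrableOn (fun r => exp (β * r) * g r) (Iic t)) (t : ℝ) :
    HasDerivAt (dampedIntegral β g) (g t - β * dampedIntegral β g t) t := by
  have hF : (fun s => ∫ r in Iic s, exp (β * r) * g r) =
      fun s => (∫ r in Iic t, exp (β * r) * g r) + ∫ r in t..s, exp (β * r) * g r := by
    funext s
    rw [← intervalIntegral.integral_Iic_sub_Iic (hint t) (hint s)]
    ring
  have hderiv : HasDerivAt (fun s => ∫ r in Iic s, exp (β * r) * g r) (exp (β * t) * g t) t := by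
    rw [hF]
    exact ((by fun_prop : Continuous fun r => exp (β * r) * g r).integral_hasStrictDerivAt
      t t).hasDerivAt.const_add _
  have hexp : HasDerivAt (fun s => exp (-(β * s))) (-β * exp (-(β * t))) t := by
    simpa [mul_comm] using ((hasDerivAt_id t).const_mul β).neg.exp
  refine (hexp.mul hderiv).congr_deriv ?_
  simp only [dampedIntegral, exp_neg]
  field_simp
  ring

lemma continuous_dampedIntegral (hg : Continuous g)
    (hint : ∀ t, IntegrableOn (fun r => exp (β * r) * g r) (Iic t)) :
    Continuous (dampedIntegral β g) :=
  continuous_iff_continuousAt.2 fun t => (hasDerivAt_dampedIntegral hg hint t).continuousAt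

lemma dampedIntegral_sub (hg : ∀ t, IntegrableOn (fun r => exp (β * r) * g r) (Iic t))
    (hh : ∀ t, IntegrableOn (fun r => exp (β * r) * h r) (Iic t)) (t : ℝ) :
    dampedIntegral β (fun r => g r - h r) t = dampedIntegral β g t - dampedIntegral β h t := by
  simp only [dampedIntegral, mul_sub, integral_sub (hg t) (hh t)]

end DampedIntegral

section Contraction

variable {β ε C L : ℝ} {g : ℝ → ℝ → ℝ}

lemma abs_sub_le_mul_dist_mul_cosh (hgL : ∀ t p q, |g t p - g t q| ≤ L * |p - q|)
    (hL : 0 ≤ L) (u v : ℝ →ᵇ ℝ) (r : ℝ) :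
    |g r (cosh (ε * r) * u r) - g r (cosh (ε * r) * v r)| ≤ L * dist u v * cosh (ε * r) :=
  calc _ ≤ L * (cosh (ε * r) * |u r - v r|) := by
        simpa [← mul_sub, abs_mul, abs_of_pos (cosh_pos _)] using
          hgL r (cosh (ε * r) * u r) (cosh (ε * r) * v r)
    _ ≤ L * (cosh (ε * r) * dist u v) := by
        gcongr; simpa [dist_eq] using BoundedContinuousFunction.dist_coe_le_dist (f := u) (g := v) r
    _ = L * dist u v * cosh (ε * r) := by ring

theorem exists_eq_dampedIntegral (hε : 0 ≤ ε) (hL : L < β - ε)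
    (hg : Continuous (Function.uncurry g)) (hgL : ∀ t p q, |g t p - g t q| ≤ L * |p - q|)
    (hg₀ : ∀ t, |g t 0| ≤ C * cosh (ε * t)) :
    ∃ y : ℝ → ℝ, Continuous y ∧ (∃ C', ∀ t, |y t| ≤ C' * cosh (ε * t)) ∧
      (∀ t, IntegrableOn (fun r => exp (β * r) * g r (y r)) (Iic t)) ∧
      ∀ t, dampedIntegral β (fun r => g r (y r)) t = y t := by
  have hL₀ : 0 ≤ L := by simpa using (abs_nonneg _).trans (hgL 0 1 0)
  have hεβ : ε < β := by linarith
  have hβε : 0 < β - ε := by linarith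
  -- Look for `y = w * u` with `u` bounded: in this weighted sup norm `dampedIntegral β` has
  -- norm at most `1 / (β - ε)` by `abs_dampedIntegral_le`.
  set w : ℝ → ℝ := fun t => cosh (ε * t)
  have hw : ∀ t, 0 < w t := fun t => cosh_pos _
  set G : (ℝ →ᵇ ℝ) → ℝ → ℝ := fun u r => g r (w r * u r)
  have hG_cont : ∀ u, Continuous (G u) := fun u =>
    hg.comp (continuous_id.prodMk ((by fun_prop : Continuous w).mul u.continuous))
  have hG_sub := abs_sub_le_mul_dist_mul_cosh hgL hL₀ (ε := ε)
  have hG : ∀ u r, |G u r| ≤ (C + L * ‖u‖) * w r := fun u r => by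
    have h := hG_sub u 0 r
    simp only [BoundedContinuousFunction.coe_zero, Pi.zero_apply, mul_zero, dist_zero_right] at h
    linarith [abs_sub_abs_le_abs_sub (G u r) (g r 0), hg₀ r]
  have hint : ∀ u t, IntegrableOn (fun r => exp (β * r) * G u r) (Iic t) :=
    fun u => integrableOn_exp_mul_mul_Iic hε hεβ (hG_cont u) (hG u)
  let Φ : (ℝ →ᵇ ℝ) → (ℝ →ᵇ ℝ) := fun u =>
    .ofNormedAddCommGroup (fun t => dampedIntegral β (G u) t / w t)
      ((continuous_dampedIntegral (hG_cont u) (hint u)).div (by fun_prop) fun t => (hw t).ne')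
      ((C + L * ‖u‖) / (β - ε)) fun t => by
        rw [norm_eq_abs, abs_div, abs_of_pos (hw t), div_le_iff₀ (hw t)]
        exact abs_dampedIntegral_le hε hεβ (hG u) t
  have hΦ : ContractingWith (L / (β - ε)).toNNReal Φ := by
    refine ⟨by simpa using (div_lt_one hβε).2 hL, LipschitzWith.of_dist_le_mul fun u v => ?_⟩
    rw [Real.coe_toNNReal _ (by positivity)]
    refine (BoundedContinuousFunction.dist_le (by positivity)).2 fun t => ?_
    change |dampedIntegral β (G u) t / w t - dampedIntegral β (G v) t / w t| ≤ _
    rw [div_sub_div_same, ← dampedIntegral_sub (hint u) (hint v), abs_div, abs_of_pos (hw t),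
      div_le_iff₀ (hw t)]
    calc _ ≤ L * dist u v / (β - ε) * w t := abs_dampedIntegral_le hε hεβ (hG_sub u v) t
      _ = _ := by ring
  set u₀ := ContractingWith.fixedPoint Φ hΦ
  refine ⟨fun t => w t * u₀ t, by fun_prop, ⟨‖u₀‖, fun t => ?_⟩, hint u₀, fun t => ?_⟩
  · rw [abs_mul, abs_of_pos (hw t), mul_comm, ← norm_eq_abs]
    gcongr
    exact u₀.norm_coe_le_norm t
  · have h : Φ u₀ t = u₀ t := by rw [hΦ.fixedPoint_isFixedPt]
    change dampedIntegral β (G u₀) t / w t = u₀ t at h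
    rw [div_eq_iff (hw t).ne'] at h
    exact h.trans (mul_comm _ _)

theorem exists_hasDerivAt_abs_le_mul_cosh (hε : 0 ≤ ε) (hL : L < β - ε)
    (hg : Continuous (Function.uncurry g)) (hgL : ∀ t p q, |g t p - g t q| ≤ L * |p - q|)
    (hg₀ : ∀ t, |g t 0| ≤ C * cosh (ε * t)) :
    ∃ y : ℝ → ℝ, (∃ C', ∀ t, |y t| ≤ C' * cosh (ε * t)) ∧
      ∀ t, HasDerivAt y (g t (y t) - β * y t) t := by
  obtain ⟨y, hy_cont, hy_le, hint, hy⟩ := exists_eq_dampedIntegral hε hL hg hgL hg₀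
  refine ⟨y, hy_le, fun t => ?_⟩
  have h := hasDerivAt_dampedIntegral (g := fun r => g r (y r))
    (hg.comp (continuous_id.prodMk hy_cont)) hint t
  rwa [show dampedIntegral β (fun r => g r (y r)) = y from funext hy] at h

end Contraction

theorem eq_of_hasDerivAt_of_tendsto_exp_mul_sub {α : ℝ} {f : ℝ → ℝ → ℝ}
    (hf : ∀ t p q, (f t p - f t q) * (p - q) ≤ -α * (p - q) ^ 2) {y₁ y₂ : ℝ → ℝ}
    (hy₁ : ∀ t, HasDerivAt y₁ (f t (y₁ t)) t) (hy₂ : ∀ t, HasDerivAt y₂ (f t (y₂ t)) t)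
    (hlim : Tendsto (fun s => exp (α * s) * (y₁ s - y₂ s)) atBot (𝓝 0)) : y₁ = y₂ := by
  set E : ℝ → ℝ := fun s => (exp (α * s) * (y₁ s - y₂ s)) ^ 2
  have hE : ∀ t, HasDerivAt E (2 * exp (α * t) ^ 2 *
      ((f t (y₁ t) - f t (y₂ t)) * (y₁ t - y₂ t) + α * (y₁ t - y₂ t) ^ 2)) t := by
    intro t
    have hexp : HasDerivAt (fun s => exp (α * s)) (α * exp (α * t)) t := by
      simpa [mul_comm] using ((hasDerivAt_id t).const_mul α).exp
    refine ((hexp.mul ((hy₁ t).sub (hy₂ t))).pow 2).congr_deriv ?_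
    simp only [Pi.mul_apply, Pi.sub_apply]
    ring
  have hE_anti : Antitone E := antitone_of_hasDerivAt_nonpos hE fun t =>
    mul_nonpos_of_nonneg_of_nonpos (by positivity) (by linarith [hf t (y₁ t) (y₂ t)])
  have hE_nonpos : ∀ t, E t ≤ 0 := fun t =>
    ge_of_tendsto (by simpa using hlim.pow 2) ((eventually_le_atBot t).mono fun s hs => hE_anti hs)
  funext t
  have h := pow_eq_zero_iff (n := 2) two_ne_zero |>.1 (le_antisymm (hE_nonpos t) (sq_nonneg _))
  simpa [(exp_pos _).ne', sub_eq_zero] using h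

def IsSolution (a : ℝ → ℝ) (σ : ℝ) (b x : ℝ → ℝ) : Prop :=
  Continuous x ∧ ∀ s t, s ≤ t → x t - x s = (∫ r in s..t, a (x r)) + σ * (b t - b s)

namespace IsSolution

variable {a : ℝ → ℝ} {σ : ℝ} {b x y : ℝ → ℝ}

lemma hasDerivAt_sub (hx : IsSolution a σ b x) (ha : Continuous a) (t : ℝ) :
    HasDerivAt (fun t => x t - σ * b t) (a (x t)) t :=
  hasDerivAt_of_sub_eq_integral (φ := fun r => a (x r)) (ha.comp hx.1)
    (fun s t hst => by rw [← sub_eq_iff_eq_add.2 (hx.2 s t hst)]; ring) t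

lemma eq_of_tendsto {α : ℝ} (ha : Continuous a)
    (hdiss : ∀ p q, (a p - a q) * (p - q) ≤ -α * (p - q) ^ 2)
    (hx : IsSolution a σ b x) (hy : IsSolution a σ b y)
    (hx_lim : Tendsto (fun s => exp (α * s) * x s) atBot (𝓝 0))
    (hy_lim : Tendsto (fun s => exp (α * s) * y s) atBot (𝓝 0)) : x = y := by
  have h := eq_of_hasDerivAt_of_tendsto_exp_mul_sub (f := fun t p => a (p + σ * b t))
    (y₁ := fun t => x t - σ * b t) (y₂ := fun t => y t - σ * b t)
    (fun t p q => by simpa using hdiss (p + σ * b t) (q + σ * b t))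
    (fun t => by simpa using hx.hasDerivAt_sub ha t)
    (fun t => by simpa using hy.hasDerivAt_sub ha t)
    (by simpa [mul_sub] using hx_lim.sub hy_lim)
  funext t
  linarith [congrFun h t]

end IsSolution

theorem exists_isSolution_abs_le_mul_cosh {a : ℝ → ℝ} {β ε L K : ℝ} (ha : Differentiable ℝ a)
    (hderiv : ∀ z, |deriv a z + β| ≤ L) (hε : 0 ≤ ε) (hL : L < β - ε) {b : ℝ → ℝ}
    (hb : Continuous b) (hbK : ∀ t, |b t| ≤ K * cosh (ε * t)) (σ : ℝ) :
    ∃ x, IsSolution a σ b x ∧ ∃ C, ∀ t, |x t| ≤ C * cosh (ε * t) := by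
  have hL₀ : 0 ≤ L := (abs_nonneg _).trans (hderiv 0)
  have hlip := abs_add_mul_sub_le ha hderiv
  have ha_le : ∀ z, |a z| ≤ |a 0| + (L + |β|) * |z| := abs_le_abs_add_mul_abs ha fun z => by
    have := abs_sub (deriv a z + β) β
    rw [add_sub_cancel_right] at this
    linarith [hderiv z]
  have hσb : ∀ t, |σ * b t| ≤ |σ| * K * cosh (ε * t) := fun t => by
    rw [abs_mul, mul_assoc]; exact mul_le_mul_of_nonneg_left (hbK t) (abs_nonneg σ)
  have hg₀ : ∀ t, |a (0 + σ * b t) + β * 0| ≤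
      (|a 0| + (L + |β|) * (|σ| * K)) * cosh (ε * t) := fun t => by
    rw [zero_add, mul_zero, add_zero]
    calc |a (σ * b t)| ≤ |a 0| + (L + |β|) * |σ * b t| := ha_le _
      _ ≤ |a 0| * cosh (ε * t) + (L + |β|) * (|σ| * K * cosh (ε * t)) := by
          gcongr
          · exact le_mul_of_one_le_right (abs_nonneg _) (one_le_cosh _)
          · exact hσb t
      _ = (|a 0| + (L + |β|) * (|σ| * K)) * cosh (ε * t) := by ring
  have hgL : ∀ t p q, |(a (p + σ * b t) + β * p) - (a (q + σ * b t) + β * q)| ≤ L * |p - q| :=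
    fun t p q => by
      have h := hlip (p + σ * b t) (q + σ * b t)
      rwa [add_sub_add_right_eq_sub, show a (p + σ * b t) + β * (p + σ * b t) -
        (a (q + σ * b t) + β * (q + σ * b t)) = a (p + σ * b t) + β * p -
        (a (q + σ * b t) + β * q) by ring] at h
  obtain ⟨y, ⟨C, hyC⟩, hy⟩ := exists_hasDerivAt_abs_le_mul_cosh
    (g := fun t p => a (p + σ * b t) + β * p) hε hL (by have := ha.continuous; fun_prop) hgL hg₀
  have hy_cont : Continuous y := continuous_iff_continuousAt.2 fun t => (hy t).continuousAt
  have hy' : ∀ t, HasDerivAt y (a (y t + σ * b t)) t := fun t => (hy t).congr_deriv (by ring)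
  refine ⟨fun t => y t + σ * b t, ⟨by fun_prop, fun s t _ => ?_⟩, C + |σ| * K, fun t => ?_⟩
  · rw [intervalIntegral.integral_eq_sub_of_hasDerivAt (fun r _ => hy' r)
      ((ha.continuous.comp (by fun_prop)).intervalIntegrable _ _)]
    ring
  · calc |y t + σ * b t| ≤ C * cosh (ε * t) + |σ| * K * cosh (ε * t) :=
          (abs_add_le _ _).trans (add_le_add (hyC t) (hσb t))
      _ = (C + |σ| * K) * cosh (ε * t) := by ring

theorem stmt2 (α : ℝ) (hα : 0 < α) (a : ℝ → ℝ) (ha : Differentiable ℝ a)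
    (hderiv : ∀ z : ℝ, deriv a z ∈ Set.Icc (-α⁻¹) (-α))
    (σ K : ℝ) (hK : 0 < K) (b : ℝ → ℝ) (hb : Continuous b)
    (hgrow : ∀ t : ℝ, |b t| ≤ K * (1 + t ^ 2)) :
    ∃! x : ℝ → ℝ, Continuous x ∧
      (∀ s t : ℝ, s ≤ t → x t - x s = (∫ r in s..t, a (x r)) + σ * (b t - b s)) ∧
      Filter.Tendsto (fun s : ℝ => Real.exp (α * s) * x s) Filter.atBot (nhds 0) := by
  have hα_le : α ≤ α⁻¹ := by linarith [(hderiv 0).1, (hderiv 0).2]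
  have hε : |α / 2| < α := by rw [abs_of_pos (half_pos hα)]; linarith
  have hb_cosh : ∀ t, |b t| ≤ K * (1 + 4 / (α / 2) ^ 2) * cosh (α / 2 * t) := fun t => by
    rw [mul_assoc]
    exact (hgrow t).trans (mul_le_mul_of_nonneg_left (one_add_sq_le_mul_cosh (half_pos hα) t) hK.le)
  obtain ⟨x, hx, C, hxC⟩ := exists_isSolution_abs_le_mul_cosh
    (β := (α⁻¹ + α) / 2) (L := (α⁻¹ - α) / 2) ha
    (fun z => abs_le.2 ⟨by linarith [(hderiv z).1], by linarith [(hderiv z).2]⟩)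
    (half_pos hα).le (by linarith) hb hb_cosh σ
  have hx_lim := tendsto_exp_mul_mul_atBot_of_abs_le_mul_cosh hε hxC
  refine ⟨x, ⟨hx.1, hx.2, hx_lim⟩, fun y ⟨hy_cont, hy_eq, hy_lim⟩ => ?_⟩
  exact IsSolution.eq_of_tendsto ha.continuous
    (sub_mul_sub_le_of_deriv_le ha fun z => (hderiv z).2) ⟨hy_cont, hy_eq⟩ hx hy_lim hx_lim
end

section
/- Let α > 0 and β > 0. There exists a positive constant C > 0, depending only on α and β, such that for all x ≥ 1, e^{−αx} · ∫₁ˣ ξ^{−β} e^{αξ} dξ ≤ C·x^{−β}. -/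
/-!
For `1 ≤ ξ ≤ x` we have `x / ξ ≤ 1 + (x - ξ)`, so with `s = 1 + x - ξ`,
`e^{-αx} ξ^{-β} e^{αξ} = e^α x^{-β} (x/ξ)^β e^{-αs} ≤ e^α x^{-β} s^β e^{-αs}`.
Integrating over `ξ ∈ [1, x]` turns the right side into `e^α x^{-β} ∫₁ˣ s^β e^{-αs} ds`,
and the last integral is bounded by the full Gamma integral `Γ(β + 1) / α^{β + 1}`.
-/

open MeasureTheory Real Set

lemma intervalIntegral_rpow_mul_exp_neg_le {s c a b : ℝ} (hs : -1 < s) (hc : 0 < c)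
    (ha : 0 ≤ a) (hab : a ≤ b) :
    ∫ x in a..b, x ^ s * exp (-(c * x)) ≤ (1 / c) ^ (s + 1) * Gamma (s + 1) := by
  have hΓ := Gamma_pos_of_pos (by linarith : 0 < s + 1)
  have key := integral_rpow_mul_exp_neg_mul_Ioi (a := s + 1) (by linarith) hc
  rw [add_sub_cancel_right] at key
  have hint : IntegrableOn (fun x ↦ x ^ s * exp (-(c * x))) (Ioi 0) :=
    .of_integral_ne_zero (by rw [key]; positivity)
  rw [intervalIntegral.integral_of_le hab, ← key]
  refine setIntegral_mono_set hint ?_ (Ioc_subset_Ioi_self.trans (Ioi_subset_Ioi ha)).eventuallyLE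
  filter_upwards [ae_restrict_mem measurableSet_Ioi] with x hx
  exact mul_nonneg (rpow_nonneg hx.le _) (exp_nonneg _)

lemma div_le_one_add_sub {ξ x : ℝ} (hξ : 1 ≤ ξ) (hξx : ξ ≤ x) : x / ξ ≤ 1 + (x - ξ) := by
  rw [div_le_iff₀ (by linarith)]
  nlinarith

lemma exp_neg_mul_mul_rpow_neg_mul_exp_le {α β ξ x : ℝ} (hβ : 0 ≤ β) (hξ : 1 ≤ ξ)
    (hξx : ξ ≤ x) :
    exp (-α * x) * (ξ ^ (-β) * exp (α * ξ)) ≤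
      exp α * x ^ (-β) * ((1 + x - ξ) ^ β * exp (-(α * (1 + x - ξ)))) := by
  have hξ0 : 0 < ξ := by linarith
  have hx0 : 0 < x := by linarith
  have hrpow : ξ ^ (-β) = x ^ (-β) * (x / ξ) ^ β := by
    rw [div_rpow hx0.le hξ0.le, rpow_neg hx0.le, rpow_neg hξ0.le]
    field_simp
  have hexp : exp (-α * x) * exp (α * ξ) = exp α * exp (-(α * (1 + x - ξ))) := by
    rw [← exp_add, ← exp_add]
    ring_nf
  calc exp (-α * x) * (ξ ^ (-β) * exp (α * ξ))
      = exp α * x ^ (-β) * ((x / ξ) ^ β * exp (-(α * (1 + x - ξ)))) := by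
        rw [hrpow]
        linear_combination x ^ (-β) * (x / ξ) ^ β * hexp
    _ ≤ exp α * x ^ (-β) * ((1 + x - ξ) ^ β * exp (-(α * (1 + x - ξ)))) := by
        gcongr
        linarith [div_le_one_add_sub hξ hξx]

lemma exp_neg_mul_integral_rpow_neg_mul_exp_le {α β x : ℝ} (hβ : 0 ≤ β) (hx : 1 ≤ x) :
    exp (-α * x) * ∫ ξ in (1:ℝ)..x, ξ ^ (-β) * exp (α * ξ) ≤
      exp α * x ^ (-β) * ∫ s in (1:ℝ)..x, s ^ β * exp (-(α * s)) := by
  have hcont : Continuous fun s : ℝ ↦ s ^ β * exp (-(α * s)) := by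
    have := continuous_rpow_const hβ
    fun_prop
  have hint : IntervalIntegrable (fun ξ ↦ exp (-α * x) * (ξ ^ (-β) * exp (α * ξ))) volume 1 x := by
    refine (continuousOn_const.mul
      ((continuousOn_id.rpow_const fun ξ hξ ↦ ?_).mul (by fun_prop))).intervalIntegrable
    rw [uIcc_of_le hx] at hξ
    exact Or.inl (zero_lt_one.trans_le hξ.1).ne'
  calc exp (-α * x) * ∫ ξ in (1:ℝ)..x, ξ ^ (-β) * exp (α * ξ)
      = ∫ ξ in (1:ℝ)..x, exp (-α * x) * (ξ ^ (-β) * exp (α * ξ)) :=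
        (intervalIntegral.integral_const_mul _ _).symm
    _ ≤ ∫ ξ in (1:ℝ)..x, exp α * x ^ (-β) * ((1 + x - ξ) ^ β * exp (-(α * (1 + x - ξ)))) :=
        intervalIntegral.integral_mono_on hx hint
          (((hcont.comp (continuous_sub_left (1 + x))).const_mul _).intervalIntegrable _ _)
          fun ξ hξ ↦ exp_neg_mul_mul_rpow_neg_mul_exp_le hβ hξ.1 hξ.2
    _ = exp α * x ^ (-β) * ∫ s in (1:ℝ)..x, s ^ β * exp (-(α * s)) := by
        rw [intervalIntegral.integral_const_mul,
          intervalIntegral.integral_comp_sub_left (fun s ↦ s ^ β * exp (-(α * s))) (1 + x),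
          add_sub_cancel_right, add_sub_cancel_left]

theorem stmt3 (α β : ℝ) (hα : 0 < α) (hβ : 0 < β) :
    ∃ C : ℝ, 0 < C ∧ ∀ x : ℝ, 1 ≤ x →
      Real.exp (-α * x) * (∫ ξ in (1:ℝ)..x, ξ ^ (-β) * Real.exp (α * ξ)) ≤ C * x ^ (-β) := by
  have hΓ := Gamma_pos_of_pos (by linarith : 0 < β + 1)
  refine ⟨exp α * (1 / α) ^ (β + 1) * Gamma (β + 1), by positivity, fun x hx ↦ ?_⟩
  calc exp (-α * x) * ∫ ξ in (1:ℝ)..x, ξ ^ (-β) * exp (α * ξ)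
      ≤ exp α * x ^ (-β) * ∫ s in (1:ℝ)..x, s ^ β * exp (-(α * s)) :=
        exp_neg_mul_integral_rpow_neg_mul_exp_le hβ.le hx
    _ ≤ exp α * x ^ (-β) * ((1 / α) ^ (β + 1) * Gamma (β + 1)) := by
        gcongr
        exact intervalIntegral_rpow_mul_exp_neg_le (by linarith) hα zero_le_one hx
    _ = exp α * (1 / α) ^ (β + 1) * Gamma (β + 1) * x ^ (-β) := by ring
end

section
/- Let H ∈ (0,1/2), α > 0 and σ ≠ 0. There exists a constant C > 0, depending only on H, α and σ, such that for every measurable function φ : ℝ → ℝ with −α⁻¹ ≤ φ(v) ≤ −α for all v, the function Ψ(s) := σ·𝟙_{(−∞,0]}(s)·exp(∫ₛ⁰ φ(v) dv) satisfies, for all t < 0, | ∫₀^∞ ξ^{H−3/2} (Ψ(t) − Ψ(t+ξ)) dξ | ≤ C·( (−t)^{H−1/2}·𝟙_{[−1,0)}(t) + (−t)^{H−3/2}·𝟙_{(−∞,−1)}(t) ). -/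
/-!
Write `x = -t`. For `s ≤ u ≤ 0` one has `Ψ(s) = Ψ(u)·exp(∫ₛᵘ φ)`, so the bounds on `φ` give
`|Ψ(u)| ≤ |σ| e^{αu}` and `|Ψ(s) - Ψ(u)| ≤ |σ| e^{αu} min(α⁻¹(u - s), 1)`, while `Ψ` vanishes
on `(0, ∞)`. Hence `|σ|⁻¹` times the integrand is dominated by `e^{-αx/2} ξ^{H-3/2} min(ξ/α, 1)`
for `ξ ≤ x/2`, by `(x/2)^{H-3/2} e^{α(t+ξ)}` for `x/2 < ξ ≤ x`, and, past the jump of `Ψ` at `0`,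
by `e^{-αx} ξ^{H-3/2}` for `ξ > x`. Integrating, the three pieces are `O(x^{H-1/2})` for `x ≤ 1`.
For `x > 1` they are `O(x^{H-3/2})`: the outer two because of their exponential factors, the middle
one because `∫ e^{α(t+ξ)} dξ ≤ 1/α`.
-/

open MeasureTheory

/-- The kernel `Ψ(s) = σ·𝟙_{(−∞,0]}(s)·exp(∫ₛ⁰ φ(v) dv)`. -/
noncomputable def Psi (σ : ℝ) (φ : ℝ → ℝ) : ℝ → ℝ :=
  Set.indicator (Set.Iic (0:ℝ)) (fun s => σ * Real.exp (∫ v in s..(0:ℝ), φ v))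

open Set Real

noncomputable def marchaudDeriv (H : ℝ) (f : ℝ → ℝ) (s : ℝ) : ℝ :=
  ∫ ξ in Ioi (0:ℝ), ξ ^ (H - 3/2) * (f s - f (s + ξ))

lemma pow_mul_exp_neg_le {c x : ℝ} (hc : 0 < c) (hx : 0 ≤ x) (n : ℕ) :
    x ^ n * exp (-(c * x)) ≤ n.factorial / c ^ n := by
  calc x ^ n * exp (-(c * x))
      = (c * x) ^ n / n.factorial * exp (-(c * x)) * (n.factorial / c ^ n) := by
        rw [mul_pow]; field_simp
    _ ≤ exp (c * x) * exp (-(c * x)) * (n.factorial / c ^ n) := by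
        gcongr; exact pow_div_factorial_le_exp _ (by positivity) n
    _ = n.factorial / c ^ n := by rw [← exp_add, add_neg_cancel, exp_zero, one_mul]

lemma exp_neg_mul_le_mul_rpow {c x p : ℝ} (hc : 0 < c) (hx : 1 ≤ x) (hp : -2 ≤ p) :
    exp (-(c * x)) ≤ 2 / c ^ 2 * x ^ p := by
  have hdecay := pow_mul_exp_neg_le hc (zero_le_one.trans hx) 2
  rw [Nat.factorial_two, Nat.cast_two] at hdecay
  have hgrowth : 1 ≤ x ^ 2 * x ^ p := by
    rw [← rpow_natCast, ← rpow_add (zero_lt_one.trans_le hx)]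
    exact one_le_rpow hx (by push_cast; linarith)
  calc exp (-(c * x)) ≤ exp (-(c * x)) * (x ^ 2 * x ^ p) :=
        le_mul_of_one_le_right (exp_pos _).le hgrowth
    _ = x ^ 2 * exp (-(c * x)) * x ^ p := by ring
    _ ≤ 2 / c ^ 2 * x ^ p := by gcongr

section Psi

variable {σ α β : ℝ} {φ : ℝ → ℝ}

lemma intervalIntegrable_of_mem_Icc (hφm : Measurable φ) (hφ : ∀ v, φ v ∈ Icc (-β) (-α))
    (a b : ℝ) : IntervalIntegrable φ volume a b := by
  refine (intervalIntegrable_const (c := |α| + |β|)).mono_fun'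
    hφm.aestronglyMeasurable.restrict (ae_of_all _ fun v => ?_)
  obtain ⟨hlo, hhi⟩ := hφ v
  simp only [norm_eq_abs, abs_le]
  constructor <;> linarith [le_abs_self β, neg_le_abs α, abs_nonneg α, abs_nonneg β]

lemma integral_le_neg_mul (hφm : Measurable φ) (hφ : ∀ v, φ v ∈ Icc (-β) (-α)) {s u : ℝ}
    (hsu : s ≤ u) : ∫ v in s..u, φ v ≤ -(α * (u - s)) := by
  calc ∫ v in s..u, φ v ≤ ∫ _ in s..u, -α :=
        intervalIntegral.integral_mono_on hsu (intervalIntegrable_of_mem_Icc hφm hφ s u)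
          intervalIntegrable_const fun v _ => (hφ v).2
    _ = -(α * (u - s)) := by simp; ring

lemma neg_mul_le_integral (hφm : Measurable φ) (hφ : ∀ v, φ v ∈ Icc (-β) (-α)) {s u : ℝ}
    (hsu : s ≤ u) : -(β * (u - s)) ≤ ∫ v in s..u, φ v := by
  calc -(β * (u - s)) = ∫ _ in s..u, -β := by simp; ring
    _ ≤ ∫ v in s..u, φ v :=
        intervalIntegral.integral_mono_on hsu intervalIntegrable_const
          (intervalIntegrable_of_mem_Icc hφm hφ s u) fun v _ => (hφ v).1

lemma Psi_of_nonpos {s : ℝ} (hs : s ≤ 0) : Psi σ φ s = σ * exp (∫ v in s..0, φ v) :=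
  indicator_of_mem (mem_Iic.2 hs) _

lemma Psi_of_pos {s : ℝ} (hs : 0 < s) : Psi σ φ s = 0 :=
  indicator_of_notMem (fun h => (not_le.2 hs) (mem_Iic.1 h)) _

lemma abs_Psi_le (hφm : Measurable φ) (hφ : ∀ v, φ v ∈ Icc (-β) (-α)) {s : ℝ} (hs : s ≤ 0) :
    |Psi σ φ s| ≤ |σ| * exp (α * s) := by
  rw [Psi_of_nonpos hs, abs_mul, abs_exp]
  gcongr
  linarith [integral_le_neg_mul hφm hφ hs]

lemma Psi_eq_mul_exp_integral (hφm : Measurable φ) (hφ : ∀ v, φ v ∈ Icc (-β) (-α)) {t u : ℝ}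
    (htu : t ≤ u) (hu : u ≤ 0) : Psi σ φ t = Psi σ φ u * exp (∫ v in t..u, φ v) := by
  rw [Psi_of_nonpos (htu.trans hu), Psi_of_nonpos hu, mul_assoc, ← exp_add, add_comm,
    intervalIntegral.integral_add_adjacent_intervals (intervalIntegrable_of_mem_Icc hφm hφ _ _)
      (intervalIntegrable_of_mem_Icc hφm hφ _ _)]

lemma abs_Psi_sub_le (hα : 0 ≤ α) (hφm : Measurable φ) (hφ : ∀ v, φ v ∈ Icc (-β) (-α))
    {t u : ℝ} (htu : t ≤ u) (hu : u ≤ 0) :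
    |Psi σ φ t - Psi σ φ u| ≤ |σ| * exp (α * u) * min (β * (u - t)) 1 := by
  have hupper := integral_le_neg_mul hφm hφ htu
  have hlower := neg_mul_le_integral hφm hφ htu
  rw [Psi_eq_mul_exp_integral hφm hφ htu hu]
  set B := ∫ v in t..u, φ v
  have hexpB : exp B ≤ 1 := exp_le_one_iff.2 (by nlinarith)
  rw [← mul_sub_one, abs_mul, abs_of_nonpos (a := exp B - 1) (by linarith)]
  refine mul_le_mul (abs_Psi_le hφm hφ hu) (le_min ?_ ?_) (by linarith) (by positivity)
  · linarith [add_one_le_exp B]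
  · linarith [exp_pos B]

end Psi

section Majorant

variable {H α β t : ℝ}

noncomputable def marchaudMajorant (H α β t ξ : ℝ) : ℝ :=
  exp (α * t / 2) * (ξ ^ (H - 3/2) * min (β * ξ) 1)
    + (Ioc (-t / 2) (-t)).indicator (fun ξ => (-t / 2) ^ (H - 3/2) * exp (α * (t + ξ))) ξ
    + (Ioi (-t)).indicator (fun ξ => exp (α * t) * ξ ^ (H - 3/2)) ξ

lemma abs_rpow_mul_Psi_sub_le_marchaudMajorant {σ : ℝ} {φ : ℝ → ℝ} (hH : H ≤ 3/2)
    (hα : 0 ≤ α) (hφm : Measurable φ) (hφ : ∀ v, φ v ∈ Icc (-β) (-α)) (ht : t ≤ 0) {ξ : ℝ}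
    (hξ : 0 < ξ) :
    |ξ ^ (H - 3/2) * (Psi σ φ t - Psi σ φ (t + ξ))| ≤ |σ| * marchaudMajorant H α β t ξ := by
  have hβ : 0 ≤ β := by linarith [(hφ 0).1, (hφ 0).2]
  have hmin : 0 ≤ min (β * ξ) 1 := le_min (by positivity) zero_le_one
  have hfirst : 0 ≤ exp (α * t / 2) * (ξ ^ (H - 3/2) * min (β * ξ) 1) := by positivity
  rw [abs_mul, abs_of_pos (rpow_pos_of_pos hξ _), marchaudMajorant]
  rcases le_or_gt ξ (-t) with hξt | hξt
  · have hdiff := abs_Psi_sub_le (σ := σ) hα hφm hφ (le_add_of_nonneg_right hξ.le)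
      (by linarith : t + ξ ≤ 0)
    rw [add_sub_cancel_left] at hdiff
    rw [indicator_of_notMem (fun h : ξ ∈ Ioi (-t) => not_lt.2 hξt h), add_zero]
    rcases le_or_gt ξ (-t / 2) with hξh | hξh
    · rw [indicator_of_notMem (fun h : ξ ∈ Ioc (-t / 2) (-t) => not_lt.2 hξh h.1), add_zero]
      have hexp : exp (α * (t + ξ)) ≤ exp (α * t / 2) := exp_le_exp.2 (by nlinarith)
      calc ξ ^ (H - 3/2) * |Psi σ φ t - Psi σ φ (t + ξ)|
          ≤ ξ ^ (H - 3/2) * (|σ| * exp (α * (t + ξ)) * min (β * ξ) 1) := by gcongr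
        _ ≤ ξ ^ (H - 3/2) * (|σ| * exp (α * t / 2) * min (β * ξ) 1) := by gcongr
        _ = _ := by ring
    · rw [indicator_of_mem (show ξ ∈ Ioc (-t / 2) (-t) from ⟨hξh, hξt⟩)]
      have hrpow : ξ ^ (H - 3/2) ≤ (-t / 2) ^ (H - 3/2) :=
        rpow_le_rpow_of_nonpos (by linarith) hξh.le (by linarith)
      calc ξ ^ (H - 3/2) * |Psi σ φ t - Psi σ φ (t + ξ)|
          ≤ (-t / 2) ^ (H - 3/2) * (|σ| * exp (α * (t + ξ)) * 1) :=
            mul_le_mul hrpow (hdiff.trans (by gcongr; exact min_le_right _ _))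
              (abs_nonneg _) (rpow_nonneg (by linarith) _)
        _ = |σ| * ((-t / 2) ^ (H - 3/2) * exp (α * (t + ξ))) := by ring
        _ ≤ _ := mul_le_mul_of_nonneg_left (le_add_of_nonneg_left hfirst) (abs_nonneg σ)
  · rw [indicator_of_notMem (fun h : ξ ∈ Ioc (-t / 2) (-t) => not_le.2 hξt h.2),
      indicator_of_mem (show ξ ∈ Ioi (-t) from hξt), add_zero,
      Psi_of_pos (by linarith : 0 < t + ξ), sub_zero]
    calc ξ ^ (H - 3/2) * |Psi σ φ t| ≤ ξ ^ (H - 3/2) * (|σ| * exp (α * t)) := by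
          gcongr; exact abs_Psi_le hφm hφ ht
      _ = |σ| * (exp (α * t) * ξ ^ (H - 3/2)) := by ring
      _ ≤ _ := mul_le_mul_of_nonneg_left (le_add_of_nonneg_left hfirst) (abs_nonneg σ)

lemma integrableOn_rpow_mul_min (hH₀ : -1/2 < H) (hH₁ : H < 1/2) (hβ : 0 ≤ β) :
    IntegrableOn (fun ξ : ℝ => ξ ^ (H - 3/2) * min (β * ξ) 1) (Ioi 0) := by
  have hcont : ContinuousOn (fun ξ : ℝ => ξ ^ (H - 3/2) * min (β * ξ) 1) (Ioi 0) :=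
    (continuousOn_id.rpow_const fun ξ hξ => Or.inl (ne_of_gt hξ)).mul (by fun_prop)
  rw [← Ioc_union_Ioi_eq_Ioi zero_le_one]
  refine IntegrableOn.union ?_ ?_
  · have hdom : IntegrableOn (fun ξ : ℝ => β * ξ ^ (H - 1/2)) (Ioc 0 1) := by
      have := intervalIntegral.intervalIntegrable_rpow' (a := 0) (b := 1)
        (show -1 < H - 1/2 by linarith)
      exact ((intervalIntegrable_iff_integrableOn_Ioc_of_le zero_le_one).1 this).const_mul β
    refine hdom.mono' (hcont.mono Ioc_subset_Ioi_self |>.aestronglyMeasurable measurableSet_Ioc)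
      ((ae_restrict_iff' measurableSet_Ioc).2 (ae_of_all _ fun ξ ⟨hξ, _⟩ => ?_))
    have hmin : 0 ≤ min (β * ξ) 1 := le_min (by positivity) zero_le_one
    rw [norm_eq_abs, abs_of_nonneg (by positivity),
      show H - 1/2 = H - 3/2 + 1 by ring, rpow_add_one hξ.ne']
    calc ξ ^ (H - 3/2) * min (β * ξ) 1 ≤ ξ ^ (H - 3/2) * (β * ξ) := by
          gcongr; exact min_le_left _ _
      _ = β * (ξ ^ (H - 3/2) * ξ) := by ring
  · refine (integrableOn_Ioi_rpow_of_lt (show H - 3/2 < -1 by linarith) zero_lt_one).mono'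
      (hcont.mono (Ioi_subset_Ioi zero_le_one) |>.aestronglyMeasurable measurableSet_Ioi)
      ((ae_restrict_iff' measurableSet_Ioi).2 (ae_of_all _ fun ξ hξ => ?_))
    have hξ : (0 : ℝ) < ξ := zero_lt_one.trans hξ
    have hmin : 0 ≤ min (β * ξ) 1 := le_min (by positivity) zero_le_one
    rw [norm_eq_abs, abs_of_nonneg (by positivity)]
    exact mul_le_of_le_one_right (by positivity) (min_le_right _ _)

lemma setIntegral_rpow_mul_min_nonneg (hβ : 0 ≤ β) :
    0 ≤ ∫ ξ in Ioi 0, ξ ^ (H - 3/2) * min (β * ξ) 1 :=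
  setIntegral_nonneg measurableSet_Ioi fun _ hξ =>
    mul_nonneg (rpow_nonneg (le_of_lt hξ) _) (le_min (mul_nonneg hβ (le_of_lt hξ)) zero_le_one)

lemma integrableOn_marchaudMajorant_terms (hH₀ : -1/2 < H) (hH₁ : H < 1/2) (hβ : 0 ≤ β)
    (ht : t < 0) :
    IntegrableOn (fun ξ => exp (α * t / 2) * (ξ ^ (H - 3/2) * min (β * ξ) 1)) (Ioi 0) ∧
    IntegrableOn ((Ioc (-t / 2) (-t)).indicator
      fun ξ => (-t / 2) ^ (H - 3/2) * exp (α * (t + ξ))) (Ioi 0) ∧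
    IntegrableOn ((Ioi (-t)).indicator fun ξ => exp (α * t) * ξ ^ (H - 3/2)) (Ioi 0) :=
  ⟨(integrableOn_rpow_mul_min hH₀ hH₁ hβ).const_mul _,
    ((integrable_indicator_iff measurableSet_Ioc).2
      (Continuous.integrableOn_Ioc (by fun_prop))).integrableOn,
    ((integrable_indicator_iff measurableSet_Ioi).2
      ((integrableOn_Ioi_rpow_of_lt (by linarith) (by linarith)).const_mul _)).integrableOn⟩

lemma integral_marchaudMajorant (hH₀ : -1/2 < H) (hH₁ : H < 1/2) (hα : α ≠ 0) (hβ : 0 ≤ β)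
    (ht : t < 0) :
    ∫ ξ in Ioi 0, marchaudMajorant H α β t ξ =
      exp (α * t / 2) * (∫ ξ in Ioi 0, ξ ^ (H - 3/2) * min (β * ξ) 1)
        + (-t / 2) ^ (H - 3/2) * ((1 - exp (α * t / 2)) / α)
        + exp (α * t) * ((-t) ^ (H - 1/2) / (1/2 - H)) := by
  have hmiddle : ∫ ξ in Ioc (-t / 2) (-t), exp (α * (t + ξ)) = (1 - exp (α * t / 2)) / α := by
    rw [← intervalIntegral.integral_of_le (by linarith)]
    simp only [mul_add, add_comm (α * t)]
    rw [intervalIntegral.integral_comp_mul_add (fun y => exp y) hα, integral_exp,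
      show α * -t + α * t = 0 by ring, show α * (-t / 2) + α * t = α * t / 2 by ring, exp_zero,
      smul_eq_mul]
    ring
  have htail : ∫ ξ in Ioi (-t), ξ ^ (H - 3/2) = (-t) ^ (H - 1/2) / (1/2 - H) := by
    rw [integral_Ioi_rpow_of_lt (by linarith) (by linarith), show H - 3/2 + 1 = H - 1/2 by ring,
      neg_div, ← div_neg, neg_sub]
  obtain ⟨h₁, h₂, h₃⟩ := integrableOn_marchaudMajorant_terms (α := α) hH₀ hH₁ hβ ht
  unfold marchaudMajorant
  rw [integral_add ?_ h₃, integral_add h₁ h₂,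
    integral_const_mul, setIntegral_indicator measurableSet_Ioc,
    setIntegral_indicator measurableSet_Ioi,
    inter_eq_right.2 (Ioc_subset_Ioi_self.trans (Ioi_subset_Ioi (by linarith))),
    inter_eq_right.2 (Ioi_subset_Ioi (by linarith)),
    integral_const_mul, integral_const_mul, hmiddle, htail]
  exact h₁.add h₂

end Majorant

section Estimate

variable {H α σ t : ℝ} {φ : ℝ → ℝ}

lemma abs_marchaudDeriv_Psi_le {β : ℝ} (hH₀ : -1/2 < H) (hH₁ : H < 1/2) (hα : 0 < α)
    (hφm : Measurable φ) (hφ : ∀ v, φ v ∈ Icc (-β) (-α)) (ht : t < 0) :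
    |marchaudDeriv H (Psi σ φ) t| ≤
      |σ| * (exp (α * t / 2) * (∫ ξ in Ioi 0, ξ ^ (H - 3/2) * min (β * ξ) 1)
        + (-t / 2) ^ (H - 3/2) * ((1 - exp (α * t / 2)) / α)
        + exp (α * t) * ((-t) ^ (H - 1/2) / (1/2 - H))) := by
  have hβ : 0 ≤ β := by linarith [(hφ 0).1, (hφ 0).2]
  obtain ⟨h₁, h₂, h₃⟩ := integrableOn_marchaudMajorant_terms (α := α) hH₀ hH₁ hβ ht
  rw [← integral_marchaudMajorant hH₀ hH₁ hα.ne' hβ ht, ← integral_const_mul]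
  exact norm_integral_le_of_norm_le (f := fun ξ => ξ ^ (H - 3/2) * (Psi σ φ t - Psi σ φ (t + ξ)))
    (((h₁.add h₂).add h₃).const_mul _)
    ((ae_restrict_iff' measurableSet_Ioi).2 (ae_of_all _ fun ξ hξ =>
      abs_rpow_mul_Psi_sub_le_marchaudMajorant (H := H) (σ := σ) (by linarith) hα.le hφm hφ
        ht.le hξ))

lemma abs_marchaudDeriv_Psi_le_of_neg_one_le {β : ℝ} (hH₀ : -1/2 < H) (hH₁ : H < 1/2)
    (hα : 0 < α) (hφm : Measurable φ) (hφ : ∀ v, φ v ∈ Icc (-β) (-α)) (ht₁ : -1 ≤ t)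
    (ht : t < 0) :
    |marchaudDeriv H (Psi σ φ) t| ≤
      |σ| * ((∫ ξ in Ioi 0, ξ ^ (H - 3/2) * min (β * ξ) 1) + 1 / 2 ^ (H - 1/2) + (1/2 - H)⁻¹)
        * (-t) ^ (H - 1/2) := by
  set K := ∫ ξ in Ioi 0, ξ ^ (H - 3/2) * min (β * ξ) 1
  have hβ : 0 ≤ β := by linarith [(hφ 0).1, (hφ 0).2]
  have hK : 0 ≤ K := setIntegral_rpow_mul_min_nonneg hβ
  have hx : 0 < -t := by linarith
  have hP : 1 ≤ (-t) ^ (H - 1/2) :=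
    one_le_rpow_of_pos_of_le_one_of_nonpos hx (by linarith) (by linarith)
  have hexp : exp (α * t) ≤ 1 := exp_le_one_iff.2 (by nlinarith)
  have hexp2 : exp (α * t / 2) ≤ 1 := exp_le_one_iff.2 (by nlinarith)
  have e₁ : exp (α * t / 2) * K ≤ K * (-t) ^ (H - 1/2) := by nlinarith
  have e₂ : (-t / 2) ^ (H - 3/2) * ((1 - exp (α * t / 2)) / α) ≤
      1 / 2 ^ (H - 1/2) * (-t) ^ (H - 1/2) := by
    have hjump : (1 - exp (α * t / 2)) / α ≤ -t / 2 := by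
      rw [div_le_iff₀ hα]; linarith [add_one_le_exp (α * t / 2)]
    calc (-t / 2) ^ (H - 3/2) * ((1 - exp (α * t / 2)) / α)
        ≤ (-t / 2) ^ (H - 3/2) * (-t / 2) := by gcongr
      _ = 1 / 2 ^ (H - 1/2) * (-t) ^ (H - 1/2) := by
        rw [← rpow_add_one (by linarith), show H - 3/2 + 1 = H - 1/2 by ring,
          div_rpow hx.le zero_le_two]
        ring
  have e₃ : exp (α * t) * ((-t) ^ (H - 1/2) / (1/2 - H)) ≤ (1/2 - H)⁻¹ * (-t) ^ (H - 1/2) := by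
    rw [div_eq_inv_mul]
    exact mul_le_of_le_one_left (by have := inv_pos.2 (sub_pos.2 hH₁); positivity) hexp
  calc |marchaudDeriv H (Psi σ φ) t| ≤ _ := abs_marchaudDeriv_Psi_le hH₀ hH₁ hα hφm hφ ht
    _ ≤ |σ| * (K * (-t) ^ (H - 1/2) + 1 / 2 ^ (H - 1/2) * (-t) ^ (H - 1/2)
        + (1/2 - H)⁻¹ * (-t) ^ (H - 1/2)) := by gcongr ?_ * ?_; linarith
    _ = _ := by ring

lemma abs_marchaudDeriv_Psi_le_of_lt_neg_one {β : ℝ} (hH₀ : -1/2 < H) (hH₁ : H < 1/2)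
    (hα : 0 < α) (hφm : Measurable φ) (hφ : ∀ v, φ v ∈ Icc (-β) (-α)) (ht₁ : t < -1) :
    |marchaudDeriv H (Psi σ φ) t| ≤
      |σ| * (8 / α ^ 2 * (∫ ξ in Ioi 0, ξ ^ (H - 3/2) * min (β * ξ) 1)
        + 1 / 2 ^ (H - 3/2) / α + α⁻¹ * (1/2 - H)⁻¹) * (-t) ^ (H - 3/2) := by
  set K := ∫ ξ in Ioi 0, ξ ^ (H - 3/2) * min (β * ξ) 1
  have hβ : 0 ≤ β := by linarith [(hφ 0).1, (hφ 0).2]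
  have hK : 0 ≤ K := setIntegral_rpow_mul_min_nonneg hβ
  have hx : 0 < -t := by linarith
  have e₁ : exp (α * t / 2) * K ≤ 8 / α ^ 2 * K * (-t) ^ (H - 3/2) := by
    have h := exp_neg_mul_le_mul_rpow (c := α / 2) (p := H - 3/2) (by positivity)
      (by linarith : 1 ≤ -t) (by linarith)
    rw [show -(α / 2 * -t) = α * t / 2 by ring, show 2 / (α / 2) ^ 2 = 8 / α ^ 2 by ring] at h
    nlinarith
  have e₂ : (-t / 2) ^ (H - 3/2) * ((1 - exp (α * t / 2)) / α) ≤
      1 / 2 ^ (H - 3/2) / α * (-t) ^ (H - 3/2) := by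
    have : (1 - exp (α * t / 2)) / α ≤ 1 / α := by gcongr; linarith [exp_pos (α * t / 2)]
    calc (-t / 2) ^ (H - 3/2) * ((1 - exp (α * t / 2)) / α)
        ≤ (-t / 2) ^ (H - 3/2) * (1 / α) := by gcongr
      _ = _ := by rw [div_rpow hx.le zero_le_two]; ring
  have e₃ : exp (α * t) * ((-t) ^ (H - 1/2) / (1/2 - H)) ≤
      α⁻¹ * (1/2 - H)⁻¹ * (-t) ^ (H - 3/2) := by
    have h := pow_mul_exp_neg_le hα hx.le 1
    rw [pow_one, Nat.factorial_one, Nat.cast_one, pow_one, show -(α * -t) = α * t by ring] at h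
    rw [show H - 1/2 = H - 3/2 + 1 by ring, rpow_add_one hx.ne']
    calc exp (α * t) * ((-t) ^ (H - 3/2) * -t / (1/2 - H))
        = -t * exp (α * t) * ((1/2 - H)⁻¹ * (-t) ^ (H - 3/2)) := by ring
      _ ≤ 1 / α * ((1/2 - H)⁻¹ * (-t) ^ (H - 3/2)) := by gcongr
      _ = _ := by ring
  calc |marchaudDeriv H (Psi σ φ) t| ≤ _ := abs_marchaudDeriv_Psi_le hH₀ hH₁ hα hφm hφ (by linarith)
    _ ≤ |σ| * (8 / α ^ 2 * K * (-t) ^ (H - 3/2) + 1 / 2 ^ (H - 3/2) / α * (-t) ^ (H - 3/2)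
        + α⁻¹ * (1/2 - H)⁻¹ * (-t) ^ (H - 3/2)) := by gcongr ?_ * ?_; linarith
    _ = _ := by ring

end Estimate

theorem stmt5 (H α σ : ℝ) (hH : H ∈ Set.Ioo (0:ℝ) (1/2)) (hα : 0 < α) (hσ : σ ≠ 0) :
    ∃ C : ℝ, 0 < C ∧ ∀ φ : ℝ → ℝ, Measurable φ →
      (∀ v : ℝ, φ v ∈ Set.Icc (-α⁻¹) (-α)) → ∀ t : ℝ, t < 0 →
      |∫ ξ in Set.Ioi (0:ℝ), ξ ^ (H - 3/2) * (Psi σ φ t - Psi σ φ (t + ξ))| ≤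
        C * ((-t) ^ (H - 1/2) * Set.indicator (Set.Ico (-1:ℝ) 0) (fun _ => (1:ℝ)) t
          + (-t) ^ (H - 3/2) * Set.indicator (Set.Iio (-1:ℝ)) (fun _ => (1:ℝ)) t) := by
  obtain ⟨hH₀, hH₁⟩ := hH
  set K := ∫ ξ in Ioi 0, ξ ^ (H - 3/2) * min (α⁻¹ * ξ) 1
  have hK : 0 ≤ K := setIntegral_rpow_mul_min_nonneg (inv_pos.2 hα).le
  have hD : 0 < (1/2 - H)⁻¹ := inv_pos.2 (sub_pos.2 hH₁)
  set C₀ := K + 1 / 2 ^ (H - 1/2) + (1/2 - H)⁻¹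
  set C₁ := 8 / α ^ 2 * K + 1 / 2 ^ (H - 3/2) / α + α⁻¹ * (1/2 - H)⁻¹
  have hC₀ : 0 < C₀ := add_pos_of_nonneg_of_pos (add_nonneg hK (by positivity)) hD
  have hC₁ : 0 < C₁ := add_pos_of_nonneg_of_pos
    (add_nonneg (mul_nonneg (by positivity) hK) (by positivity)) (mul_pos (inv_pos.2 hα) hD)
  refine ⟨|σ| * (C₀ + C₁), by positivity, fun φ hφm hφ t ht => ?_⟩
  rcases le_or_gt (-1) t with ht₁ | ht₁
  · rw [indicator_of_mem (show t ∈ Ico (-1) 0 from ⟨ht₁, ht⟩),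
      indicator_of_notMem (show t ∉ Iio (-1) from not_lt.2 ht₁), mul_one, mul_zero, add_zero]
    refine (abs_marchaudDeriv_Psi_le_of_neg_one_le (by linarith) hH₁ hα hφm hφ ht₁ ht).trans ?_
    exact mul_le_mul_of_nonneg_right
      (mul_le_mul_of_nonneg_left (le_add_of_nonneg_right hC₁.le) (abs_nonneg σ))
      (rpow_nonneg (by linarith) _)
  · rw [indicator_of_notMem (show t ∉ Ico (-1) 0 from fun h => not_le.2 ht₁ h.1),
      indicator_of_mem (show t ∈ Iio (-1) from ht₁), mul_one, mul_zero, zero_add]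
    refine (abs_marchaudDeriv_Psi_le_of_lt_neg_one (by linarith) hH₁ hα hφm hφ ht₁).trans ?_
    exact mul_le_mul_of_nonneg_right
      (mul_le_mul_of_nonneg_left (le_add_of_nonneg_left hC₀.le) (abs_nonneg σ))
      (rpow_nonneg (by linarith) _)
end

section
/- Let H ∈ (0,1/2) and let f : [0,∞) → [0,∞] be measurable. Then (as integrals with values in [0,∞]) ∫₀^∞ ∫₀^∞ r^{−H−1/2} u^{−H−1/2} f(|r−u|) du dr = 2·( ∫₁^∞ (u−1)^{−H−1/2} u^{−H−1/2} du )·( ∫₀^∞ f(r)·r^{−2H} dr ). -/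
open MeasureTheory Set Function
open scoped ENNReal

/-!
The diagonal is null and the integrand is symmetric in `(r, u)`, so the integral over the
quadrant is twice the integral over `{r < u}`. Writing `u = r + v` and applying Tonelli leaves
`∫₀^∞ r^a (v + r)^a dr` as the weight of `f v`; the substitution `r = v (u - 1)` shows it equals
`v^(2a+1) ∫₁^∞ (u - 1)^a u^a du`.
-/

theorem setLIntegral_Ioi_comp_mul_add {c : ℝ} (hc : 0 < c) (d t : ℝ) (g : ℝ → ℝ≥0∞) :
    ∫⁻ x in Ioi (c * t + d), g x = ENNReal.ofReal c * ∫⁻ x in Ioi t, g (c * x + d) := by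
  have hderiv (x : ℝ) : HasDerivAt (fun x ↦ c * x + d) c x := by
    simpa using ((hasDerivAt_id x).const_mul c).add_const d
  rw [← image_add_const_Ioi, ← image_mul_left_Ioi hc, image_image,
    lintegral_image_eq_lintegral_abs_deriv_mul measurableSet_Ioi
      (fun x _ ↦ (hderiv x).hasDerivWithinAt) (fun x _ y _ h ↦ by simpa [hc.ne'] using h),
    abs_of_pos hc, lintegral_const_mul' _ _ ENNReal.ofReal_ne_top]

theorem setLIntegral_Ioi_comp_add_right (d : ℝ) (g : ℝ → ℝ≥0∞) :
    ∫⁻ x in Ioi d, g x = ∫⁻ x in Ioi 0, g (x + d) := by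
  simpa using setLIntegral_Ioi_comp_mul_add one_pos d 0 g

theorem setLIntegral_Ioi_rpow_mul_add_rpow (a : ℝ) {v : ℝ} (hv : 0 < v) :
    ∫⁻ r in Ioi 0, ENNReal.ofReal (r ^ a * (v + r) ^ a)
      = ENNReal.ofReal (v ^ (2 * a + 1)) *
          ∫⁻ u in Ioi 1, ENNReal.ofReal ((u - 1) ^ a * u ^ a) := by
  have hscale : ∀ u ∈ Ioi (1 : ℝ), ENNReal.ofReal ((v * u + -v) ^ a * (v + (v * u + -v)) ^ a)
      = ENNReal.ofReal (v ^ (2 * a)) * ENNReal.ofReal ((u - 1) ^ a * u ^ a) := by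
    intro u hu
    have hu0 : (0 : ℝ) ≤ u - 1 := by linarith [mem_Ioi.1 hu]
    rw [← ENNReal.ofReal_mul (by positivity), show v * u + -v = v * (u - 1) by ring,
      show v + v * (u - 1) = v * u by ring, Real.mul_rpow hv.le hu0,
      Real.mul_rpow hv.le (by linarith), mul_comm 2 a, Real.rpow_mul hv.le, Real.rpow_two]
    ring_nf
  rw [← show v * 1 + -v = 0 by ring, setLIntegral_Ioi_comp_mul_add hv,
    setLIntegral_congr_fun measurableSet_Ioi hscale,
    lintegral_const_mul' _ _ ENNReal.ofReal_ne_top, ← mul_assoc, ← ENNReal.ofReal_mul hv.le,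
    Real.rpow_add hv, Real.rpow_one, mul_comm v]

theorem setLIntegral_Ioi_eq_lintegral_indicator {μ : Measure ℝ} (Φ : ℝ → ℝ → ℝ≥0∞) (r : ℝ) :
    ∫⁻ u in Ioi r, Φ r u ∂μ = ∫⁻ u, {p : ℝ × ℝ | p.1 < p.2}.indicator (uncurry Φ) (r, u) ∂μ := by
  rw [← lintegral_indicator measurableSet_Ioi]
  rfl

theorem lintegral_lintegral_eq_two_mul_of_symm {μ : Measure ℝ} [SFinite μ] [NullSingletonClass μ]
    {Φ : ℝ → ℝ → ℝ≥0∞} (hΦ : Measurable (uncurry Φ)) (hsymm : ∀ r u, Φ r u = Φ u r) :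
    ∫⁻ r, ∫⁻ u, Φ r u ∂μ ∂μ = 2 * ∫⁻ r, ∫⁻ u in Ioi r, Φ r u ∂μ ∂μ := by
  have hΨ : Measurable ({p : ℝ × ℝ | p.1 < p.2}.indicator (uncurry Φ)) :=
    hΦ.indicator (measurableSet_lt measurable_fst measurable_snd)
  have hupper : Measurable fun r ↦ ∫⁻ u in Ioi r, Φ r u ∂μ := by
    simp_rw [setLIntegral_Ioi_eq_lintegral_indicator]
    exact hΨ.lintegral_prod_right'
  have hsplit (r : ℝ) : ∫⁻ u, Φ r u ∂μ = ∫⁻ u in Ioi r, Φ r u ∂μ + ∫⁻ u in Iio r, Φ r u ∂μ := by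
    rw [Measure.restrict_congr_set Iio_ae_eq_Iic, ← compl_Ioi,
      lintegral_add_compl _ measurableSet_Ioi]
  have hlower : ∫⁻ r, ∫⁻ u in Iio r, Φ r u ∂μ ∂μ = ∫⁻ r, ∫⁻ u in Ioi r, Φ r u ∂μ ∂μ := by
    calc ∫⁻ r, ∫⁻ u in Iio r, Φ r u ∂μ ∂μ
        = ∫⁻ r, ∫⁻ u, {p : ℝ × ℝ | p.1 < p.2}.indicator (uncurry Φ) (u, r) ∂μ ∂μ := by
          refine lintegral_congr fun r ↦ ?_
          rw [← lintegral_indicator measurableSet_Iio]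
          refine lintegral_congr fun u ↦ ?_
          simp [indicator, uncurry, hsymm r u]
      _ = ∫⁻ u, ∫⁻ r, {p : ℝ × ℝ | p.1 < p.2}.indicator (uncurry Φ) (u, r) ∂μ ∂μ :=
          lintegral_lintegral_swap (hΨ.comp measurable_swap).aemeasurable
      _ = ∫⁻ r, ∫⁻ u in Ioi r, Φ r u ∂μ ∂μ := by
          simp_rw [setLIntegral_Ioi_eq_lintegral_indicator]
  simp_rw [hsplit]
  rw [lintegral_add_left hupper, hlower, two_mul]

theorem lintegral_Ioi_rpow_mul_rpow_mul_abs_sub (a : ℝ) {f : ℝ → ℝ≥0∞} (hf : Measurable f) :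
    ∫⁻ r in Ioi 0, ∫⁻ u in Ioi 0, ENNReal.ofReal (r ^ a * u ^ a) * f |r - u|
      = 2 * (∫⁻ u in Ioi 1, ENNReal.ofReal ((u - 1) ^ a * u ^ a)) *
          ∫⁻ r in Ioi 0, f r * ENNReal.ofReal (r ^ (2 * a + 1)) := by
  set K := ∫⁻ u in Ioi 1, ENNReal.ofReal ((u - 1) ^ a * u ^ a)
  calc ∫⁻ r in Ioi 0, ∫⁻ u in Ioi 0, ENNReal.ofReal (r ^ a * u ^ a) * f |r - u|
      = 2 * ∫⁻ r in Ioi 0, ∫⁻ u in Ioi r, ENNReal.ofReal (r ^ a * u ^ a) * f |r - u| := by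
        rw [lintegral_lintegral_eq_two_mul_of_symm (by fun_prop)
          (fun r u ↦ by rw [mul_comm (r ^ a), abs_sub_comm])]
        congr 1
        refine setLIntegral_congr_fun measurableSet_Ioi fun r hr ↦ ?_
        rw [Measure.restrict_restrict measurableSet_Ioi, Ioi_inter_Ioi, sup_eq_left.2 hr.le]
    _ = 2 * ∫⁻ r in Ioi 0, ∫⁻ v in Ioi 0, ENNReal.ofReal (r ^ a * (v + r) ^ a) * f v := by
        congr 1
        refine lintegral_congr fun r ↦ ?_
        rw [setLIntegral_Ioi_comp_add_right]
        refine setLIntegral_congr_fun measurableSet_Ioi fun v hv ↦ ?_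
        rw [show r - (v + r) = -v by ring, abs_neg, abs_of_pos hv]
    _ = 2 * ∫⁻ v in Ioi 0, f v * (ENNReal.ofReal (v ^ (2 * a + 1)) * K) := by
        rw [lintegral_lintegral_swap (by fun_prop)]
        congr 1
        refine setLIntegral_congr_fun measurableSet_Ioi fun v hv ↦ ?_
        rw [lintegral_mul_const _ (by fun_prop), setLIntegral_Ioi_rpow_mul_add_rpow a hv, mul_comm]
    _ = 2 * K * ∫⁻ r in Ioi 0, f r * ENNReal.ofReal (r ^ (2 * a + 1)) := by
        simp_rw [← mul_assoc]
        rw [lintegral_mul_const _ (by fun_prop)]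
        ring

theorem stmt7_general (H : ℝ) (f : ℝ → ENNReal) (hf : Measurable f) :
    (∫⁻ r in Set.Ioi (0:ℝ), ∫⁻ u in Set.Ioi (0:ℝ),
        ENNReal.ofReal (r ^ (-H - 1/2) * u ^ (-H - 1/2)) * f (|r - u|)) =
      2 * (∫⁻ u in Set.Ioi (1:ℝ), ENNReal.ofReal ((u - 1) ^ (-H - 1/2) * u ^ (-H - 1/2))) *
        (∫⁻ r in Set.Ioi (0:ℝ), f r * ENNReal.ofReal (r ^ (-2 * H))) := by
  rw [lintegral_Ioi_rpow_mul_rpow_mul_abs_sub _ hf, show 2 * (-H - 1 / 2) + 1 = -2 * H by ring]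

theorem stmt7 (H : ℝ) (hH : H ∈ Set.Ioo (0:ℝ) (1/2)) (f : ℝ → ENNReal) (hf : Measurable f) :
    (∫⁻ r in Set.Ioi (0:ℝ), ∫⁻ u in Set.Ioi (0:ℝ),
        ENNReal.ofReal (r ^ (-H - 1/2) * u ^ (-H - 1/2)) * f (|r - u|)) =
      2 * (∫⁻ u in Set.Ioi (1:ℝ), ENNReal.ofReal ((u - 1) ^ (-H - 1/2) * u ^ (-H - 1/2))) *
        (∫⁻ r in Set.Ioi (0:ℝ), f r * ENNReal.ofReal (r ^ (-2 * H))) :=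
  stmt7_general H f hf
end

section
/- Let H ∈ (0,1/2) and let c : [0,∞) → ℝ be measurable. Suppose there is C > 0 such that |c(t)| ≤ C for all t ≥ 0 and |c(t)| ≤ C·t^{H−3/2} for all t ≥ 1. Then ∫₀^∞ ∫₀^∞ r^{−H−1/2} u^{−H−1/2} |c(|r−u|)| du dr < ∞. -/
open MeasureTheory Set ENNReal

/-! Split `u ↦ u ^ (-H - 1/2)` on `(0, ∞)` as `f₁ + f₂`, with `f₁` its restriction to `(0, 1]`,
which is integrable, and `f₂` its restriction to `(1, ∞)`, which is bounded and square integrable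
because `2H + 1 > 1`. As `(1 + t)/2` is at most `1` for `t ≤ 1` and at most `t` for `t ≥ 1`,
the two bounds on `c` combine into `|c(|t|)| ≤ k t` for the even kernel
`k t = C ((1 + |t|)/2) ^ (H - 3/2)`, which is bounded and integrable because `H - 3/2 < -1`.
Expanding `∫∫ f(r) f(u) k(r - u)` gives four terms: `f₁ × f₁` is bounded by `sup k ‖f₁‖₁²`,
`f₁ × f₂` by `sup f₂ ‖f₁‖₁ ‖k‖₁`, and `f₂ × f₂` by `2 ‖f₂‖₂² ‖k‖₁` using
`f₂(r) f₂(u) ≤ f₂(r)² + f₂(u)²` and the symmetry of `k`. -/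

noncomputable def convForm (k f g : ℝ → ℝ≥0∞) : ℝ≥0∞ :=
  ∫⁻ r, ∫⁻ u, f r * g u * k (r - u)

section convForm

variable {k f g : ℝ → ℝ≥0∞}

theorem convForm_le_of_right_le (hf : Measurable f) (hk : Measurable k) {N : ℝ≥0∞}
    (hg : ∀ u, g u ≤ N) : convForm k f g ≤ N * (∫⁻ r, f r) * ∫⁻ t, k t := by
  calc convForm k f g ≤ ∫⁻ r, ∫⁻ u, f r * N * k (r - u) :=
        lintegral_mono fun r => lintegral_mono fun u => by gcongr; exact hg u
    _ = ∫⁻ r, f r * (N * ∫⁻ t, k t) := by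
        refine lintegral_congr fun r => ?_
        rw [lintegral_const_mul _ (by fun_prop), lintegral_sub_left_eq_self k r, mul_assoc]
    _ = N * (∫⁻ r, f r) * ∫⁻ t, k t := by
        rw [lintegral_mul_const _ hf]; ring

theorem convForm_le_of_kernel_le (hf : Measurable f) (hg : Measurable g) {M : ℝ≥0∞}
    (hk : ∀ t, k t ≤ M) : convForm k f g ≤ M * (∫⁻ r, f r) * ∫⁻ u, g u := by
  calc convForm k f g ≤ ∫⁻ r, ∫⁻ u, f r * M * g u :=
        lintegral_mono fun r => lintegral_mono fun u => by
          rw [mul_right_comm]; gcongr; exact hk _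
    _ = ∫⁻ r, f r * (M * ∫⁻ u, g u) := by
        refine lintegral_congr fun r => ?_
        rw [lintegral_const_mul _ hg, mul_assoc]
    _ = M * (∫⁻ r, f r) * ∫⁻ u, g u := by
        rw [lintegral_mul_const _ hf]; ring

theorem convForm_comm (hf : Measurable f) (hg : Measurable g) (hk : Measurable k)
    (hk_neg : ∀ t, k (-t) = k t) : convForm k f g = convForm k g f := by
  unfold convForm
  rw [lintegral_lintegral_swap (by fun_prop)]
  refine lintegral_congr fun u => lintegral_congr fun r => ?_
  rw [← hk_neg, neg_sub]; ring

theorem convForm_add_left {f₁ f₂ : ℝ → ℝ≥0∞} (hf₁ : Measurable f₁)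
    (hg : Measurable g) (hk : Measurable k) :
    convForm k (f₁ + f₂) g = convForm k f₁ g + convForm k f₂ g := by
  unfold convForm
  simp_rw [Pi.add_apply, add_mul]
  rw [← lintegral_add_left (by fun_prop)]
  exact lintegral_congr fun r => lintegral_add_left (by fun_prop) _

theorem convForm_add_right {g₁ g₂ : ℝ → ℝ≥0∞} (hf : Measurable f) (hg₁ : Measurable g₁)
    (hk : Measurable k) :
    convForm k f (g₁ + g₂) = convForm k f g₁ + convForm k f g₂ := by
  unfold convForm
  simp_rw [Pi.add_apply, mul_add, add_mul]
  rw [← lintegral_add_left (by fun_prop)]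
  exact lintegral_congr fun r => lintegral_add_left (by fun_prop) _

theorem convForm_self_le (hf : Measurable f) (hk : Measurable k) (hk_neg : ∀ t, k (-t) = k t) :
    convForm k f f ≤ 2 * (∫⁻ r, f r ^ 2) * ∫⁻ t, k t := by
  have hf2 : Measurable fun r => f r ^ 2 := hf.pow_const 2
  have amgm (a b : ℝ≥0∞) : a * b ≤ a ^ 2 + b ^ 2 := by
    rcases le_total a b with h | h
    · calc a * b ≤ b ^ 2 := by rw [sq]; gcongr
        _ ≤ a ^ 2 + b ^ 2 := le_add_self
    · calc a * b ≤ a ^ 2 := by rw [sq]; gcongr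
        _ ≤ a ^ 2 + b ^ 2 := le_self_add
  calc convForm k f f
      ≤ ∫⁻ r, ∫⁻ u, (f r ^ 2 * 1 * k (r - u) + 1 * f u ^ 2 * k (r - u)) :=
        lintegral_mono fun r => lintegral_mono fun u => by
          rw [← add_mul, mul_one, one_mul]; gcongr; exact amgm _ _
    _ = convForm k (fun r => f r ^ 2) 1 + convForm k 1 (fun r => f r ^ 2) := by
        unfold convForm
        rw [← lintegral_add_left (by fun_prop)]
        exact lintegral_congr fun r => lintegral_add_left (by fun_prop) _
    _ = 2 * convForm k (fun r => f r ^ 2) 1 := by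
        rw [convForm_comm (f := 1) measurable_one hf2 hk hk_neg, two_mul]
    _ ≤ 2 * (1 * (∫⁻ r, f r ^ 2) * ∫⁻ t, k t) := by
        gcongr; exact convForm_le_of_right_le hf2 hk fun _ => le_rfl
    _ = 2 * (∫⁻ r, f r ^ 2) * ∫⁻ t, k t := by ring

theorem convForm_add_self_lt_top {f₁ f₂ : ℝ → ℝ≥0∞} (hf₁ : Measurable f₁) (hf₂ : Measurable f₂)
    (hk : Measurable k) (hk_neg : ∀ t, k (-t) = k t) {M N : ℝ≥0∞} (hM : M ≠ ∞) (hN : N ≠ ∞)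
    (hk_le : ∀ t, k t ≤ M) (hf₂_le : ∀ x, f₂ x ≤ N) (hf₁_int : ∫⁻ x, f₁ x ≠ ∞)
    (hf₂_sq : ∫⁻ x, f₂ x ^ 2 ≠ ∞) (hk_int : ∫⁻ t, k t ≠ ∞) :
    convForm k (f₁ + f₂) (f₁ + f₂) < ∞ := by
  rw [convForm_add_left hf₁ (hf₁.add hf₂) hk, convForm_add_right hf₁ hf₁ hk,
    convForm_add_right hf₂ hf₁ hk, convForm_comm hf₂ hf₁ hk hk_neg]
  have h₁₁ : convForm k f₁ f₁ < ∞ :=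
    (convForm_le_of_kernel_le hf₁ hf₁ hk_le).trans_lt (by finiteness)
  have h₁₂ : convForm k f₁ f₂ < ∞ :=
    (convForm_le_of_right_le hf₁ hk hf₂_le).trans_lt (by finiteness)
  have h₂₂ : convForm k f₂ f₂ < ∞ := (convForm_self_le hf₂ hk hk_neg).trans_lt (by finiteness)
  finiteness

end convForm

noncomputable def rpowOn (s : Set ℝ) (p : ℝ) : ℝ → ℝ≥0∞ :=
  s.indicator fun u => ENNReal.ofReal (u ^ p)

section rpowOn

variable {s : Set ℝ} {p : ℝ}

theorem measurable_rpowOn (hs : MeasurableSet s) : Measurable (rpowOn s p) :=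
  (by fun_prop : Measurable fun u : ℝ => ENNReal.ofReal (u ^ p)).indicator hs

theorem ofReal_rpow_eq_rpowOn_add {r : ℝ} (hr : 0 < r) :
    ENNReal.ofReal (r ^ p) = (rpowOn (Ioc 0 1) p + rpowOn (Ioi 1) p) r := by
  have h := congrFun (indicator_union_of_disjoint (Ioc_disjoint_Ioi_same (a := 0) (b := 1))
    fun u : ℝ => ENNReal.ofReal (u ^ p)) r
  rwa [Ioc_union_Ioi_eq_Ioi zero_le_one, indicator_of_mem (mem_Ioi.2 hr)] at h

theorem rpowOn_Ioi_one_le_one (hp : p ≤ 0) (x : ℝ) : rpowOn (Ioi 1) p x ≤ 1 :=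
  indicator_apply_le' (fun hx => ofReal_le_one.2 (Real.rpow_le_one_of_one_le_of_nonpos
    (le_of_lt hx) hp)) fun _ => zero_le_one

theorem lintegral_rpowOn_Ioc_lt_top (hp : -1 < p) : ∫⁻ x, rpowOn (Ioc 0 1) p x < ∞ := by
  rw [rpowOn, lintegral_indicator measurableSet_Ioc]
  exact ((intervalIntegrable_iff_integrableOn_Ioc_of_le zero_le_one).1
    (intervalIntegral.intervalIntegrable_rpow' hp)).setLIntegral_lt_top

theorem lintegral_rpowOn_Ioi_sq_lt_top (hp : p < -1 / 2) :
    ∫⁻ x, rpowOn (Ioi 1) p x ^ 2 < ∞ := by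
  have hsq : (fun x => rpowOn (Ioi 1) p x ^ 2) = rpowOn (Ioi 1) (p * 2) := by
    ext x
    by_cases hx : x ∈ Ioi 1
    · simp only [rpowOn, indicator_of_mem hx]
      rw [← ofReal_pow (Real.rpow_nonneg (zero_le_one.trans (le_of_lt hx)) _),
        ← Real.rpow_mul_natCast (zero_le_one.trans (le_of_lt hx))]
      norm_num
    · simp [rpowOn, indicator_of_notMem hx]
  rw [hsq, rpowOn, lintegral_indicator measurableSet_Ioi]
  exact ((integrableOn_Ioi_rpow_iff zero_lt_one).2 (by linarith)).setLIntegral_lt_top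

end rpowOn

noncomputable def decayKernel (C e t : ℝ) : ℝ≥0∞ :=
  ENNReal.ofReal (C * ((1 + |t|) / 2) ^ e)

section decayKernel

variable {C e : ℝ}

theorem measurable_decayKernel : Measurable (decayKernel C e) := by
  unfold decayKernel; fun_prop

theorem decayKernel_neg (t : ℝ) : decayKernel C e (-t) = decayKernel C e t := by
  simp only [decayKernel, abs_neg]

theorem decayKernel_le (hC : 0 ≤ C) (he : e ≤ 0) (t : ℝ) :
    decayKernel C e t ≤ ENNReal.ofReal (C * (1 / 2) ^ e) :=
  ofReal_le_ofReal <| mul_le_mul_of_nonneg_left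
    (Real.rpow_le_rpow_of_nonpos (by norm_num) (by linarith [abs_nonneg t]) he) hC

theorem lintegral_decayKernel_lt_top (he : e < -1) : ∫⁻ t, decayKernel C e t < ∞ := by
  have hint : Integrable fun t : ℝ => (1 + ‖t‖) ^ (-(-e)) :=
    integrable_one_add_norm (by simp; linarith)
  refine Integrable.lintegral_lt_top ((hint.div_const (2 ^ e)).const_mul C |>.congr ?_)
  refine Filter.Eventually.of_forall fun t => ?_
  simp only [neg_neg, Real.norm_eq_abs]
  rw [Real.div_rpow (by positivity) zero_le_two]

theorem ofReal_abs_le_decayKernel {c : ℝ → ℝ} (hC : 0 ≤ C) (he : e ≤ 0)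
    (hb0 : ∀ t, 0 ≤ t → |c t| ≤ C) (hb1 : ∀ t, 1 ≤ t → |c t| ≤ C * t ^ e) (x : ℝ) :
    ENNReal.ofReal |c (|x|)| ≤ decayKernel C e x := by
  refine ofReal_le_ofReal ?_
  rcases le_total |x| 1 with hx | hx
  · refine (hb0 _ (abs_nonneg x)).trans (le_mul_of_one_le_right hC ?_)
    exact Real.one_le_rpow_of_pos_of_le_one_of_nonpos (by positivity) (by linarith) he
  · refine (hb1 _ hx).trans (mul_le_mul_of_nonneg_left ?_ hC)
    exact Real.rpow_le_rpow_of_nonpos (by positivity) (by linarith) he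

end decayKernel

theorem stmt8_general (H : ℝ) (hH : H ∈ Set.Ioo (0:ℝ) (1/2)) (c : ℝ → ℝ)
    (C : ℝ) (hC : 0 < C) (hb0 : ∀ t : ℝ, 0 ≤ t → |c t| ≤ C)
    (hb1 : ∀ t : ℝ, 1 ≤ t → |c t| ≤ C * t ^ (H - 3/2)) :
    (∫⁻ r in Set.Ioi (0:ℝ), ∫⁻ u in Set.Ioi (0:ℝ),
        ENNReal.ofReal (r ^ (-H - 1/2) * u ^ (-H - 1/2) * |c (|r - u|)|)) < ⊤ := by
  obtain ⟨hH₀, hH₁⟩ := hH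
  set f := rpowOn (Ioc 0 1) (-H - 1/2) + rpowOn (Ioi 1) (-H - 1/2)
  have hf : convForm (decayKernel C (H - 3/2)) f f < ∞ :=
    convForm_add_self_lt_top (measurable_rpowOn measurableSet_Ioc)
      (measurable_rpowOn measurableSet_Ioi) measurable_decayKernel decayKernel_neg ofReal_ne_top
      one_ne_top (decayKernel_le hC.le (by linarith)) (rpowOn_Ioi_one_le_one (by linarith))
      (lintegral_rpowOn_Ioc_lt_top (by linarith)).ne
      (lintegral_rpowOn_Ioi_sq_lt_top (by linarith)).ne
      (lintegral_decayKernel_lt_top (by linarith)).ne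
  refine lt_of_le_of_lt ?_ hf
  calc _ ≤ ∫⁻ r in Ioi 0, ∫⁻ u in Ioi 0, f r * f u * decayKernel C (H - 3/2) (r - u) :=
        setLIntegral_mono' measurableSet_Ioi fun r hr =>
          setLIntegral_mono' measurableSet_Ioi fun u hu => by
            have hr' : 0 ≤ r ^ (-H - 1/2) := Real.rpow_nonneg (le_of_lt hr) _
            have hu' : 0 ≤ u ^ (-H - 1/2) := Real.rpow_nonneg (le_of_lt hu) _
            rw [ofReal_mul (mul_nonneg hr' hu'), ofReal_mul hr', ofReal_rpow_eq_rpowOn_add hr,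
              ofReal_rpow_eq_rpowOn_add hu]
            gcongr
            exact ofReal_abs_le_decayKernel hC.le (by linarith) hb0 hb1 (r - u)
    _ ≤ convForm (decayKernel C (H - 3/2)) f f :=
        (setLIntegral_le_lintegral _ _).trans
          (lintegral_mono fun r => setLIntegral_le_lintegral _ _)

theorem stmt8 (H : ℝ) (hH : H ∈ Set.Ioo (0:ℝ) (1/2)) (c : ℝ → ℝ) (hc : Measurable c)
    (C : ℝ) (hC : 0 < C) (hb0 : ∀ t : ℝ, 0 ≤ t → |c t| ≤ C)
    (hb1 : ∀ t : ℝ, 1 ≤ t → |c t| ≤ C * t ^ (H - 3/2)) :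
    (∫⁻ r in Set.Ioi (0:ℝ), ∫⁻ u in Set.Ioi (0:ℝ),
        ENNReal.ofReal (r ^ (-H - 1/2) * u ^ (-H - 1/2) * |c (|r - u|)|)) < ⊤ :=
  stmt8_general H hH c C hC hb0 hb1
end

section
/- Let H ∈ (0,1/2) and let c : [0,∞) → ℝ be measurable with ∫₀^∞ ∫₀^∞ r^{−H−1/2} u^{−H−1/2} |c(|r−u|)| du dr < ∞. Then lim_{T→∞} (1/T) ∫₀^T ∫₀^t ∫₀^t r^{−H−1/2} u^{−H−1/2} · (1 − (1 − r/t)^{1/2−H}) · (1 − (1 − u/t)^{1/2−H}) · c(|r−u|) du dr dt = 0. -/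
/-!
Writing `w(s) = 1 - (1 - s)^(1/2 - H)` and extending it by zero outside `(0, 1]`, the inner double
integral at time `t` is `∫∫_{(0,∞)²} w(r/t) w(u/t) F(r, u)` with
`F(r, u) = r^(-H-1/2) u^(-H-1/2) c(|r - u|)` integrable by hypothesis. Since `0 ≤ w ≤ 1` and
`w(s) → 0` as `s → 0`, dominated convergence sends this `φ(t)` to `0` as `t → ∞`. It is bounded
by `∫∫ |F|`, so its Cesàro mean `(1/T) ∫_0^T φ = ∫_0^1 φ(Ts) ds` tends to `0` by dominated
convergence again.
-/

open MeasureTheory Filter Set Topology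

theorem tendsto_smul_setIntegral_Ioc_of_tendsto_zero {E : Type*} [NormedAddCommGroup E]
    [NormedSpace ℝ E] {φ : ℝ → E} {M : ℝ} (hφm : StronglyMeasurable φ) (hφM : ∀ t, ‖φ t‖ ≤ M)
    (hφ : Tendsto φ atTop (𝓝 0)) :
    Tendsto (fun T : ℝ => (1 / T) • ∫ t in Ioc 0 T, φ t) atTop (𝓝 0) := by
  have hrescale : ∀ᶠ T : ℝ in atTop,
      ∫ s in Ioc 0 1, φ (T * s) = (1 / T) • ∫ t in Ioc 0 T, φ t := by
    filter_upwards [eventually_gt_atTop 0] with T hT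
    rw [← intervalIntegral.integral_of_le zero_le_one, intervalIntegral.integral_comp_mul_left φ
      hT.ne', intervalIntegral.integral_of_le (by simpa using hT.le), mul_zero, mul_one, one_div]
  refine Tendsto.congr' hrescale ?_
  simpa using tendsto_integral_filter_of_dominated_convergence (fun _ => M)
    (.of_forall fun T => (hφm.comp_measurable (measurable_const_mul T)).aestronglyMeasurable)
    (.of_forall fun T => .of_forall fun s => hφM (T * s)) (integrable_const M)
    (ae_restrict_of_forall_mem measurableSet_Ioc fun s hs =>
      hφ.comp (tendsto_id.atTop_mul_const hs.1))

section RescaledWeight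

variable {μ : Measure (ℝ × ℝ)} {F : ℝ × ℝ → ℝ} {W : ℝ → ℝ}

theorem norm_weight_mul_weight_mul_le (hW : ∀ s, |W s| ≤ 1) (x y z : ℝ) :
    ‖W x * W y * z‖ ≤ ‖z‖ := by
  rw [norm_mul, norm_mul]
  exact mul_le_of_le_one_left (norm_nonneg _) (mul_le_one₀ (hW _) (norm_nonneg _) (hW _))

theorem tendsto_integral_rescaled_weight_mul (hF : Integrable F μ) (hWm : Measurable W)
    (hW : ∀ s, |W s| ≤ 1) (hW0 : Tendsto W (𝓝 0) (𝓝 0)) :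
    Tendsto (fun t => ∫ p, W (p.1 / t) * W (p.2 / t) * F p ∂μ) atTop (𝓝 0) := by
  have hlim : ∀ x : ℝ, Tendsto (fun t => W (x / t)) atTop (𝓝 0) := fun x =>
    hW0.comp (tendsto_const_nhds.div_atTop tendsto_id)
  simpa using tendsto_integral_filter_of_dominated_convergence (fun p => ‖F p‖)
    (.of_forall fun t => (((hWm.comp (measurable_fst.div_const t)).mul
      (hWm.comp (measurable_snd.div_const t))).aestronglyMeasurable.mul hF.1))
    (.of_forall fun t => .of_forall fun p => norm_weight_mul_weight_mul_le hW _ _ _) hF.norm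
    (.of_forall fun p => ((hlim p.1).mul (hlim p.2)).mul_const (F p))

theorem tendsto_average_integral_rescaled_weight_mul [SFinite μ] (hF : Integrable F μ)
    (hFm : Measurable F) (hWm : Measurable W) (hW : ∀ s, |W s| ≤ 1)
    (hW0 : Tendsto W (𝓝 0) (𝓝 0)) :
    Tendsto (fun T => (1 / T) * ∫ t in Ioc 0 T, ∫ p, W (p.1 / t) * W (p.2 / t) * F p ∂μ)
      atTop (𝓝 0) := by
  have hm : Measurable fun q : ℝ × (ℝ × ℝ) => W (q.2.1 / q.1) * W (q.2.2 / q.1) * F q.2 := by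
    fun_prop
  exact tendsto_smul_setIntegral_Ioc_of_tendsto_zero hm.stronglyMeasurable.integral_prod_right'
    (fun t => norm_integral_le_of_norm_le hF.norm
      (.of_forall fun p => norm_weight_mul_weight_mul_le hW _ _ _))
    (tendsto_integral_rescaled_weight_mul hF hWm hW hW0)

end RescaledWeight

noncomputable def boundaryWeight (α : ℝ) : ℝ → ℝ := (Ioc 0 1).indicator fun s => 1 - (1 - s) ^ α

namespace boundaryWeight

variable {α : ℝ}

@[fun_prop]
theorem measurable : Measurable (boundaryWeight α) :=
  (measurable_const.sub ((measurable_const.sub measurable_id).pow_const α)).indicator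
    measurableSet_Ioc

theorem abs_le_one (hα : 0 ≤ α) (s : ℝ) : |boundaryWeight α s| ≤ 1 := by
  by_cases hs : s ∈ Ioc 0 1
  · have h0 : 0 ≤ 1 - s := sub_nonneg.2 hs.2
    have h1 : (1 - s) ^ α ≤ 1 := Real.rpow_le_one h0 (by linarith [hs.1]) hα
    rw [boundaryWeight, indicator_of_mem hs, abs_le]
    constructor <;> linarith [Real.rpow_nonneg h0 α]
  · simp [boundaryWeight, indicator_of_notMem hs]

theorem tendsto_zero : Tendsto (boundaryWeight α) (𝓝 0) (𝓝 0) := by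
  have hcont : ContinuousAt (fun s : ℝ => 1 - (1 - s) ^ α) 0 := by fun_prop (disch := norm_num)
  refine squeeze_zero_norm (fun s => norm_indicator_le_norm_self _ s) ?_
  simpa using hcont.tendsto.norm

theorem setIntegral_Ioi_mul {t : ℝ} (ht : 0 < t) (g : ℝ → ℝ) :
    ∫ x in Ioi 0, boundaryWeight α (x / t) * g x = ∫ x in Ioc 0 t, (1 - (1 - x / t) ^ α) * g x := by
  have hindicator : ∀ x, boundaryWeight α (x / t) * g x =
      (Ioc 0 t).indicator (fun x => (1 - (1 - x / t) ^ α) * g x) x := by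
    intro x
    have hmem : x / t ∈ Ioc 0 1 ↔ x ∈ Ioc 0 t := by
      simp only [mem_Ioc, div_pos_iff_of_pos_right ht, div_le_one ht]
    by_cases hx : x ∈ Ioc 0 t
    · simp [boundaryWeight, indicator_of_mem hx, indicator_of_mem (hmem.2 hx)]
    · simp [boundaryWeight, indicator_of_notMem hx, indicator_of_notMem (mt hmem.1 hx)]
  simp_rw [hindicator, setIntegral_indicator measurableSet_Ioc, inter_comm, Ioc_inter_Ioi, max_self]

theorem integral_prod_mul {t : ℝ} (hα : 0 ≤ α) (ht : 0 < t) {F : ℝ × ℝ → ℝ}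
    (hF : Integrable F ((volume.restrict (Ioi 0)).prod (volume.restrict (Ioi 0)))) :
    ∫ p, boundaryWeight α (p.1 / t) * boundaryWeight α (p.2 / t) * F p
        ∂(volume.restrict (Ioi 0)).prod (volume.restrict (Ioi 0)) =
      ∫ r in Ioc 0 t, ∫ u in Ioc 0 t, (1 - (1 - r / t) ^ α) * (1 - (1 - u / t) ^ α) * F (r, u) := by
  have hW : ∀ x y, ‖boundaryWeight α x * boundaryWeight α y‖ ≤ 1 := fun x y => by
    simpa using norm_weight_mul_weight_mul_le (abs_le_one hα) x y 1
  rw [integral_prod _ (hF.bdd_mul (by fun_prop) (.of_forall fun p => hW _ _))]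
  simp_rw [mul_assoc, integral_const_mul, setIntegral_Ioi_mul ht]

end boundaryWeight

theorem integrable_rpow_mul_rpow_mul_of_lintegral_lt_top {a : ℝ} {k : ℝ × ℝ → ℝ}
    (hk : Measurable k)
    (h : ∫⁻ r in Ioi 0, ∫⁻ u in Ioi 0, ENNReal.ofReal (r ^ a * u ^ a * |k (r, u)|) < ⊤) :
    Integrable (fun p : ℝ × ℝ => p.1 ^ a * p.2 ^ a * k p)
      ((volume.restrict (Ioi 0)).prod (volume.restrict (Ioi 0))) := by
  refine ⟨(by fun_prop : Measurable _).aestronglyMeasurable, ?_⟩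
  rw [HasFiniteIntegral, lintegral_prod _ (by fun_prop)]
  refine lt_of_eq_of_lt (setLIntegral_congr_fun measurableSet_Ioi fun r hr =>
    setLIntegral_congr_fun measurableSet_Ioi fun u hu => ?_) h
  rw [← ofReal_norm, Real.norm_eq_abs, abs_mul, abs_mul,
    abs_of_pos (Real.rpow_pos_of_pos hr a), abs_of_pos (Real.rpow_pos_of_pos hu a)]

theorem stmt10 (H : ℝ) (hH : H ∈ Set.Ioo (0:ℝ) (1/2)) (c : ℝ → ℝ) (hc : Measurable c)
    (hint : (∫⁻ r in Set.Ioi (0:ℝ), ∫⁻ u in Set.Ioi (0:ℝ),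
        ENNReal.ofReal (r ^ (-H - 1/2) * u ^ (-H - 1/2) * |c (|r - u|)|)) < ⊤) :
    Filter.Tendsto (fun T : ℝ => (1 / T) * ∫ t in Set.Ioc (0:ℝ) T,
        ∫ r in Set.Ioc (0:ℝ) t, ∫ u in Set.Ioc (0:ℝ) t,
          r ^ (-H - 1/2) * u ^ (-H - 1/2) * (1 - (1 - r / t) ^ (1/2 - H)) *
            (1 - (1 - u / t) ^ (1/2 - H)) * c (|r - u|))
      Filter.atTop (nhds 0) := by
  have hα : 0 ≤ 1/2 - H := by linarith [hH.2]
  have hk : Measurable fun p : ℝ × ℝ => c |p.1 - p.2| := by fun_prop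
  have hF := integrable_rpow_mul_rpow_mul_of_lintegral_lt_top hk hint
  refine (tendsto_average_integral_rescaled_weight_mul hF (by fun_prop)
    boundaryWeight.measurable (boundaryWeight.abs_le_one hα)
    boundaryWeight.tendsto_zero).congr fun T => ?_
  congr 1
  refine setIntegral_congr_fun measurableSet_Ioc fun t ht => ?_
  rw [boundaryWeight.integral_prod_mul hα ht.1 hF]
  exact integral_congr_ae (.of_forall fun r => integral_congr_ae (.of_forall fun u => by ring))
end

section
/- Let H ∈ (1/4,1/2) and let c̃ : [0,∞) → [0,∞) be measurable with c̃(t) ≤ C for all t ≥ 0 and c̃(t) ≤ C·t^{H−3/2} for all t ≥ 1, for some C > 0. Then lim_{T→∞} T^{−2} ∫₀^T ∫₀^T ∫₀^{t₁} ∫₀^{t₁} ∫₀^{t₂} ∫₀^{t₂} c̃(|r₁−r₂|) · (t₁−r₁)^{−H−1/2} (t₁−u₁)^{−H−1/2} (t₂−r₂)^{−H−1/2} (t₂−u₂)^{−H−1/2} du₂ dr₂ du₁ dr₁ dt₂ dt₁ = 0. -/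
/-!
Integrating out `u₁` and `u₂` exactly turns the inner fourfold integral into
`(t₁ t₂)^{1/2-H} / (1/2-H)²` times `∫ (t₁-r₁)^p J(r₁) dr₁`, where `p = -H - 1/2` and
`J(r₁) = ∫ (t₂-r₂)^p c̃(|r₁-r₂|) dr₂`. Write `⟨y⟩ = max 1 |y|`. The basic estimate is that
`∫₀ᵗ (t-r)^α k(r) dr ≲ C ⟨t-x⟩^{-γ}` whenever `0 ≤ k(r) ≤ C ⟨x-r⟩^β`, `α > -1`, `γ ≥ 0`,
`α + γ ≤ 0`, `β + γ ≤ 0` and `α + β + γ < -1`; it comes from the pointwise bound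
`⟨u-v⟩^γ |u|^α ⟨v⟩^β ≤ 2^γ (|u|^α ⟨u⟩^{β+γ} + ⟨v⟩^{α+β+γ})`, whose right side is integrable.
Used with `γ = H + 1/2` it gives `J(r₁) ≲ ⟨t₂-r₁⟩^{-H-1/2}`, and used again with `γ = 1/2`
(this is where `H > 1/4` enters) it bounds the fourfold integral by `T^{1-2H} ⟨t₁-t₂⟩^{-1/2}`
for `t₁, t₂ ≤ T`. Integrating over `(0,T]²` costs `T^{3/2}`, so the normalised sixfold integral
is `O(T^{1/2-2H})`.
-/

open MeasureTheory Set Filter Real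

theorem integrableOn_Ioi_rpow_mul_max_one_rpow {a b : ℝ} (ha : -1 < a) (hab : a + b < -1) :
    IntegrableOn (fun y : ℝ => y ^ a * max 1 y ^ b) (Ioi 0) := by
  have h₀₁ : IntegrableOn (fun y : ℝ => y ^ a * max 1 y ^ b) (Ioc 0 1) :=
    (intervalIntegral.intervalIntegrable_rpow' (a := 0) (b := 1) ha).1.congr_fun
      (fun y hy => by simp [max_eq_left hy.2]) measurableSet_Ioc
  have h₁ : IntegrableOn (fun y : ℝ => y ^ a * max 1 y ^ b) (Ioi 1) :=
    (integrableOn_Ioi_rpow_of_lt hab one_pos).congr_fun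
      (fun y hy => by rw [max_eq_right (le_of_lt hy), ← rpow_add (one_pos.trans hy)])
      measurableSet_Ioi
  simpa [Ioc_union_Ioi_eq_Ioi zero_le_one] using h₀₁.union h₁

theorem integrable_abs_rpow_mul_max_one_abs_rpow {a b : ℝ} (ha : -1 < a) (hab : a + b < -1) :
    Integrable (fun y : ℝ => |y| ^ a * max 1 |y| ^ b) := by
  have hIoi : IntegrableOn (fun y : ℝ => |y| ^ a * max 1 |y| ^ b) (Ioi 0) :=
    (integrableOn_Ioi_rpow_mul_max_one_rpow ha hab).congr_fun
      (fun y hy => by simp only [abs_of_pos (mem_Ioi.1 hy)]) measurableSet_Ioi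
  have hIio : IntegrableOn (fun y : ℝ => |y| ^ a * max 1 |y| ^ b) (Iio 0) := by
    simpa using hIoi.comp_neg
  rw [← integrableOn_univ, ← Iic_union_Ioi (a := (0 : ℝ))]
  exact ((integrableOn_Iic_iff_integrableOn_Iio (by finiteness)).2 hIio).union hIoi

theorem setIntegral_comp_sub_left_le {f : ℝ → ℝ} (hf : Integrable f) (hf₀ : ∀ y, 0 ≤ f y)
    (s : Set ℝ) (x : ℝ) : ∫ r in s, f (x - r) ≤ ∫ y, f y :=
  (setIntegral_le_integral (hf.comp_sub_left x) (Eventually.of_forall fun _ => hf₀ _)).trans_eq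
    (integral_sub_left_eq_self f volume x)

theorem abs_rpow_mul_max_one_rpow_le {α β γ : ℝ} (hγ : 0 ≤ γ) (hαγ : α + γ ≤ 0)
    (hβγ : β + γ ≤ 0) (u v : ℝ) :
    |u| ^ α * max 1 |v| ^ β ≤ 2 ^ γ * max 1 |u - v| ^ (-γ) *
      (|u| ^ α * max 1 |u| ^ (β + γ) + max 1 |v| ^ (α + β + γ)) := by
  set m := max 1 |u|
  set n := max 1 |v|
  set d := max 1 |u - v|
  have hm : 1 ≤ m := le_max_left _ _
  have hn : 1 ≤ n := le_max_left _ _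
  have hd : 0 < d := one_pos.trans_le (le_max_left _ _)
  have hdmn : d ≤ m + n := max_le (by linarith) <|
    (abs_sub _ _).trans (add_le_add (le_max_right _ _) (le_max_right _ _))
  suffices key : d ^ γ * (|u| ^ α * n ^ β) ≤ 2 ^ γ * (|u| ^ α * m ^ (β + γ) + n ^ (α + β + γ)) by
    calc |u| ^ α * n ^ β = d ^ (-γ) * (d ^ γ * (|u| ^ α * n ^ β)) := by
          rw [← mul_assoc, ← rpow_add hd, neg_add_cancel, rpow_zero, one_mul]
      _ ≤ d ^ (-γ) * (2 ^ γ * (|u| ^ α * m ^ (β + γ) + n ^ (α + β + γ))) := by gcongr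
      _ = _ := by ring
  rcases le_total m n with hmn | hnm
  · calc d ^ γ * (|u| ^ α * n ^ β) ≤ (2 * n) ^ γ * (|u| ^ α * n ^ β) := by gcongr; linarith
      _ = 2 ^ γ * (|u| ^ α * n ^ (β + γ)) := by
          rw [mul_rpow zero_le_two (by linarith), rpow_add (by linarith)]; ring
      _ ≤ 2 ^ γ * (|u| ^ α * m ^ (β + γ)) := by
          gcongr 2 ^ γ * (_ * ?_); exact rpow_le_rpow_of_nonpos (by linarith) hmn hβγ
      _ ≤ 2 ^ γ * (|u| ^ α * m ^ (β + γ) + n ^ (α + β + γ)) := by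
          gcongr; exact le_add_of_nonneg_right (by positivity)
  · calc d ^ γ * (|u| ^ α * n ^ β) ≤ (2 * m) ^ γ * (|u| ^ α * n ^ β) := by gcongr; linarith
      _ = 2 ^ γ * (|u| ^ α * m ^ γ * n ^ β) := by rw [mul_rpow zero_le_two (by linarith)]; ring
      _ ≤ 2 ^ γ * (|u| ^ α * m ^ (β + γ) + n ^ (α + β + γ)) := by
          gcongr
          rcases le_total |u| 1 with hu | hu
          · have hm1 : m = 1 := max_eq_left hu
            have hn1 : n = 1 := le_antisymm (hnm.trans hm1.le) hn
            simp [hm1, hn1]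
          · have hmu : m = |u| := max_eq_right hu
            calc |u| ^ α * m ^ γ * n ^ β = m ^ (α + γ) * n ^ β := by
                  rw [hmu, rpow_add (by linarith)]
              _ ≤ n ^ (α + γ) * n ^ β := by
                  gcongr ?_ * _; exact rpow_le_rpow_of_nonpos (by linarith) hnm hαγ
              _ = n ^ (α + β + γ) := by rw [← rpow_add (by linarith), add_right_comm]
              _ ≤ _ := le_add_of_nonneg_left (by positivity)

theorem continuous_max_one_abs_rpow (β : ℝ) : Continuous fun u : ℝ => max 1 |u| ^ β :=
  (by fun_prop : Continuous fun u : ℝ => max 1 |u|).rpow_const fun _ => Or.inl (by positivity)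

theorem integral_Ioc_rpow_sub_mul_le {α β γ : ℝ} (hα : -1 < α) (hγ : 0 ≤ γ) (hαγ : α + γ ≤ 0)
    (hβγ : β + γ ≤ 0) (hs : α + β + γ < -1) :
    ∃ K, 0 ≤ K ∧ ∀ (k : ℝ → ℝ) (C t x : ℝ), 0 ≤ C → 0 ≤ t → (∀ r ∈ Ioc 0 t, 0 ≤ k r) →
      (∀ r ∈ Ioc 0 t, k r ≤ C * max 1 |x - r| ^ β) →
      ∫ r in Ioc 0 t, (t - r) ^ α * k r ≤ C * K * max 1 |t - x| ^ (-γ) := by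
  set F := fun y : ℝ => |y| ^ α * max 1 |y| ^ (β + γ)
  set G := fun y : ℝ => max 1 |y| ^ (α + β + γ)
  have hF : Integrable F := integrable_abs_rpow_mul_max_one_abs_rpow hα (by linarith)
  have hG : Integrable G := by
    simpa using integrable_abs_rpow_mul_max_one_abs_rpow (a := 0) (by norm_num) (by linarith)
  have hF₀ : ∀ y, 0 ≤ F y := fun y => by positivity
  have hG₀ : ∀ y, 0 ≤ G y := fun y => by positivity
  refine ⟨2 ^ γ * ((∫ y, F y) + ∫ y, G y),
    mul_nonneg (by positivity) (add_nonneg (integral_nonneg hF₀) (integral_nonneg hG₀)), ?_⟩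
  intro k C t x hC ht hk₀ hk
  set M := C * 2 ^ γ * max 1 |t - x| ^ (-γ)
  have hpointwise : ∀ r ∈ Ioc 0 t, (t - r) ^ α * k r ≤ M * (F (t - r) + G (x - r)) := by
    intro r hr
    have htr : |t - r| = t - r := abs_of_nonneg (sub_nonneg.2 hr.2)
    calc (t - r) ^ α * k r ≤ (t - r) ^ α * (C * max 1 |x - r| ^ β) := by
          gcongr
          · exact rpow_nonneg (sub_nonneg.2 hr.2) _
          · exact hk r hr
      _ = C * (|t - r| ^ α * max 1 |x - r| ^ β) := by rw [htr]; ring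
      _ ≤ C * (2 ^ γ * max 1 |t - x| ^ (-γ) * (F (t - r) + G (x - r))) := by
          gcongr C * ?_
          simpa only [sub_sub_sub_cancel_right] using
            abs_rpow_mul_max_one_rpow_le hγ hαγ hβγ (t - r) (x - r)
      _ = M * (F (t - r) + G (x - r)) := by ring
  calc ∫ r in Ioc 0 t, (t - r) ^ α * k r
      ≤ ∫ r in Ioc 0 t, M * (F (t - r) + G (x - r)) :=
        setIntegral_mono_of_nonneg
          (fun r hr => mul_nonneg (rpow_nonneg (sub_nonneg.2 hr.2) _) (hk₀ r hr)) hpointwise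
          (((hF.comp_sub_left t).add (hG.comp_sub_left x)).const_mul M).integrableOn
    _ = M * ((∫ r in Ioc 0 t, F (t - r)) + ∫ r in Ioc 0 t, G (x - r)) := by
        rw [integral_const_mul, integral_add (hF.comp_sub_left t).integrableOn
          (hG.comp_sub_left x).integrableOn]
    _ ≤ M * ((∫ y, F y) + ∫ y, G y) := by
        gcongr
        · exact setIntegral_comp_sub_left_le hF hF₀ _ t
        · exact setIntegral_comp_sub_left_le hG hG₀ _ x
    _ = C * (2 ^ γ * ((∫ y, F y) + ∫ y, G y)) * max 1 |t - x| ^ (-γ) := by ring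

theorem intervalIntegral_max_one_abs_rpow_neg_le {γ y : ℝ} (hγ : 0 ≤ γ) (hγ₁ : γ < 1)
    (hy : 0 ≤ y) : ∫ u in (0)..y, max 1 |u| ^ (-γ) ≤ y ^ (1 - γ) / (1 - γ) := by
  calc ∫ u in (0)..y, max 1 |u| ^ (-γ) ≤ ∫ u in (0)..y, u ^ (-γ) := by
        refine intervalIntegral.integral_mono_on_of_le_Ioo hy
          ((continuous_max_one_abs_rpow _).intervalIntegrable _ _)
          (intervalIntegral.intervalIntegrable_rpow' (by linarith)) fun u hu => ?_
        rw [abs_of_pos hu.1]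
        exact rpow_le_rpow_of_nonpos hu.1 (le_max_right _ _) (by linarith)
    _ = y ^ (1 - γ) / (1 - γ) := by
        rw [integral_rpow (Or.inl (by linarith)), zero_rpow (by linarith), neg_add_eq_sub,
          sub_zero]

theorem integral_Ioc_max_one_abs_sub_rpow_neg_le {γ T x : ℝ} (hγ : 0 ≤ γ) (hγ₁ : γ < 1)
    (hx₀ : 0 ≤ x) (hxT : x ≤ T) :
    ∫ s in Ioc 0 T, max 1 |x - s| ^ (-γ) ≤ 2 * T ^ (1 - γ) / (1 - γ) := by
  set g := fun u : ℝ => max 1 |u| ^ (-γ)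
  have hg : Continuous g := continuous_max_one_abs_rpow _
  have hsymm : ∫ u in (x - T)..0, g u = ∫ u in (0)..(T - x), g u := by
    simpa [g] using (intervalIntegral.integral_comp_neg (a := 0) (b := T - x) g).symm
  calc ∫ s in Ioc 0 T, g (x - s) = ∫ u in (x - T)..x, g u := by
        rw [← intervalIntegral.integral_of_le (hx₀.trans hxT),
          intervalIntegral.integral_comp_sub_left, sub_zero]
    _ = (∫ u in (0)..(T - x), g u) + ∫ u in (0)..x, g u := by
        rw [← intervalIntegral.integral_add_adjacent_intervals (b := 0)
          (hg.intervalIntegrable _ _) (hg.intervalIntegrable _ _), hsymm]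
    _ ≤ (T - x) ^ (1 - γ) / (1 - γ) + x ^ (1 - γ) / (1 - γ) :=
        add_le_add (intervalIntegral_max_one_abs_rpow_neg_le hγ hγ₁ (by linarith))
          (intervalIntegral_max_one_abs_rpow_neg_le hγ hγ₁ hx₀)
    _ ≤ T ^ (1 - γ) / (1 - γ) + T ^ (1 - γ) / (1 - γ) := by
        gcongr; linarith
    _ = 2 * T ^ (1 - γ) / (1 - γ) := by ring

theorem integral_Ioc_integral_Ioc_le_of_le_max_one_rpow {F : ℝ → ℝ → ℝ} {A γ T : ℝ}
    (hγ : 0 ≤ γ) (hγ₁ : γ < 1) (hA : 0 ≤ A) (hT : 0 ≤ T) (hF₀ : ∀ t₁ t₂, 0 ≤ F t₁ t₂)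
    (hF : ∀ t₁ ∈ Ioc 0 T, ∀ t₂ ∈ Ioc 0 T, F t₁ t₂ ≤ A * max 1 |t₁ - t₂| ^ (-γ)) :
    ∫ t₁ in Ioc 0 T, ∫ t₂ in Ioc 0 T, F t₁ t₂ ≤ T * (A * (2 * T ^ (1 - γ) / (1 - γ))) := by
  have hinner : ∀ t₁ ∈ Ioc 0 T, ∫ t₂ in Ioc 0 T, F t₁ t₂ ≤ A * (2 * T ^ (1 - γ) / (1 - γ)) := by
    intro t₁ ht₁
    have hg : Continuous fun t₂ => max 1 |t₁ - t₂| ^ (-γ) :=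
      (continuous_max_one_abs_rpow _).comp (continuous_sub_left t₁)
    calc ∫ t₂ in Ioc 0 T, F t₁ t₂ ≤ ∫ t₂ in Ioc 0 T, A * max 1 |t₁ - t₂| ^ (-γ) :=
          setIntegral_mono_of_nonneg (fun _ _ => hF₀ _ _) (hF t₁ ht₁)
            (hg.integrableOn_Ioc.const_mul A)
      _ ≤ A * (2 * T ^ (1 - γ) / (1 - γ)) := by
          rw [integral_const_mul]
          gcongr
          exact integral_Ioc_max_one_abs_sub_rpow_neg_le hγ hγ₁ ht₁.1.le ht₁.2
  calc ∫ t₁ in Ioc 0 T, ∫ t₂ in Ioc 0 T, F t₁ t₂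
      ≤ ∫ _ in Ioc 0 T, A * (2 * T ^ (1 - γ) / (1 - γ)) :=
        setIntegral_mono_of_nonneg
          (fun _ _ => setIntegral_nonneg measurableSet_Ioc fun _ _ => hF₀ _ _) hinner
          (integrableOn_const measure_Ioc_lt_top.ne)
    _ = T * (A * (2 * T ^ (1 - γ) / (1 - γ))) := by
        rw [setIntegral_const, measureReal_def, Real.volume_Ioc,
          ENNReal.toReal_ofReal (by linarith), sub_zero, smul_eq_mul]

theorem le_mul_max_one_rpow {f : ℝ → ℝ} {C β : ℝ} (h₀ : ∀ y, 0 ≤ y → f y ≤ C)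
    (h₁ : ∀ y, 1 ≤ y → f y ≤ C * y ^ β) (y : ℝ) (hy : 0 ≤ y) : f y ≤ C * max 1 y ^ β := by
  rcases le_total y 1 with h | h
  · simpa [max_eq_left h] using h₀ y hy
  · simpa [max_eq_right h] using h₁ y h

theorem integral_Ioc_rpow_sub {p t : ℝ} (hp : -1 < p) (ht : 0 ≤ t) :
    ∫ u in Ioc 0 t, (t - u) ^ p = t ^ (p + 1) / (p + 1) := by
  rw [← intervalIntegral.integral_of_le ht, intervalIntegral.integral_comp_sub_left
    (fun y : ℝ => y ^ p), sub_self, sub_zero, integral_rpow (Or.inl hp),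
    zero_rpow (by linarith), sub_zero]

noncomputable def fourfoldIntegral (c : ℝ → ℝ) (p t₁ t₂ : ℝ) : ℝ :=
  ∫ r₁ in Ioc 0 t₁, ∫ u₁ in Ioc 0 t₁, ∫ r₂ in Ioc 0 t₂, ∫ u₂ in Ioc 0 t₂,
    c |r₁ - r₂| * ((t₁ - r₁) ^ p * (t₁ - u₁) ^ p * (t₂ - r₂) ^ p * (t₂ - u₂) ^ p)

theorem fourfoldIntegral_nonneg {c : ℝ → ℝ} (hc : ∀ y, 0 ≤ c y) (p t₁ t₂ : ℝ) :
    0 ≤ fourfoldIntegral c p t₁ t₂ := by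
  unfold fourfoldIntegral
  refine setIntegral_nonneg measurableSet_Ioc fun r₁ hr₁ => ?_
  refine setIntegral_nonneg measurableSet_Ioc fun u₁ hu₁ => ?_
  refine setIntegral_nonneg measurableSet_Ioc fun r₂ hr₂ => ?_
  refine setIntegral_nonneg measurableSet_Ioc fun u₂ hu₂ => ?_
  have := hc |r₁ - r₂|
  have := sub_nonneg.2 hr₁.2; have := sub_nonneg.2 hu₁.2
  have := sub_nonneg.2 hr₂.2; have := sub_nonneg.2 hu₂.2
  positivity

theorem fourfoldIntegral_eq (c : ℝ → ℝ) {p t₁ t₂ : ℝ} (hp : -1 < p) (ht₁ : 0 ≤ t₁) (ht₂ : 0 ≤ t₂) :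
    fourfoldIntegral c p t₁ t₂ = t₁ ^ (p + 1) / (p + 1) * (t₂ ^ (p + 1) / (p + 1)) *
      ∫ r₁ in Ioc 0 t₁, (t₁ - r₁) ^ p * ∫ r₂ in Ioc 0 t₂, (t₂ - r₂) ^ p * c |r₁ - r₂| := by
  have h : ∀ r₁ u₁ r₂ u₂ : ℝ,
      c |r₁ - r₂| * ((t₁ - r₁) ^ p * (t₁ - u₁) ^ p * (t₂ - r₂) ^ p * (t₂ - u₂) ^ p) =
        (t₁ - u₁) ^ p * ((t₁ - r₁) ^ p * ((t₂ - r₂) ^ p * c |r₁ - r₂|)) * (t₂ - u₂) ^ p :=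
    fun _ _ _ _ => by ring
  simp only [fourfoldIntegral, h, integral_mul_const, integral_const_mul,
    integral_Ioc_rpow_sub hp ht₁, integral_Ioc_rpow_sub hp ht₂]
  ring

theorem fourfoldIntegral_le {c : ℝ → ℝ} {H C : ℝ} (hH₁ : 1 / 4 < H) (hH₂ : H < 1 / 2)
    (hc₀ : ∀ y, 0 ≤ c y) (hc : ∀ y, 0 ≤ y → c y ≤ C * max 1 y ^ (H - 3 / 2)) :
    ∃ K, 0 ≤ K ∧ ∀ T, ∀ t₁ ∈ Ioc 0 T, ∀ t₂ ∈ Ioc 0 T,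
      fourfoldIntegral c (-H - 1 / 2) t₁ t₂ ≤
        K * T ^ (1 - 2 * H) * max 1 |t₁ - t₂| ^ (-(1 / 2 : ℝ)) := by
  have hC : 0 ≤ C := (hc₀ 0).trans (by simpa using hc 0 le_rfl)
  obtain ⟨K₁, hK₁, hconv₁⟩ := integral_Ioc_rpow_sub_mul_le (α := -H - 1 / 2) (β := H - 3 / 2)
    (γ := H + 1 / 2) (by linarith) (by linarith) (by linarith) (by linarith) (by linarith)
  obtain ⟨K₂, hK₂, hconv₂⟩ := integral_Ioc_rpow_sub_mul_le (α := -H - 1 / 2) (β := -(H + 1 / 2))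
    (γ := 1 / 2) (by linarith) (by norm_num) (by linarith) (by linarith) (by linarith)
  refine ⟨C * K₁ * K₂ / (-H - 1 / 2 + 1) ^ 2, by positivity, ?_⟩
  rintro T t₁ ⟨ht₁₀, ht₁T⟩ t₂ ⟨ht₂₀, ht₂T⟩
  have hT : 0 < T := ht₁₀.trans_le ht₁T
  have hJ : ∀ r₁ ∈ Ioc 0 t₁, ∫ r₂ in Ioc 0 t₂, (t₂ - r₂) ^ (-H - 1 / 2) * c |r₁ - r₂| ≤
      C * K₁ * max 1 |t₂ - r₁| ^ (-(H + 1 / 2)) := fun r₁ _ =>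
    hconv₁ (fun r₂ => c |r₁ - r₂|) C t₂ r₁ hC ht₂₀.le (fun _ _ => hc₀ _)
      (fun r₂ _ => hc _ (abs_nonneg _))
  have hJ₀ : ∀ r₁ ∈ Ioc 0 t₁, 0 ≤ ∫ r₂ in Ioc 0 t₂, (t₂ - r₂) ^ (-H - 1 / 2) * c |r₁ - r₂| :=
    fun r₁ _ => setIntegral_nonneg measurableSet_Ioc fun r₂ hr₂ =>
      mul_nonneg (rpow_nonneg (sub_nonneg.2 hr₂.2) _) (hc₀ _)
  have hD := hconv₂ _ (C * K₁) t₁ t₂ (by positivity) ht₁₀.le hJ₀ hJ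
  have hI₀ : 0 ≤ ∫ r₁ in Ioc 0 t₁,
      (t₁ - r₁) ^ (-H - 1 / 2) * ∫ r₂ in Ioc 0 t₂, (t₂ - r₂) ^ (-H - 1 / 2) * c |r₁ - r₂| :=
    setIntegral_nonneg measurableSet_Ioc fun r₁ hr₁ =>
      mul_nonneg (rpow_nonneg (sub_nonneg.2 hr₁.2) _) (hJ₀ r₁ hr₁)
  have hq : 0 < -H - 1 / 2 + 1 := by linarith
  rw [fourfoldIntegral_eq c (by linarith) ht₁₀.le ht₂₀.le]
  calc _ ≤ T ^ (-H - 1 / 2 + 1) / (-H - 1 / 2 + 1) * (T ^ (-H - 1 / 2 + 1) / (-H - 1 / 2 + 1)) *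
        (C * K₁ * K₂ * max 1 |t₁ - t₂| ^ (-(1 / 2 : ℝ))) := by
        gcongr
    _ = _ := by
        rw [show 1 - 2 * H = (-H - 1 / 2 + 1) + (-H - 1 / 2 + 1) by ring,
          rpow_add hT (-H - 1 / 2 + 1)]
        field_simp

theorem stmt11_general (H : ℝ) (hH : H ∈ Set.Ioo (1/4 : ℝ) (1/2)) (ctil : ℝ → ℝ)
    (hnn : ∀ t : ℝ, 0 ≤ ctil t)
    (C : ℝ) (hb0 : ∀ t : ℝ, 0 ≤ t → ctil t ≤ C)
    (hb1 : ∀ t : ℝ, 1 ≤ t → ctil t ≤ C * t ^ (H - 3/2)) :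
    Filter.Tendsto (fun T : ℝ => T ^ (-2 : ℝ) *
        ∫ t₁ in Set.Ioc (0:ℝ) T, ∫ t₂ in Set.Ioc (0:ℝ) T,
          ∫ r₁ in Set.Ioc (0:ℝ) t₁, ∫ u₁ in Set.Ioc (0:ℝ) t₁,
            ∫ r₂ in Set.Ioc (0:ℝ) t₂, ∫ u₂ in Set.Ioc (0:ℝ) t₂,
              ctil (|r₁ - r₂|) * ((t₁ - r₁) ^ (-H - 1/2) * (t₁ - u₁) ^ (-H - 1/2) *
                (t₂ - r₂) ^ (-H - 1/2) * (t₂ - u₂) ^ (-H - 1/2)))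
      Filter.atTop (nhds 0) := by
  obtain ⟨hH₁, hH₂⟩ := hH
  obtain ⟨K, hK, hQ⟩ := fourfoldIntegral_le hH₁ hH₂ hnn (le_mul_max_one_rpow hb0 hb1)
  have hdecay := (tendsto_rpow_neg_atTop (by linarith : 0 < 2 * H - 1 / 2)).const_mul (4 * K)
  rw [mul_zero] at hdecay
  refine squeeze_zero' ?_ ?_ hdecay
  · filter_upwards [eventually_ge_atTop 0] with T hT
    exact mul_nonneg (rpow_nonneg hT _) (setIntegral_nonneg measurableSet_Ioc fun t₁ _ =>
      setIntegral_nonneg measurableSet_Ioc fun t₂ _ => fourfoldIntegral_nonneg hnn _ t₁ t₂)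
  · filter_upwards [eventually_gt_atTop 0] with T hT
    calc _ ≤ T ^ (-2 : ℝ) *
          (T * (K * T ^ (1 - 2 * H) * (2 * T ^ (1 - 1 / 2 : ℝ) / (1 - 1 / 2)))) := by
          gcongr
          exact integral_Ioc_integral_Ioc_le_of_le_max_one_rpow
            (F := fourfoldIntegral ctil (-H - 1 / 2)) (by norm_num) (by norm_num) (by positivity)
            hT.le (fourfoldIntegral_nonneg hnn _) (hQ T)
      _ = 4 * K * T ^ (-(2 * H - 1 / 2)) := by
          rw [show -(2 * H - 1 / 2) = -2 + 1 + (1 - 2 * H) + (1 - 1 / 2 : ℝ) by ring,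
            rpow_add hT, rpow_add hT, rpow_add hT, rpow_one]
          ring

theorem stmt11 (H : ℝ) (hH : H ∈ Set.Ioo (1/4 : ℝ) (1/2)) (ctil : ℝ → ℝ)
    (hmeas : Measurable ctil) (hnn : ∀ t : ℝ, 0 ≤ ctil t)
    (C : ℝ) (hC : 0 < C) (hb0 : ∀ t : ℝ, 0 ≤ t → ctil t ≤ C)
    (hb1 : ∀ t : ℝ, 1 ≤ t → ctil t ≤ C * t ^ (H - 3/2)) :
    Filter.Tendsto (fun T : ℝ => T ^ (-2 : ℝ) *
        ∫ t₁ in Set.Ioc (0:ℝ) T, ∫ t₂ in Set.Ioc (0:ℝ) T,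
          ∫ r₁ in Set.Ioc (0:ℝ) t₁, ∫ u₁ in Set.Ioc (0:ℝ) t₁,
            ∫ r₂ in Set.Ioc (0:ℝ) t₂, ∫ u₂ in Set.Ioc (0:ℝ) t₂,
              ctil (|r₁ - r₂|) * ((t₁ - r₁) ^ (-H - 1/2) * (t₁ - u₁) ^ (-H - 1/2) *
                (t₂ - r₂) ^ (-H - 1/2) * (t₂ - u₂) ^ (-H - 1/2)))
      Filter.atTop (nhds 0) :=
  stmt11_general H hH ctil hnn C hb0 hb1
end

section
/- Let H ∈ (0,1/2) and let c̃ : [0,∞) → [0,∞) be measurable. Then for every T > 0, T^{−2} ∫₀^T ∫₀^T ∫₀^{t₁} ∫₀^{t₁} ∫₀^{t₂} ∫₀^{t₂} c̃(|r₁−r₂|) (t₁−r₁)^{−H−1/2} (t₁−u₁)^{−H−1/2} (t₂−r₂)^{−H−1/2} (t₂−u₂)^{−H−1/2} du₂ dr₂ du₁ dr₁ dt₂ dt₁ ≤ (1/2 − H)^{−4} · T^{−1−2H} ∫₀^T ∫₀^T c̃(|r₁−r₂|) (T−r₁)^{1/2−H} (T−r₂)^{1/2−H} dr₂ dr₁.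 -/
/-!
Integrating out `u₁` and `u₂` produces the factor
`(t₁ ^ (1/2 - H) / (1/2 - H)) * (t₂ ^ (1/2 - H) / (1/2 - H)) ≤ (T ^ (1/2 - H) / (1/2 - H)) ^ 2`.
In the remaining fourfold integral, Tonelli on the triangles `0 < rᵢ ≤ tᵢ ≤ T` moves each
`tᵢ`-integral inside, where
`∫_{rᵢ}^T (tᵢ - rᵢ) ^ (-H - 1/2) dtᵢ = (T - rᵢ) ^ (1/2 - H) / (1/2 - H)`.
The constants collect to `T ^ (-2) * T ^ (1 - 2H) * (1/2 - H) ^ (-4)`.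
-/

open MeasureTheory Set

open scoped ENNReal

lemma setLIntegral_Ioc_ofReal_eq_intervalIntegral {f : ℝ → ℝ} {a b : ℝ} (hab : a ≤ b)
    (hf : IntervalIntegrable f volume a b) (hf_nonneg : ∀ x ∈ Ioc a b, 0 ≤ f x) :
    ∫⁻ x in Ioc a b, ENNReal.ofReal (f x) = ENNReal.ofReal (∫ x in a..b, f x) := by
  rw [intervalIntegral.integral_of_le hab, ofReal_integral_eq_lintegral_ofReal
    ((intervalIntegrable_iff_integrableOn_Ioc_of_le hab).mp hf)
    ((ae_restrict_iff' measurableSet_Ioc).mpr (Filter.Eventually.of_forall hf_nonneg))]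

lemma setLIntegral_Ioc_ofReal_const_sub_rpow {a b p : ℝ} (hab : a ≤ b) (hp : -1 < p) :
    ∫⁻ u in Ioc a b, ENNReal.ofReal ((b - u) ^ p)
      = ENNReal.ofReal ((b - a) ^ (p + 1) / (p + 1)) := by
  rw [setLIntegral_Ioc_ofReal_eq_intervalIntegral hab
    (by simpa using
      ((intervalIntegral.intervalIntegrable_rpow' hp (a := 0) (b := b - a)).comp_sub_left b).symm)
    fun u hu => Real.rpow_nonneg (sub_nonneg.mpr hu.2) p,
    intervalIntegral.integral_comp_sub_left (fun x => x ^ p), sub_self,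
    integral_rpow (Or.inl hp), Real.zero_rpow (by linarith), sub_zero]

lemma setLIntegral_Ioc_ofReal_sub_const_rpow {a b p : ℝ} (hab : a ≤ b) (hp : -1 < p) :
    ∫⁻ t in Ioc a b, ENNReal.ofReal ((t - a) ^ p)
      = ENNReal.ofReal ((b - a) ^ (p + 1) / (p + 1)) := by
  rw [setLIntegral_Ioc_ofReal_eq_intervalIntegral hab
    (by simpa using
      (intervalIntegral.intervalIntegrable_rpow' hp (a := 0) (b := b - a)).comp_sub_right a)
    fun t ht => Real.rpow_nonneg (sub_nonneg.mpr ht.1.le) p,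
    intervalIntegral.integral_comp_sub_right (fun x => x ^ p), sub_self,
    integral_rpow (Or.inl hp), Real.zero_rpow (by linarith), sub_zero]

lemma setLIntegral_Ioc_setLIntegral_Ioc_swap {f : ℝ → ℝ → ℝ≥0∞}
    (hf : Measurable (Function.uncurry f)) (a b : ℝ) :
    ∫⁻ t in Ioc a b, ∫⁻ r in Ioc a t, f t r = ∫⁻ r in Ioc a b, ∫⁻ t in Ioc r b, f t r := by
  set S : Set (ℝ × ℝ) := {q | a < q.2 ∧ q.2 ≤ q.1 ∧ q.1 ≤ b}
  have hS : MeasurableSet S :=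
    (measurableSet_lt measurable_const measurable_snd).inter
      ((measurableSet_le measurable_snd measurable_fst).inter
        (measurableSet_le measurable_fst measurable_const))
  have hL : ∫⁻ t in Ioc a b, ∫⁻ r in Ioc a t, f t r
      = ∫⁻ t, ∫⁻ r, S.indicator (Function.uncurry f) (t, r) := by
    rw [← lintegral_indicator measurableSet_Ioc]
    refine lintegral_congr fun t => ?_
    by_cases ht : t ∈ Ioc a b
    · rw [indicator_of_mem ht, ← lintegral_indicator measurableSet_Ioc]
      congr 1 with r
      simp only [indicator_apply, S, mem_ofPred_eq, mem_Ioc, Function.uncurry_apply_pair]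
      grind
    · rw [indicator_of_notMem ht, eq_comm]
      convert lintegral_zero with r
      exact indicator_of_notMem (fun h => ht ⟨h.1.trans_le h.2.1, h.2.2⟩) _
  have hR : ∫⁻ r in Ioc a b, ∫⁻ t in Ioc r b, f t r
      = ∫⁻ r, ∫⁻ t, S.indicator (Function.uncurry f) (t, r) := by
    rw [← lintegral_indicator measurableSet_Ioc]
    refine lintegral_congr fun r => ?_
    by_cases hr : r ∈ Ioc a b
    · rw [indicator_of_mem hr, setLIntegral_congr Ioc_ae_eq_Icc,
        ← lintegral_indicator measurableSet_Icc]
      congr 1 with t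
      simp only [indicator_apply, S, mem_ofPred_eq, mem_Icc, Function.uncurry_apply_pair]
      grind
    · rw [indicator_of_notMem hr, eq_comm]
      convert lintegral_zero with t
      exact indicator_of_notMem (fun h => hr ⟨h.1, h.2.1.trans h.2.2⟩) _
  rw [hL, hR, lintegral_lintegral_swap (f := fun t r => S.indicator (Function.uncurry f) (t, r))
    (hf.indicator hS).aemeasurable]

lemma setLIntegral_Ioc_setLIntegral_Ioc_rpow_sub_mul {φ : ℝ → ℝ≥0∞} (hφ : Measurable φ)
    {a b p : ℝ} (hp : -1 < p) :
    ∫⁻ t in Ioc a b, ∫⁻ r in Ioc a t, ENNReal.ofReal ((t - r) ^ p) * φ r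
      = ∫⁻ r in Ioc a b, ENNReal.ofReal ((b - r) ^ (p + 1) / (p + 1)) * φ r := by
  rw [setLIntegral_Ioc_setLIntegral_Ioc_swap (by fun_prop)]
  refine setLIntegral_congr_fun measurableSet_Ioc fun r hr => ?_
  rw [lintegral_mul_const _ (by fun_prop), setLIntegral_Ioc_ofReal_sub_const_rpow hr.2 hp]

lemma setLIntegral_Ioc_pair_rpow_sub_mul {F : ℝ → ℝ → ℝ≥0∞}
    (hF : Measurable (Function.uncurry F)) {a b p : ℝ} (hp : -1 < p) :
    ∫⁻ t₁ in Ioc a b, ∫⁻ t₂ in Ioc a b, ∫⁻ r₁ in Ioc a t₁, ∫⁻ r₂ in Ioc a t₂,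
        F r₁ r₂ * ENNReal.ofReal ((t₁ - r₁) ^ p) * ENNReal.ofReal ((t₂ - r₂) ^ p)
      = ∫⁻ r₁ in Ioc a b, ∫⁻ r₂ in Ioc a b, F r₁ r₂ * ENNReal.ofReal ((b - r₁) ^ (p + 1) / (p + 1))
          * ENNReal.ofReal ((b - r₂) ^ (p + 1) / (p + 1)) := by
  have inner : ∀ t₁, ∫⁻ t₂ in Ioc a b, ∫⁻ r₁ in Ioc a t₁, ∫⁻ r₂ in Ioc a t₂,
        F r₁ r₂ * ENNReal.ofReal ((t₁ - r₁) ^ p) * ENNReal.ofReal ((t₂ - r₂) ^ p)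
      = ∫⁻ r₁ in Ioc a t₁, ENNReal.ofReal ((t₁ - r₁) ^ p) * ∫⁻ r₂ in Ioc a b,
          ENNReal.ofReal ((b - r₂) ^ (p + 1) / (p + 1)) * F r₁ r₂ := by
    intro t₁
    calc _ = ∫⁻ t₂ in Ioc a b, ∫⁻ r₂ in Ioc a t₂, ENNReal.ofReal ((t₂ - r₂) ^ p) *
          ∫⁻ r₁ in Ioc a t₁, F r₁ r₂ * ENNReal.ofReal ((t₁ - r₁) ^ p) := by
          refine lintegral_congr fun t₂ => ?_
          rw [lintegral_lintegral_swap (by fun_prop)]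
          refine lintegral_congr fun r₂ => ?_
          rw [← lintegral_const_mul _ (by fun_prop)]
          exact lintegral_congr fun r₁ => by ring
      _ = ∫⁻ r₂ in Ioc a b, ENNReal.ofReal ((b - r₂) ^ (p + 1) / (p + 1)) *
          ∫⁻ r₁ in Ioc a t₁, F r₁ r₂ * ENNReal.ofReal ((t₁ - r₁) ^ p) :=
        setLIntegral_Ioc_setLIntegral_Ioc_rpow_sub_mul (by fun_prop) hp
      _ = ∫⁻ r₂ in Ioc a b, ∫⁻ r₁ in Ioc a t₁, ENNReal.ofReal ((b - r₂) ^ (p + 1) / (p + 1)) *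
          (F r₁ r₂ * ENNReal.ofReal ((t₁ - r₁) ^ p)) :=
        lintegral_congr fun r₂ => (lintegral_const_mul _ (by fun_prop)).symm
      _ = _ := by
          rw [lintegral_lintegral_swap (by fun_prop)]
          refine lintegral_congr fun r₁ => ?_
          rw [← lintegral_const_mul _ (by fun_prop)]
          exact lintegral_congr fun r₂ => by ring
  rw [lintegral_congr inner, setLIntegral_Ioc_setLIntegral_Ioc_rpow_sub_mul (by fun_prop) hp]
  refine lintegral_congr fun r₁ => ?_
  rw [← lintegral_const_mul _ (by fun_prop)]
  exact lintegral_congr fun r₂ => by ring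

lemma setLIntegral_Ioc_pair_ofReal_rpow_sub_mul {c : ℝ → ℝ → ℝ}
    (hc_meas : Measurable (Function.uncurry c)) (hc : ∀ x y, 0 ≤ c x y) {a b p : ℝ} (hp : -1 < p) :
    ∫⁻ t₁ in Ioc a b, ∫⁻ t₂ in Ioc a b, ∫⁻ r₁ in Ioc a t₁, ∫⁻ r₂ in Ioc a t₂,
        ENNReal.ofReal (c r₁ r₂) * ENNReal.ofReal ((t₁ - r₁) ^ p) * ENNReal.ofReal ((t₂ - r₂) ^ p)
      = ENNReal.ofReal ((p + 1)⁻¹ ^ 2) * ∫⁻ r₁ in Ioc a b, ∫⁻ r₂ in Ioc a b,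
          ENNReal.ofReal (c r₁ r₂ * (b - r₁) ^ (p + 1) * (b - r₂) ^ (p + 1)) := by
  rw [setLIntegral_Ioc_pair_rpow_sub_mul (by fun_prop) hp,
    ← lintegral_const_mul' _ _ ENNReal.ofReal_ne_top]
  refine setLIntegral_congr_fun measurableSet_Ioc fun r₁ hr₁ => ?_
  rw [← lintegral_const_mul' _ _ ENNReal.ofReal_ne_top]
  refine setLIntegral_congr_fun measurableSet_Ioc fun r₂ hr₂ => ?_
  have h₁ := Real.rpow_nonneg (sub_nonneg.mpr hr₁.2) (p + 1)
  have h₂ := Real.rpow_nonneg (sub_nonneg.mpr hr₂.2) (p + 1)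
  have hp₁ : 0 < p + 1 := by linarith
  rw [← ENNReal.ofReal_mul (hc _ _), ← ENNReal.ofReal_mul (mul_nonneg (hc _ _) (by positivity)),
    ← ENNReal.ofReal_mul (sq_nonneg _)]
  congr 1
  field_simp

lemma setLIntegral_Ioc_integrate_out_rpow_sub {c : ℝ → ℝ → ℝ} (hc : ∀ x y, 0 ≤ c x y)
    {a t₁ t₂ p : ℝ} (ht₁ : a ≤ t₁) (ht₂ : a ≤ t₂) (hp : -1 < p) :
    ∫⁻ r₁ in Ioc a t₁, ∫⁻ u₁ in Ioc a t₁, ∫⁻ r₂ in Ioc a t₂, ∫⁻ u₂ in Ioc a t₂,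
        ENNReal.ofReal (c r₁ r₂ * ((t₁ - r₁) ^ p * (t₁ - u₁) ^ p * (t₂ - r₂) ^ p * (t₂ - u₂) ^ p))
      = ENNReal.ofReal ((t₁ - a) ^ (p + 1) / (p + 1)) *
          ENNReal.ofReal ((t₂ - a) ^ (p + 1) / (p + 1)) *
          ∫⁻ r₁ in Ioc a t₁, ∫⁻ r₂ in Ioc a t₂, ENNReal.ofReal (c r₁ r₂) *
            ENNReal.ofReal ((t₁ - r₁) ^ p) * ENNReal.ofReal ((t₂ - r₂) ^ p) := by
  -- `x ^ p` may be negative for `x < 0`, so the integrand only factors on the domain.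
  have hsplit : ∀ r₁ ∈ Ioc a t₁, ∀ u₁ ∈ Ioc a t₁, ∀ r₂ ∈ Ioc a t₂, ∀ u₂ ∈ Ioc a t₂,
      ENNReal.ofReal (c r₁ r₂ * ((t₁ - r₁) ^ p * (t₁ - u₁) ^ p * (t₂ - r₂) ^ p * (t₂ - u₂) ^ p))
        = ENNReal.ofReal ((t₁ - u₁) ^ p) * (ENNReal.ofReal (c r₁ r₂) *
            ENNReal.ofReal ((t₁ - r₁) ^ p) * ENNReal.ofReal ((t₂ - r₂) ^ p)) *
          ENNReal.ofReal ((t₂ - u₂) ^ p) := by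
    intro r₁ hr₁ u₁ hu₁ r₂ hr₂ u₂ hu₂
    have h₁ := Real.rpow_nonneg (sub_nonneg.mpr hr₁.2) p
    have h₂ := Real.rpow_nonneg (sub_nonneg.mpr hu₁.2) p
    have h₃ := Real.rpow_nonneg (sub_nonneg.mpr hr₂.2) p
    rw [show c r₁ r₂ * ((t₁ - r₁) ^ p * (t₁ - u₁) ^ p * (t₂ - r₂) ^ p * (t₂ - u₂) ^ p)
        = (t₁ - u₁) ^ p * (c r₁ r₂ * (t₁ - r₁) ^ p * (t₂ - r₂) ^ p) * (t₂ - u₂) ^ p by ring,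
      ENNReal.ofReal_mul (mul_nonneg h₂ (mul_nonneg (mul_nonneg (hc _ _) h₁) h₃)),
      ENNReal.ofReal_mul h₂, ENNReal.ofReal_mul (mul_nonneg (hc _ _) h₁),
      ENNReal.ofReal_mul (hc _ _)]
  calc _ = ∫⁻ r₁ in Ioc a t₁, ∫⁻ u₁ in Ioc a t₁, ∫⁻ r₂ in Ioc a t₂, ∫⁻ u₂ in Ioc a t₂,
        ENNReal.ofReal ((t₁ - u₁) ^ p) * (ENNReal.ofReal (c r₁ r₂) *
          ENNReal.ofReal ((t₁ - r₁) ^ p) * ENNReal.ofReal ((t₂ - r₂) ^ p)) *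
        ENNReal.ofReal ((t₂ - u₂) ^ p) :=
      setLIntegral_congr_fun measurableSet_Ioc fun r₁ hr₁ =>
        setLIntegral_congr_fun measurableSet_Ioc fun u₁ hu₁ =>
          setLIntegral_congr_fun measurableSet_Ioc fun r₂ hr₂ =>
            setLIntegral_congr_fun measurableSet_Ioc fun u₂ hu₂ =>
              hsplit r₁ hr₁ u₁ hu₁ r₂ hr₂ u₂ hu₂
    _ = _ := by
      simp (disch := first | fun_prop | exact ENNReal.ofReal_ne_top) only [lintegral_const_mul,
        lintegral_mul_const, lintegral_const_mul', lintegral_mul_const',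
        setLIntegral_Ioc_ofReal_const_sub_rpow ht₁ hp, setLIntegral_Ioc_ofReal_const_sub_rpow ht₂ hp]
      ring

theorem stmt12 (H : ℝ) (hH : H ∈ Set.Ioo (0:ℝ) (1/2)) (ctil : ℝ → ℝ)
    (hmeas : Measurable ctil) (hnn : ∀ t : ℝ, 0 ≤ ctil t) :
    ∀ T : ℝ, 0 < T →
      ENNReal.ofReal (T ^ (-2 : ℝ)) *
          ∫⁻ t₁ in Set.Ioc (0:ℝ) T, ∫⁻ t₂ in Set.Ioc (0:ℝ) T,
            ∫⁻ r₁ in Set.Ioc (0:ℝ) t₁, ∫⁻ u₁ in Set.Ioc (0:ℝ) t₁,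
              ∫⁻ r₂ in Set.Ioc (0:ℝ) t₂, ∫⁻ u₂ in Set.Ioc (0:ℝ) t₂,
                ENNReal.ofReal (ctil (|r₁ - r₂|) * ((t₁ - r₁) ^ (-H - 1/2) *
                  (t₁ - u₁) ^ (-H - 1/2) * (t₂ - r₂) ^ (-H - 1/2) * (t₂ - u₂) ^ (-H - 1/2)))
        ≤ ENNReal.ofReal ((1/2 - H) ^ (-4 : ℝ) * T ^ (-1 - 2*H)) *
          ∫⁻ r₁ in Set.Ioc (0:ℝ) T, ∫⁻ r₂ in Set.Ioc (0:ℝ) T,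
            ENNReal.ofReal (ctil (|r₁ - r₂|) * (T - r₁) ^ (1/2 - H) * (T - r₂) ^ (1/2 - H)) := by
  intro T hT
  have hp : (-1 : ℝ) < -H - 1/2 := by linarith [hH.2]
  have hα : 0 < 1/2 - H := by linarith [hH.2]
  have hp₁ : -H - 1/2 + 1 = 1/2 - H := by ring
  have hc : ∀ x y, 0 ≤ ctil |x - y| := fun _ _ => hnn _
  have hconst : T ^ (-2 : ℝ) * (T ^ (1/2 - H) / (1/2 - H)) ^ 2 * (1/2 - H)⁻¹ ^ 2
      = (1/2 - H) ^ (-4 : ℝ) * T ^ (-1 - 2*H) := by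
    rw [show -1 - 2*H = -2 + (1/2 - H) + (1/2 - H) by ring, Real.rpow_add hT, Real.rpow_add hT,
      Real.rpow_neg hα.le, show (4 : ℝ) = (4 : ℕ) by norm_num, Real.rpow_natCast]
    field_simp
  calc _ ≤ ENNReal.ofReal (T ^ (-2 : ℝ)) * (ENNReal.ofReal (T ^ (1/2 - H) / (1/2 - H)) ^ 2 *
          ∫⁻ t₁ in Ioc 0 T, ∫⁻ t₂ in Ioc 0 T, ∫⁻ r₁ in Ioc 0 t₁, ∫⁻ r₂ in Ioc 0 t₂,
            ENNReal.ofReal (ctil |r₁ - r₂|) * ENNReal.ofReal ((t₁ - r₁) ^ (-H - 1/2)) *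
              ENNReal.ofReal ((t₂ - r₂) ^ (-H - 1/2))) := by
        gcongr
        rw [← lintegral_const_mul' _ _ (by simp)]
        refine setLIntegral_mono' measurableSet_Ioc fun t₁ ht₁ => ?_
        rw [← lintegral_const_mul' _ _ (by simp)]
        refine setLIntegral_mono' measurableSet_Ioc fun t₂ ht₂ => ?_
        rw [setLIntegral_Ioc_integrate_out_rpow_sub hc ht₁.1.le ht₂.1.le hp, sq, sub_zero, sub_zero,
          hp₁]
        gcongr <;> linarith [ht₁.1, ht₁.2, ht₂.1, ht₂.2]
    _ = _ := by
        rw [setLIntegral_Ioc_pair_ofReal_rpow_sub_mul (by fun_prop) hc hp, hp₁, ← mul_assoc,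
          ← mul_assoc, ← ENNReal.ofReal_pow (by positivity), ← ENNReal.ofReal_mul (by positivity),
          ← ENNReal.ofReal_mul (by positivity), hconst]
end

section
/- Let H ∈ (0,1/2) and let c̃ : [0,∞) → [0,∞) be measurable with c̃(t) ≤ C for all t ≥ 0 and c̃(t) ≤ C·t^{H−3/2} for all t ≥ 1, for some C > 0. Then lim_{T→∞} T^{2H−3} ∫₀^T ∫₀^T ∫₀^{t₁} ∫₀^{t₂} (t₁−r₁)^{−H−1/2} r₁^{1/2−H} (t₂−r₂)^{−H−1/2} r₂^{1/2−H} · c̃(|r₁−r₂|) dr₂ dr₁ dt₂ dt₁ = 0. -/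
/-!
Since `r ≤ t ≤ T`, the factor `r ^ (1/2 - H)` is at most `T ^ (1/2 - H)`, so the integrand is
dominated by `s (t₁ - r₁) * s (t₂ - r₂) * c̃ |r₁ - r₂|` with the translation kernel
`s x = T ^ (1/2 - H) * x ^ (-H - 1/2)` on `[0, T]`, of mass `T ^ (1 - 2H) / (1/2 - H)`.
By Tonelli and translation invariance the `t₂`, `r₁`, `r₂` integrals of this product over all of `ℝ`
factor as `‖s‖₁² ‖c̃ |·|‖₁`, which is finite because `t ^ (H - 3/2)` is integrable at infinity.
The `t₁` integral contributes a factor `T`, so the quadruple integral is `O(T ^ (3 - 4H))`, and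
after multiplication by `T ^ (2H - 3)` it is `O(T ^ (-2H))`.
-/

open MeasureTheory Set Filter
open scoped ENNReal

noncomputable def cutoffKernel (p q T : ℝ) : ℝ → ℝ :=
  (Icc 0 T).indicator fun x => T ^ q * x ^ p

theorem lintegral_enorm_cutoffKernel {p T : ℝ} (q : ℝ) (hp : -1 < p) (hT : 0 ≤ T) :
    ∫⁻ x, ‖cutoffKernel p q T x‖ₑ = ENNReal.ofReal (T ^ q * (T ^ (p + 1) / (p + 1))) := by
  have hint : IntegrableOn (fun x => T ^ q * x ^ p) (Ioc 0 T) :=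
    ((intervalIntegrable_iff_integrableOn_Ioc_of_le hT).mp
      (intervalIntegral.intervalIntegrable_rpow' hp)).const_mul _
  have hnorm : ∀ x ∈ Ioc 0 T, ‖T ^ q * x ^ p‖ = T ^ q * x ^ p := fun x hx =>
    Real.norm_of_nonneg (by have := hx.1; positivity)
  rw [cutoffKernel, lintegral_congr (enorm_indicator_eq_indicator_enorm _),
    lintegral_indicator measurableSet_Icc, setLIntegral_congr Ioc_ae_eq_Icc.symm,
    ← ofReal_integral_norm_eq_lintegral_enorm hint, setIntegral_congr_fun measurableSet_Ioc hnorm,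
    ← intervalIntegral.integral_of_le hT, intervalIntegral.integral_const_mul,
    integral_rpow (Or.inl hp), Real.zero_rpow (by linarith), sub_zero]

theorem enorm_rpow_sub_mul_rpow_le_cutoffKernel {p q T t r : ℝ} (hq : 0 ≤ q)
    (hr : r ∈ Ioc 0 t) (ht : t ≤ T) :
    ‖(t - r) ^ p * r ^ q‖ₑ ≤ ‖cutoffKernel p q T (t - r)‖ₑ := by
  obtain ⟨hr0, hrt⟩ := hr
  have htr : 0 ≤ t - r := sub_nonneg.mpr hrt
  have hT : 0 ≤ T := by linarith
  rw [cutoffKernel, indicator_of_mem (show t - r ∈ Icc 0 T from ⟨htr, by linarith⟩),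
    Real.enorm_of_nonneg (by positivity), Real.enorm_of_nonneg (by positivity), mul_comm]
  exact ENNReal.ofReal_le_ofReal (mul_le_mul_of_nonneg_right
    (Real.rpow_le_rpow hr0.le (hrt.trans ht) hq) (by positivity))

theorem integrable_comp_abs_of_le_rpow {c : ℝ → ℝ} {C b : ℝ} (hb : b < -1) (hc : Measurable c)
    (hnn : ∀ t, 0 ≤ c t) (h0 : ∀ t, 0 ≤ t → c t ≤ C) (h1 : ∀ t, 1 ≤ t → c t ≤ C * t ^ b) :
    Integrable fun u => c |u| := by
  have hC : 0 ≤ C := (hnn 0).trans (h0 0 le_rfl)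
  -- `((1 + t) / 2) ^ b` dominates both `1` on `[0, 1]` and `t ^ b` on `[1, ∞)`.
  have hdom : ∀ t, 0 ≤ t → c t ≤ C * ((1 + t) / 2) ^ b := by
    intro t ht
    rcases le_total t 1 with ht1 | ht1
    · calc c t ≤ C * 1 := by simpa using h0 t ht
        _ ≤ C * ((1 + t) / 2) ^ b :=
          mul_le_mul_of_nonneg_left (Real.one_le_rpow_of_pos_of_le_one_of_nonpos
            (by positivity) (by linarith) (by linarith)) hC
    · calc c t ≤ C * t ^ b := h1 t ht1
        _ ≤ C * ((1 + t) / 2) ^ b :=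
          mul_le_mul_of_nonneg_left
            (Real.rpow_le_rpow_of_nonpos (by positivity) (by linarith) (by linarith)) hC
  have hg : Integrable fun u : ℝ => C * ((1 + ‖u‖) ^ (-(-b)) / 2 ^ b) :=
    ((integrable_one_add_norm (by rw [Module.finrank_self, Nat.cast_one]; linarith)).div_const
      _).const_mul _
  refine hg.mono' (hc.comp measurable_abs).aestronglyMeasurable (Eventually.of_forall fun u => ?_)
  rw [Real.norm_of_nonneg (hnn _), neg_neg, ← Real.div_rpow (by positivity) zero_le_two]
  exact hdom _ (abs_nonneg u)

theorem lintegral_lintegral_lintegral_comp_sub_mul {s k : ℝ → ℝ≥0∞} (hs : Measurable s)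
    (hk : Measurable k) (x : ℝ) :
    ∫⁻ y, ∫⁻ u, ∫⁻ v, s (x - u) * s (y - v) * k (u - v) =
      (∫⁻ t, s t) * (∫⁻ t, k t) * ∫⁻ t, s t := by
  have inner (u : ℝ) : ∫⁻ y, ∫⁻ v, s (x - u) * s (y - v) * k (u - v) =
      s (x - u) * (∫⁻ t, k t) * ∫⁻ t, s t := by
    rw [lintegral_lintegral_swap (by fun_prop)]
    calc ∫⁻ v, ∫⁻ y, s (x - u) * s (y - v) * k (u - v)
        = ∫⁻ v, s (x - u) * k (u - v) * ∫⁻ t, s t := by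
          refine lintegral_congr fun v => ?_
          rw [← lintegral_sub_right_eq_self s v, ← lintegral_const_mul _ (by fun_prop)]
          exact lintegral_congr fun y => by ring
      _ = s (x - u) * (∫⁻ t, k t) * ∫⁻ t, s t := by
          rw [lintegral_mul_const _ (by fun_prop), lintegral_const_mul _ (by fun_prop),
            lintegral_sub_left_eq_self k]
  rw [lintegral_lintegral_swap (by fun_prop)]
  simp_rw [inner]
  rw [lintegral_mul_const _ (by fun_prop), lintegral_mul_const _ (by fun_prop),
    lintegral_sub_left_eq_self s]

theorem enorm_setIntegral_le_lintegral {α E : Type*} [MeasurableSpace α] [NormedAddCommGroup E]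
    [NormedSpace ℝ E] {μ : Measure α} {A : Set α} (hA : MeasurableSet A) {f : α → E}
    {g : α → ℝ≥0∞} (h : ∀ x ∈ A, ‖f x‖ₑ ≤ g x) : ‖∫ x in A, f x ∂μ‖ₑ ≤ ∫⁻ x, g x ∂μ :=
  (enorm_integral_le_lintegral_enorm _).trans
    ((setLIntegral_mono' hA h).trans (setLIntegral_le_lintegral _ _))

theorem enorm_fourfold_integral_le {p q T : ℝ} (hp : -1 < p) (hq : 0 ≤ q) (hT : 0 ≤ T)
    {c : ℝ → ℝ} (hc : Measurable c) (hci : Integrable fun u => c |u|) :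
    ‖∫ t₁ in Ioc 0 T, ∫ t₂ in Ioc 0 T, ∫ r₁ in Ioc 0 t₁, ∫ r₂ in Ioc 0 t₂,
        (t₁ - r₁) ^ p * r₁ ^ q * (t₂ - r₂) ^ p * r₂ ^ q * c |r₁ - r₂|‖ₑ ≤
      ENNReal.ofReal (T * (T ^ q * (T ^ (p + 1) / (p + 1))) ^ 2 * ∫ u, ‖c |u|‖) := by
  set s : ℝ → ℝ≥0∞ := fun x => ‖cutoffKernel p q T x‖ₑ
  set k : ℝ → ℝ≥0∞ := fun u => ‖c |u|‖ₑ
  have hs : Measurable s :=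
    ((measurable_const.mul (measurable_id.pow_const p)).indicator measurableSet_Icc).enorm
  have hk : Measurable k := (hc.comp measurable_abs).enorm
  calc _ ≤ ∫⁻ t₁ in Ioc 0 T, ∫⁻ t₂, ∫⁻ r₁, ∫⁻ r₂, s (t₁ - r₁) * s (t₂ - r₂) * k (r₁ - r₂) := by
        refine (enorm_integral_le_lintegral_enorm _).trans (setLIntegral_mono' measurableSet_Ioc
          fun t₁ ht₁ => enorm_setIntegral_le_lintegral measurableSet_Ioc fun t₂ ht₂ =>
          enorm_setIntegral_le_lintegral measurableSet_Ioc fun r₁ hr₁ =>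
          enorm_setIntegral_le_lintegral measurableSet_Ioc fun r₂ hr₂ => ?_)
        rw [show (t₁ - r₁) ^ p * r₁ ^ q * (t₂ - r₂) ^ p * r₂ ^ q * c |r₁ - r₂| =
          (t₁ - r₁) ^ p * r₁ ^ q * ((t₂ - r₂) ^ p * r₂ ^ q) * c |r₁ - r₂| by ring,
          enorm_mul, enorm_mul]
        gcongr
        · exact enorm_rpow_sub_mul_rpow_le_cutoffKernel hq hr₁ ht₁.2
        · exact enorm_rpow_sub_mul_rpow_le_cutoffKernel hq hr₂ ht₂.2
    _ = ENNReal.ofReal T * ((∫⁻ x, s x) * (∫⁻ u, k u) * ∫⁻ x, s x) := by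
        simp_rw [lintegral_lintegral_lintegral_comp_sub_mul hs hk, setLIntegral_const,
          Real.volume_Ioc, sub_zero, mul_comm]
    _ = _ := by
        have hS : 0 ≤ T ^ q * (T ^ (p + 1) / (p + 1)) := by
          have : 0 < p + 1 := by linarith
          positivity
        rw [lintegral_enorm_cutoffKernel q hp hT, ← ofReal_integral_norm_eq_lintegral_enorm hci,
          ← ENNReal.ofReal_mul hS, ← ENNReal.ofReal_mul (by positivity),
          ← ENNReal.ofReal_mul hT]
        ring_nf

theorem stmt14_general (H : ℝ) (hH : H ∈ Set.Ioo (0:ℝ) (1/2)) (ctil : ℝ → ℝ)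
    (hmeas : Measurable ctil) (hnn : ∀ t : ℝ, 0 ≤ ctil t)
    (C : ℝ) (hb0 : ∀ t : ℝ, 0 ≤ t → ctil t ≤ C)
    (hb1 : ∀ t : ℝ, 1 ≤ t → ctil t ≤ C * t ^ (H - 3/2)) :
    Filter.Tendsto (fun T : ℝ => T ^ (2*H - 3) *
        ∫ t₁ in Set.Ioc (0:ℝ) T, ∫ t₂ in Set.Ioc (0:ℝ) T,
          ∫ r₁ in Set.Ioc (0:ℝ) t₁, ∫ r₂ in Set.Ioc (0:ℝ) t₂,
            (t₁ - r₁) ^ (-H - 1/2) * r₁ ^ (1/2 - H) * (t₂ - r₂) ^ (-H - 1/2) * r₂ ^ (1/2 - H) *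
              ctil (|r₁ - r₂|))
      Filter.atTop (nhds 0) := by
  obtain ⟨hH0, hH2⟩ := hH
  have hq : 0 < 1/2 - H := by linarith
  have hci := integrable_comp_abs_of_le_rpow (by linarith) hmeas hnn hb0 hb1
  set K := ∫ u, ‖ctil |u|‖
  have hlim := (tendsto_rpow_neg_atTop (by linarith : 0 < 2 * H)).const_mul (K / (1/2 - H) ^ 2)
  rw [mul_zero] at hlim
  refine squeeze_zero_norm' ?_ hlim
  filter_upwards [eventually_gt_atTop 0] with T hT
  have hbound := enorm_fourfold_integral_le (p := -H - 1/2) (by linarith) hq.le hT.le hmeas hci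
  rw [← ofReal_norm, ENNReal.ofReal_le_ofReal_iff (by positivity),
    show -H - 1/2 + 1 = 1/2 - H by ring] at hbound
  have hexp : T ^ (2 * H - 3) * T * (T ^ (1/2 - H)) ^ 4 = T ^ (-(2 * H)) := by
    rw [← Real.rpow_natCast, ← Real.rpow_mul hT.le, ← Real.rpow_add_one hT.ne',
      ← Real.rpow_add hT]
    ring_nf
  rw [norm_mul, Real.norm_of_nonneg (by positivity), ← hexp]
  calc _ ≤ T ^ (2 * H - 3) * (T * (T ^ (1/2 - H) * (T ^ (1/2 - H) / (1/2 - H))) ^ 2 * K) := by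
        gcongr
    _ = _ := by
        field_simp

theorem stmt14 (H : ℝ) (hH : H ∈ Set.Ioo (0:ℝ) (1/2)) (ctil : ℝ → ℝ)
    (hmeas : Measurable ctil) (hnn : ∀ t : ℝ, 0 ≤ ctil t)
    (C : ℝ) (hC : 0 < C) (hb0 : ∀ t : ℝ, 0 ≤ t → ctil t ≤ C)
    (hb1 : ∀ t : ℝ, 1 ≤ t → ctil t ≤ C * t ^ (H - 3/2)) :
    Filter.Tendsto (fun T : ℝ => T ^ (2*H - 3) *
        ∫ t₁ in Set.Ioc (0:ℝ) T, ∫ t₂ in Set.Ioc (0:ℝ) T,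
          ∫ r₁ in Set.Ioc (0:ℝ) t₁, ∫ r₂ in Set.Ioc (0:ℝ) t₂,
            (t₁ - r₁) ^ (-H - 1/2) * r₁ ^ (1/2 - H) * (t₂ - r₂) ^ (-H - 1/2) * r₂ ^ (1/2 - H) *
              ctil (|r₁ - r₂|))
      Filter.atTop (nhds 0) :=
  stmt14_general H hH ctil hmeas hnn C hb0 hb1
end

section
/- Let H ∈ (0,1/2) and θ > 0. For x > 0 and T ≥ 1, the improper integral g_T(x) := lim_{R→∞} ∫_T^R u^{−2H} cos(ux) du exists, and there exists a constant C > 0, depending only on H and θ, such that for all T ≥ 1: (i) | ∫₀^∞ (x^{1−2H}/(θ²+x²)) · g_T(x) dx | ≤ C·T^{−2H}, and (ii) | ∫₀^∞ (x^{1−2H}/(θ²+x²)) · ( ∫₀^T cos(ux)·( ∫_T^∞ r^{−H−1/2}(r−u)^{−H−1/2} dr ) du ) dx | ≤ C·T^{−2H}. -/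
/-!
Both bounds come from one integration by parts against `sin (u x) / x`: for `f` monotone and
nonnegative on `[a, b]`, `|∫ₐᵇ f(u) cos(u x) du| ≤ 2 max(f a, f b) / x`. With `f u = u^(-2H)` this
makes the improper integral `g_T(x)` converge (Cauchy criterion) with `|g_T(x)| ≤ 2 T^(-2H) / x`.
For the second integral, Fubini moves the `r`-integral outside, and for fixed `r > T` the function
`u ↦ (r - u)^(-H-1/2)` is increasing on `[0, T]`, giving the bound `(2 / x) ∫_T^∞ r^p (r - T)^p dr`
with `p = -H - 1/2`; the substitution `r = T s` shows this last integral is `T^(-2H)` times a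
constant. Both `1 / x` bounds are then integrated against the weight `x^(1-2H) / (θ² + x²)`.
-/

open MeasureTheory Set Real Filter Topology

theorem integrableOn_Ioi_of_abs_le_rpow {f : ℝ → ℝ} {a b α β C₀ C₁ : ℝ}
    (hf : AEStronglyMeasurable f (volume.restrict (Ioi a))) (hab : a ≤ b) (hb : 0 < b)
    (hα : -1 < α) (hβ : β < -1) (h₀ : ∀ x ∈ Ioc a b, |f x| ≤ C₀ * (x - a) ^ α)
    (h₁ : ∀ x ∈ Ioi b, |f x| ≤ C₁ * x ^ β) :
    IntegrableOn f (Ioi a) := by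
  rw [← Ioc_union_Ioi_eq_Ioi hab]
  refine IntegrableOn.union ?_ ?_
  · have hg : IntegrableOn (fun x => C₀ * (x - a) ^ α) (Ioc a b) := by
      have := ((intervalIntegral.intervalIntegrable_rpow' hα (a := 0) (b := b - a)).comp_sub_right
        a).const_mul C₀
      rw [zero_add, sub_add_cancel] at this
      exact (intervalIntegrable_iff_integrableOn_Ioc_of_le hab).1 this
    refine hg.mono' (hf.mono_set Ioc_subset_Ioi_self) ?_
    filter_upwards [ae_restrict_mem measurableSet_Ioc] with x hx using h₀ x hx
  · refine ((integrableOn_Ioi_rpow_of_lt hβ hb).const_mul C₁).mono'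
      (hf.mono_set (Ioi_subset_Ioi hab)) ?_
    filter_upwards [ae_restrict_mem measurableSet_Ioi] with x hx using h₁ x hx

theorem integrableOn_rpow_div_add_sq {q c : ℝ} (hq₀ : -1 < q) (hq₁ : q < 1) (hc : 0 < c) :
    IntegrableOn (fun x : ℝ => x ^ q / (c + x ^ 2)) (Ioi 0) := by
  refine integrableOn_Ioi_of_abs_le_rpow (C₀ := c⁻¹) (C₁ := 1)
    (by fun_prop : Measurable fun x : ℝ => x ^ q / (c + x ^ 2)).aestronglyMeasurable
    zero_le_one one_pos hq₀ (by linarith : q - 2 < -1) (fun x hx => ?_) (fun x hx => ?_)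
  · have hx : 0 < x := hx.1
    rw [abs_of_nonneg (by positivity), sub_zero, inv_mul_eq_div]
    gcongr
    nlinarith
  · have hx : 0 < x := zero_lt_one.trans hx
    rw [abs_of_nonneg (by positivity), one_mul, rpow_sub hx, rpow_two]
    gcongr
    linarith

theorem integrableOn_rpow_mul_sub_one_rpow {p : ℝ} (hp₀ : -1 < p) (hp₁ : p < -1 / 2) :
    IntegrableOn (fun s : ℝ => s ^ p * (s - 1) ^ p) (Ioi 1) := by
  refine integrableOn_Ioi_of_abs_le_rpow (b := 2) (C₀ := 1) (C₁ := 2 ^ (-p))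
    (by fun_prop : Measurable fun s : ℝ => s ^ p * (s - 1) ^ p).aestronglyMeasurable
    one_le_two two_pos hp₀ (by linarith : 2 * p < -1) (fun s hs => ?_) (fun s hs => ?_)
  · have hs : 1 < s := hs.1
    have hs₁ : 0 < s - 1 := sub_pos.2 hs
    rw [abs_of_nonneg (by positivity), one_mul]
    exact mul_le_of_le_one_left (by positivity) (rpow_le_one_of_one_le_of_nonpos hs.le (by linarith))
  · have hs : 2 < s := hs
    have hs₁ : 0 < s - 1 := by linarith
    rw [abs_of_nonneg (by positivity)]
    calc s ^ p * (s - 1) ^ p ≤ s ^ p * (s / 2) ^ p := by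
          gcongr ?_ * ?_
          exact rpow_le_rpow_of_nonpos (by positivity) (by linarith) (by linarith)
      _ = 2 ^ (-p) * s ^ (2 * p) := by
          rw [div_rpow (by positivity) zero_le_two, rpow_neg zero_le_two, two_mul,
            rpow_add (by positivity)]
          ring

theorem rpow_mul_sub_rpow_comp_mul {p T s : ℝ} (hT : 0 < T) (hs : 1 ≤ s) :
    (T * s) ^ p * (T * s - T) ^ p = T ^ (2 * p) * (s ^ p * (s - 1) ^ p) := by
  rw [show T * s - T = T * (s - 1) by ring, mul_rpow hT.le (by linarith),
    mul_rpow hT.le (by linarith), two_mul, rpow_add hT]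
  ring

theorem integrableOn_rpow_mul_sub_rpow {p T : ℝ} (hp₀ : -1 < p) (hp₁ : p < -1 / 2) (hT : 0 < T) :
    IntegrableOn (fun r : ℝ => r ^ p * (r - T) ^ p) (Ioi T) := by
  have := (integrableOn_Ioi_comp_mul_left_iff (fun r : ℝ => r ^ p * (r - T) ^ p) 1 hT).1 <|
    IntegrableOn.congr_fun ((integrableOn_rpow_mul_sub_one_rpow hp₀ hp₁).const_mul (T ^ (2 * p)))
      (fun s hs => (rpow_mul_sub_rpow_comp_mul hT (le_of_lt hs)).symm) measurableSet_Ioi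
  rwa [mul_one] at this

theorem setIntegral_rpow_mul_sub_rpow {p T : ℝ} (hT : 0 < T) :
    ∫ r in Ioi T, r ^ p * (r - T) ^ p = T ^ (2 * p + 1) * ∫ s in Ioi 1, s ^ p * (s - 1) ^ p := by
  have := integral_comp_mul_left_Ioi' (fun r : ℝ => r ^ p * (r - T) ^ p) 1 hT
  rw [mul_one] at this
  rw [← this, setIntegral_congr_fun measurableSet_Ioi
    (fun s hs => rpow_mul_sub_rpow_comp_mul hT (le_of_lt hs)), integral_const_mul, smul_eq_mul,
    rpow_add_one hT.ne']
  ring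

section Oscillatory

variable {f f' : ℝ → ℝ} {a b x : ℝ}

theorem abs_integral_mul_cos_le (hab : a ≤ b) (hx : 0 < x)
    (hf : ∀ t ∈ Icc a b, HasDerivAt f (f' t) t) (hf' : IntervalIntegrable f' volume a b) :
    |∫ t in a..b, f t * cos (t * x)| ≤ (|f a| + |f b| + ∫ t in a..b, |f' t|) / x := by
  rw [← uIcc_of_le hab] at hf
  have hsin : ∀ t, HasDerivAt (fun t => sin (t * x) / x) (cos (t * x)) t := fun t => by
    simpa [hx.ne'] using ((hasDerivAt_mul_const x).sin).div_const x
  have hsin_le : ∀ t, |sin (t * x) / x| ≤ 1 / x := fun t => by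
    rw [abs_div, abs_of_pos hx]; gcongr; exact abs_sin_le_one _
  have hend : ∀ t, |f t * (sin (t * x) / x)| ≤ |f t| * (1 / x) := fun t => by
    rw [abs_mul]; exact mul_le_mul_of_nonneg_left (hsin_le t) (abs_nonneg _)
  have hrem : |∫ t in a..b, f' t * (sin (t * x) / x)| ≤ (∫ t in a..b, |f' t|) / x := by
    rw [div_eq_mul_one_div, ← intervalIntegral.integral_mul_const]
    refine (intervalIntegral.abs_integral_le_integral_abs hab).trans
      (intervalIntegral.integral_mono_on hab ?_ (hf'.abs.mul_const _) fun t _ => ?_)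
    · exact (hf'.mul_continuousOn (by fun_prop)).abs
    · rw [abs_mul]; exact mul_le_mul_of_nonneg_left (hsin_le t) (abs_nonneg _)
  rw [intervalIntegral.integral_mul_deriv_eq_deriv_mul hf (fun t _ => hsin t) hf'
    ((by fun_prop : Continuous fun t => cos (t * x)).intervalIntegrable a b)]
  calc _ ≤ |f b * (sin (b * x) / x)| + |f a * (sin (a * x) / x)|
          + |∫ t in a..b, f' t * (sin (t * x) / x)| :=
        (abs_sub _ _).trans (add_le_add_left (abs_sub _ _) _)
    _ ≤ |f b| * (1 / x) + |f a| * (1 / x) + (∫ t in a..b, |f' t|) / x :=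
        add_le_add (add_le_add (hend b) (hend a)) hrem
    _ = _ := by ring

theorem abs_integral_mul_cos_le_of_deriv_nonneg (hab : a ≤ b) (hx : 0 < x)
    (hf : ∀ t ∈ Icc a b, HasDerivAt f (f' t) t) (hf' : IntervalIntegrable f' volume a b)
    (hf'₀ : ∀ t ∈ Icc a b, 0 ≤ f' t) (ha : 0 ≤ f a) :
    |∫ t in a..b, f t * cos (t * x)| ≤ 2 * f b / x := by
  have hftc : ∫ t in a..b, |f' t| = f b - f a := by
    rw [← intervalIntegral.integral_eq_sub_of_hasDerivAt (by rwa [uIcc_of_le hab]) hf']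
    exact intervalIntegral.integral_congr fun t ht =>
      abs_of_nonneg (hf'₀ t (by rwa [uIcc_of_le hab] at ht))
  have hb : 0 ≤ f b := by
    linarith [hftc ▸ intervalIntegral.integral_nonneg hab fun t _ => abs_nonneg (f' t)]
  refine (abs_integral_mul_cos_le hab hx hf hf').trans_eq ?_
  rw [hftc, abs_of_nonneg ha, abs_of_nonneg hb]
  ring

theorem abs_integral_mul_cos_le_of_deriv_nonpos (hab : a ≤ b) (hx : 0 < x)
    (hf : ∀ t ∈ Icc a b, HasDerivAt f (f' t) t) (hf' : IntervalIntegrable f' volume a b)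
    (hf'₀ : ∀ t ∈ Icc a b, f' t ≤ 0) (hb : 0 ≤ f b) :
    |∫ t in a..b, f t * cos (t * x)| ≤ 2 * f a / x := by
  have hftc : ∫ t in a..b, |f' t| = f a - f b := by
    rw [← neg_sub, ← intervalIntegral.integral_eq_sub_of_hasDerivAt (by rwa [uIcc_of_le hab]) hf',
      ← intervalIntegral.integral_neg]
    exact intervalIntegral.integral_congr fun t ht =>
      abs_of_nonpos (hf'₀ t (by rwa [uIcc_of_le hab] at ht))
  have ha : 0 ≤ f a := by
    linarith [hftc ▸ intervalIntegral.integral_nonneg hab fun t _ => abs_nonneg (f' t)]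
  refine (abs_integral_mul_cos_le hab hx hf hf').trans_eq ?_
  rw [hftc, abs_of_nonneg ha, abs_of_nonneg hb]
  ring

theorem exists_tendsto_integral_mul_cos_of_deriv_nonpos (hx : 0 < x)
    (hf : ∀ t ∈ Ici a, HasDerivAt f (f' t) t) (hf' : ContinuousOn f' (Ici a))
    (hf'₀ : ∀ t ∈ Ici a, f' t ≤ 0) (hlim : Tendsto f atTop (𝓝 0)) :
    ∃ l, Tendsto (fun R => ∫ t in a..R, f t * cos (t * x)) atTop (𝓝 l) ∧ |l| ≤ 2 * f a / x := by
  have hanti : AntitoneOn f (Ici a) :=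
    antitoneOn_of_hasDerivWithinAt_nonpos (convex_Ici a)
      (fun t ht => (hf t ht).continuousAt.continuousWithinAt)
      (fun t ht => (hf t (interior_subset ht)).hasDerivWithinAt)
      (fun t ht => hf'₀ t (interior_subset ht))
  have hnonneg : ∀ t ∈ Ici a, 0 ≤ f t := fun t ht => le_of_tendsto hlim <| by
    filter_upwards [eventually_ge_atTop t] with s hs using hanti ht (mem_Ici.2 (ht.trans hs)) hs
  have hbound : ∀ t s, a ≤ t → t ≤ s → |∫ u in t..s, f u * cos (u * x)| ≤ 2 * f t / x :=
    fun t s ht hts => abs_integral_mul_cos_le_of_deriv_nonpos hts hx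
      (fun u hu => hf u (ht.trans hu.1))
      ((hf'.mono fun u hu => ht.trans hu.1).intervalIntegrable_of_Icc hts)
      (fun u hu => hf'₀ u (ht.trans hu.1)) (hnonneg s (ht.trans hts))
  have hint : ∀ s, a ≤ s → IntervalIntegrable (fun u => f u * cos (u * x)) volume a s :=
    fun s hs => ContinuousOn.intervalIntegrable_of_Icc hs <| ContinuousOn.mul
      (fun u hu => (hf u hu.1).continuousAt.continuousWithinAt) (by fun_prop)
  have hcauchy : CauchySeq fun R => ∫ t in a..R, f t * cos (t * x) := by
    refine Metric.cauchySeq_iff'.2 fun ε hε => ?_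
    obtain ⟨N, hNε, hN⟩ := ((((hlim.const_mul 2).div_const x).eventually_lt_const
      (by simpa using hε)).and (eventually_ge_atTop a)).exists
    refine ⟨N, fun n hn => ?_⟩
    rw [Real.dist_eq,
      intervalIntegral.integral_interval_sub_left (hint n (hN.trans hn)) (hint N hN)]
    exact (hbound N n hN hn).trans_lt hNε
  obtain ⟨l, hl⟩ := cauchySeq_tendsto_of_complete hcauchy
  refine ⟨l, hl, le_of_tendsto (continuous_abs.tendsto l |>.comp hl) ?_⟩
  filter_upwards [eventually_ge_atTop a] with R hR using hbound a R le_rfl hR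

end Oscillatory

theorem exists_tendsto_integral_rpow_mul_cos {q T x : ℝ} (hq : q < 0) (hT : 0 < T) (hx : 0 < x) :
    ∃ l, Tendsto (fun R => ∫ u in T..R, u ^ q * cos (u * x)) atTop (𝓝 l) ∧
      |l| ≤ 2 * T ^ q / x := by
  have hpos : ∀ t ∈ Ici T, 0 < t := fun t ht => hT.trans_le ht
  refine exists_tendsto_integral_mul_cos_of_deriv_nonpos hx
    (fun t ht => hasDerivAt_rpow_const (Or.inl (hpos t ht).ne'))
    (continuousOn_const.mul (continuousOn_id.rpow_const fun t ht => Or.inl (hpos t ht).ne'))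
    (fun t ht => mul_nonpos_of_nonpos_of_nonneg hq.le (rpow_nonneg (hpos t ht).le _)) ?_
  simpa using tendsto_rpow_neg_atTop (neg_pos.2 hq)

theorem abs_integral_cos_mul_sub_rpow_le {p T r x : ℝ} (hp : p ≤ 0) (hT : 0 ≤ T) (hr : T < r)
    (hx : 0 < x) :
    |∫ u in Ioc 0 T, cos (u * x) * (r - u) ^ p| ≤ 2 * (r - T) ^ p / x := by
  have hru : ∀ u ∈ Icc 0 T, r - u ≠ 0 := fun u hu => sub_ne_zero.2 (by linarith [hu.2])
  rw [← intervalIntegral.integral_of_le hT]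
  simp_rw [mul_comm (cos _)]
  refine abs_integral_mul_cos_le_of_deriv_nonneg hT hx
    (fun u hu => ((hasDerivAt_id u).const_sub r).rpow_const (Or.inl (hru u hu)))
    (ContinuousOn.intervalIntegrable_of_Icc hT <| continuousOn_const.mul
      ((continuousOn_const.sub continuousOn_id).rpow_const fun u hu => Or.inl (hru u hu)))
    (fun u hu => ?_) (rpow_nonneg (by linarith) _)
  have : 0 ≤ r - u := by linarith [hu.2]
  have : 0 ≤ -1 * p := by linarith
  positivity

theorem abs_integral_cos_mul_setIntegral_rpow_le {p T x : ℝ} (hp : p ≤ 0) (hT : 0 ≤ T)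
    (hx : 0 < x) (hint : IntegrableOn (fun r => r ^ p * (r - T) ^ p) (Ioi T)) :
    |∫ u in Ioc 0 T, cos (u * x) * ∫ r in Ioi T, r ^ p * (r - u) ^ p| ≤
      2 / x * ∫ r in Ioi T, r ^ p * (r - T) ^ p := by
  have hprod : Integrable (fun z : ℝ × ℝ => cos (z.1 * x) * (z.2 ^ p * (z.2 - z.1) ^ p))
      ((volume.restrict (Ioc 0 T)).prod (volume.restrict (Ioi T))) := by
    refine (Integrable.mul_prod (integrableOn_const (C := (1 : ℝ)) measure_Ioc_lt_top.ne)
      hint).mono' (by fun_prop : Measurable _).aestronglyMeasurable ?_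
    rw [Measure.prod_restrict]
    filter_upwards [ae_restrict_mem (measurableSet_Ioc.prod measurableSet_Ioi)] with z ⟨hu, hr⟩
    have hr₀ : 0 ≤ z.2 := hT.trans (le_of_lt hr)
    have hru : 0 < z.2 - z.1 := by linarith [hu.2, mem_Ioi.1 hr]
    rw [norm_mul, norm_mul, Real.norm_of_nonneg (rpow_nonneg hr₀ _),
      Real.norm_of_nonneg (rpow_nonneg hru.le _), one_mul]
    refine (mul_le_of_le_one_left (by positivity) (abs_cos_le_one _)).trans ?_
    exact mul_le_mul_of_nonneg_left (rpow_le_rpow_of_nonpos (by linarith [mem_Ioi.1 hr])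
      (by linarith [hu.2]) hp) (rpow_nonneg hr₀ _)
  simp_rw [← integral_const_mul]
  rw [integral_integral_swap hprod, ← Real.norm_eq_abs]
  refine norm_integral_le_of_norm_le (hint.const_mul (2 / x)) ?_
  filter_upwards [ae_restrict_mem measurableSet_Ioi] with r hr
  have hr₀ : 0 ≤ r := hT.trans (le_of_lt hr)
  simp_rw [mul_left_comm (cos _), integral_const_mul, norm_mul,
    Real.norm_of_nonneg (rpow_nonneg hr₀ _)]
  calc r ^ p * ‖∫ u in Ioc 0 T, cos (u * x) * (r - u) ^ p‖ ≤ r ^ p * (2 * (r - T) ^ p / x) :=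
        mul_le_mul_of_nonneg_left (abs_integral_cos_mul_sub_rpow_le hp hT hr hx)
          (rpow_nonneg hr₀ _)
    _ = 2 / x * (r ^ p * (r - T) ^ p) := by ring

theorem abs_setIntegral_rpow_div_add_sq_mul_le {s c M : ℝ} {F : ℝ → ℝ} (hs₀ : 0 < s)
    (hs₁ : s < 2) (hc : 0 < c) (hF : ∀ x ∈ Ioi 0, |F x| ≤ M / x) :
    |∫ x in Ioi 0, x ^ s / (c + x ^ 2) * F x| ≤ M * ∫ x in Ioi 0, x ^ (s - 1) / (c + x ^ 2) := by
  rw [← Real.norm_eq_abs, ← integral_const_mul]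
  refine norm_integral_le_of_norm_le
    ((integrableOn_rpow_div_add_sq (by linarith) (by linarith) hc).const_mul M) ?_
  filter_upwards [ae_restrict_mem measurableSet_Ioi] with x (hx : 0 < x)
  rw [norm_mul, Real.norm_of_nonneg (by positivity)]
  calc x ^ s / (c + x ^ 2) * |F x| ≤ x ^ s / (c + x ^ 2) * (M / x) := by gcongr; exact hF x hx
    _ = M * (x ^ (s - 1) / (c + x ^ 2)) := by rw [rpow_sub_one hx.ne']; ring

theorem stmt16 (H θ : ℝ) (hH : H ∈ Set.Ioo (0:ℝ) (1/2)) (hθ : 0 < θ) :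
    ∃ g : ℝ → ℝ → ℝ,
      (∀ T : ℝ, 1 ≤ T → ∀ x : ℝ, 0 < x →
        Filter.Tendsto (fun R : ℝ => ∫ u in T..R, u ^ (-2*H) * Real.cos (u * x))
          Filter.atTop (nhds (g T x))) ∧
      ∃ C : ℝ, 0 < C ∧ ∀ T : ℝ, 1 ≤ T →
        |∫ x in Set.Ioi (0:ℝ), x ^ (1 - 2*H) / (θ ^ 2 + x ^ 2) * g T x| ≤ C * T ^ (-2*H) ∧
        |∫ x in Set.Ioi (0:ℝ), x ^ (1 - 2*H) / (θ ^ 2 + x ^ 2) *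
            ∫ u in Set.Ioc (0:ℝ) T, Real.cos (u * x) *
              ∫ r in Set.Ioi T, r ^ (-H - 1/2) * (r - u) ^ (-H - 1/2)| ≤ C * T ^ (-2*H) := by
  obtain ⟨hH₀, hH₁⟩ := hH
  set g : ℝ → ℝ → ℝ := fun T x => limUnder atTop fun R => ∫ u in T..R, u ^ (-2*H) * cos (u * x)
  have hg : ∀ T, 1 ≤ T → ∀ x, 0 < x →
      Tendsto (fun R => ∫ u in T..R, u ^ (-2*H) * cos (u * x)) atTop (𝓝 (g T x)) ∧
        |g T x| ≤ 2 * T ^ (-2*H) / x := fun T hT x hx => by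
    obtain ⟨l, hl, hbound⟩ :=
      exists_tendsto_integral_rpow_mul_cos (q := -2*H) (by linarith) (by linarith : 0 < T) hx
    simpa only [g, hl.limUnder_eq] using ⟨hl, hbound⟩
  set K := ∫ x in Ioi 0, x ^ (1 - 2*H - 1) / (θ ^ 2 + x ^ 2)
  set B := ∫ s in Ioi (1:ℝ), s ^ (-H - 1/2) * (s - 1) ^ (-H - 1/2)
  have hK₀ : 0 ≤ K := setIntegral_nonneg measurableSet_Ioi fun x (hx : 0 < x) => by positivity
  have hB₀ : 0 ≤ B := setIntegral_nonneg measurableSet_Ioi fun s (hs : 1 < s) => by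
    have := sub_pos.2 hs; positivity
  have hinner : ∀ T, 1 ≤ T → ∀ x ∈ Ioi 0,
      |∫ u in Ioc 0 T, cos (u * x) * ∫ r in Ioi T, r ^ (-H - 1/2) * (r - u) ^ (-H - 1/2)| ≤
        2 * T ^ (-2*H) * B / x := fun T hT x hx => by
    have hT₀ : 0 < T := by linarith
    refine (abs_integral_cos_mul_setIntegral_rpow_le (by linarith) hT₀.le hx
      (integrableOn_rpow_mul_sub_rpow (by linarith) (by linarith) hT₀)).trans_eq ?_
    rw [setIntegral_rpow_mul_sub_rpow hT₀, show 2 * (-H - 1/2) + 1 = -2*H by ring]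
    ring
  refine ⟨g, fun T hT x hx => (hg T hT x hx).1, 2 * K * (1 + B) + 1, by positivity,
    fun T hT => ⟨?_, ?_⟩⟩ <;> have hTH : 0 < T ^ (-2*H) := rpow_pos_of_pos (by linarith) _
  · calc _ ≤ 2 * T ^ (-2*H) * K := abs_setIntegral_rpow_div_add_sq_mul_le (by linarith)
          (by linarith) (by positivity) fun x hx => (hg T hT x hx).2
      _ ≤ _ := by nlinarith [mul_nonneg (mul_nonneg hK₀ hB₀) hTH.le]
  · calc _ ≤ 2 * T ^ (-2*H) * B * K := abs_setIntegral_rpow_div_add_sq_mul_le (by linarith)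
          (by linarith) (by positivity) (hinner T hT)
      _ ≤ _ := by nlinarith [mul_nonneg hK₀ hTH.le]
end
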